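/- arXiv:math/0603585 — 5 statements merged into one kernel-verified Lean document; each statement's English description precedes it below -/
import Mathlib

section
/- A tuple A = (A_1, …, A_k) of subsets of X has an independence set of positive density if and only if there exists d > 0 such that for every M > 0 there exist an interval I ⊆ ℤ_{≥0} with |I| ≥ M and an independence set J for A with J ⊆ I and |J| ≥ d|I|. -/
open Filter Set

/-- `J ⊆ ℕ` is an independence set for the tuple `A = (A 0, …, A (k-1))` of subsets of `X`
with respect to the map `T`. -/
def IsIndepSet {X : Type*} (T : X → X) {k : ℕ} (A : Fin k → Set X) (J : Set ℕ) : Prop :=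
  ∀ I : Finset ℕ, I.Nonempty → ↑I ⊆ J → ∀ σ : ℕ → Fin k,
    (⋂ s ∈ I, T^[s] ⁻¹' A (σ s)).Nonempty

/-- `J ⊆ ℕ` has positive density: the limit of `|J ∩ {0,…,n}| / (n+1)` exists and is nonzero. -/
def HasPosDensity (J : Set ℕ) : Prop :=
  ∃ d : ℝ, d ≠ 0 ∧
    Tendsto (fun n : ℕ => (Nat.card (J ∩ Set.Iic n : Set ℕ) : ℝ) / (n + 1)) atTop (nhds d)

/-- The tuple `A` has an independence set of positive density. -/
def HasIndepSetPosDensity {X : Type*} (T : X → X) {k : ℕ} (A : Fin k → Set X) : Prop :=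
  ∃ J : Set ℕ, IsIndepSet T A J ∧ HasPosDensity J

/-- `x` is an IE-tuple: every product neighbourhood of `x` has an independence set of
positive density. -/
def IsIETuple {X : Type*} [TopologicalSpace X] (T : X → X) {k : ℕ} (x : Fin k → X) : Prop :=
  ∀ U : Fin k → Set X, (∀ i, IsOpen (U i)) → (∀ i, x i ∈ U i) →
    HasIndepSetPosDensity T U

open Topology
section AuxLemmas
section Aux

variable {X : Type*} (T : X → X) {k : ℕ} (A : Fin k → Set X)

theorem isIndepSet_subset {J J' : Set ℕ} (h : IsIndepSet T A J) (hsub : J' ⊆ J) :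
    IsIndepSet T A J' := fun I hne hI σ => h I hne (hI.trans hsub) σ

theorem isIndepSet_empty : IsIndepSet T A (∅ : Set ℕ) := by
  intro I hne hI σ
  obtain ⟨i, hi⟩ := hne
  exact absurd (hI hi) (Set.notMem_empty i)

theorem isIndepSet_shift {J : Set ℕ} (t : ℕ) (h : IsIndepSet T A J) :
    IsIndepSet T A {n | n + t ∈ J} := by
  intro I hne hI σ
  obtain ⟨x, hx⟩ := h (I.image (· + t)) (hne.image _) (by
    intro s hs
    simp only [Finset.coe_image, Set.mem_image, Finset.mem_coe] at hs
    obtain ⟨n, hn, rfl⟩ := hs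
    exact hI hn) (fun s => σ (s - t))
  refine ⟨T^[t] x, ?_⟩
  simp only [Set.mem_iInter, Set.mem_preimage] at hx ⊢
  intro s hs
  have h2 := hx (s + t) (Finset.mem_image_of_mem _ hs)
  rw [Nat.add_sub_cancel] at h2
  rwa [Function.iterate_add_apply] at h2

theorem isIndepSet_finset_shift (S : Finset ℕ) (a : ℕ) (h : IsIndepSet T A ↑S) :
    IsIndepSet T A ↑((S.filter (fun x => a ≤ x)).image (· - a)) := by
  apply isIndepSet_subset T A (isIndepSet_shift T A a h)
  intro y hy
  simp only [Finset.coe_image, Finset.coe_filter, Set.mem_image, Set.mem_setOf_eq] at hy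
  obtain ⟨x, ⟨hxS, hax⟩, rfl⟩ := hy
  simpa [Nat.sub_add_cancel hax] using hxS

end Aux

section MaxIndep

variable {X : Type*} (T : X → X) {k : ℕ} (A : Fin k → Set X)

/-- Maximal cardinality of an independence set inside `[0, m)`. -/
noncomputable def maxIndep (m : ℕ) : ℕ :=
  sSup {n : ℕ | ∃ S : Finset ℕ, IsIndepSet T A ↑S ∧ (∀ x ∈ S, x < m) ∧ S.card = n}

theorem maxIndep_bddAbove (m : ℕ) :
    BddAbove {n : ℕ | ∃ S : Finset ℕ, IsIndepSet T A ↑S ∧ (∀ x ∈ S, x < m) ∧ S.card = n} := by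
  refine ⟨m, fun n hn => ?_⟩
  obtain ⟨S, _, hb, rfl⟩ := hn
  calc S.card ≤ (Finset.range m).card := Finset.card_le_card (fun x hx =>
        Finset.mem_range.mpr (hb x hx))
    _ = m := Finset.card_range m

theorem maxIndep_spec (m : ℕ) : ∃ S : Finset ℕ, IsIndepSet T A ↑S ∧ (∀ x ∈ S, x < m) ∧
    S.card = maxIndep T A m := by
  have hne : {n : ℕ | ∃ S : Finset ℕ, IsIndepSet T A ↑S ∧ (∀ x ∈ S, x < m) ∧ S.card = n}.Nonempty :=
    ⟨0, ∅, by simpa using isIndepSet_empty T A, by simp, by simp⟩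
  exact Nat.sSup_mem hne (maxIndep_bddAbove T A m)

theorem le_maxIndep {m : ℕ} (S : Finset ℕ) (h1 : IsIndepSet T A ↑S) (h2 : ∀ x ∈ S, x < m) :
    S.card ≤ maxIndep T A m :=
  le_csSup (maxIndep_bddAbove T A m) ⟨S, h1, h2, rfl⟩

theorem maxIndep_le (m : ℕ) : maxIndep T A m ≤ m := by
  obtain ⟨S, _, hb, hc⟩ := maxIndep_spec T A m
  rw [← hc]
  calc S.card ≤ (Finset.range m).card := Finset.card_le_card (fun x hx =>
        Finset.mem_range.mpr (hb x hx))
    _ = m := Finset.card_range m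

theorem maxIndep_subadd (m n : ℕ) : maxIndep T A (m + n) ≤ maxIndep T A m + maxIndep T A n := by
  classical
  obtain ⟨S, hS, hSb, hcard⟩ := maxIndep_spec T A (m + n)
  rw [← hcard]
  have hsplit : (S.filter (fun x => x < m)).card + (S.filter (fun x => ¬ x < m)).card = S.card :=
    Finset.card_filter_add_card_filter_not _
  have h1 : (S.filter (fun x => x < m)).card ≤ maxIndep T A m := by
    refine le_maxIndep T A _ (isIndepSet_subset T A hS (Finset.coe_subset.mpr (Finset.filter_subset _ _))) ?_
    intro x hx
    exact (Finset.mem_filter.mp hx).2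
  have h2 : (S.filter (fun x => ¬ x < m)).card ≤ maxIndep T A n := by
    have hinj : Set.InjOn (· - m) ↑(S.filter (fun x => ¬ x < m)) := by
      intro x hx y hy hxy
      simp only [Finset.coe_filter, Set.mem_setOf_eq, not_lt] at hx hy
      have hxy' : x - m = y - m := hxy
      omega
    have hcardeq : (S.filter (fun x => ¬ x < m)).card
        = ((S.filter (fun x => m ≤ x)).image (· - m)).card := by
      rw [Finset.card_image_of_injOn (by simpa [not_lt] using hinj)]
      congr 1
      apply Finset.filter_congr
      intro x _
      simp [not_lt]
    rw [hcardeq]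
    refine le_maxIndep T A _ (isIndepSet_finset_shift T A S m hS) ?_
    intro x hx
    simp only [Finset.mem_image, Finset.mem_filter] at hx
    obtain ⟨y, ⟨hyS, hmy⟩, rfl⟩ := hx
    have := hSb y hyS
    show y - m < n
    omega
  omega

end MaxIndep

section Count

theorem count_split (S : Finset ℕ) {t u : ℕ} (h : t ≤ u) :
    (S.filter (fun x => x < t)).card + (S.filter (fun x => t ≤ x ∧ x < u)).card
      = (S.filter (fun x => x < u)).card := by
  classical
  have hd : Disjoint (S.filter (fun x => x < t)) (S.filter (fun x => t ≤ x ∧ x < u)) := by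
    rw [Finset.disjoint_left]
    intro x hx hx'
    have h1 : x < t := (Finset.mem_filter.mp hx).2
    have h2 : t ≤ x ∧ x < u := (Finset.mem_filter.mp hx').2
    omega
  rw [← Finset.card_union_of_disjoint hd]
  congr 1
  ext x
  simp only [Finset.mem_union, Finset.mem_filter]
  by_cases hxS : x ∈ S <;> simp [hxS] <;> omega

end Count

section KeyLemma

variable {X : Type*} (T : X → X) {k : ℕ} (A : Fin k → Set X)

theorem exists_good_suffix (L c : ℝ) (hc0 : 0 ≤ c) (hcL : c < L)
    (hL : ∀ m : ℕ, m ≠ 0 → L * m ≤ (maxIndep T A m : ℝ)) (i : ℕ) :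
    ∃ S : Finset ℕ, IsIndepSet T A ↑S ∧
      ∀ ℓ : ℕ, ℓ ≤ i → c * ℓ ≤ ((S.filter (fun x => x < ℓ)).card : ℝ) := by
  classical
  set γ := L - c with hγ
  have hγ0 : 0 < γ := by rw [hγ]; linarith
  set K : ℕ := ⌈(i : ℝ) / γ⌉₊ + 1 with hK
  have hK0 : K ≠ 0 := by omega
  have hiK : (i : ℝ) ≤ γ * K := by
    have h1 : (i : ℝ) / γ ≤ (⌈(i : ℝ) / γ⌉₊ : ℝ) := Nat.le_ceil _
    have h2 : ((⌈(i : ℝ) / γ⌉₊ : ℝ)) ≤ (K : ℝ) := by rw [hK]; push_cast; linarith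
    have h3 : (i : ℝ) / γ ≤ (K : ℝ) := le_trans h1 h2
    calc (i : ℝ) = γ * ((i : ℝ) / γ) := by field_simp
      _ ≤ γ * K := by exact mul_le_mul_of_nonneg_left h3 (le_of_lt hγ0)
  obtain ⟨S₀, hS₀ind, hS₀b, hS₀card⟩ := maxIndep_spec T A K
  set g : ℕ → ℝ := fun t => ((S₀.filter (fun x => x < t)).card : ℝ) - c * t with hg
  obtain ⟨t₀, ht₀mem, ht₀min⟩ := Finset.exists_min_image (Finset.range (K + 1)) g ⟨0, by simp⟩
  have ht₀K : t₀ ≤ K := by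
    have := Finset.mem_range.mp ht₀mem
    omega
  have hgt₀ : g t₀ ≤ 0 := by
    have h0 : g 0 = 0 := by simp [hg]
    have := ht₀min 0 (by simp)
    linarith
  have hgK : (i : ℝ) ≤ g K := by
    have hLK : L * K ≤ (maxIndep T A K : ℝ) := hL K hK0
    have hfK : S₀.filter (fun x => x < K) = S₀ := Finset.filter_true_of_mem hS₀b
    have hEq : g K = (maxIndep T A K : ℝ) - c * K := by rw [hg]; simp only [hfK, hS₀card]
    have hexp : γ * (K : ℝ) = L * K - c * K := by rw [hγ]; ring
    rw [hEq]
    linarith [hiK]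
  have hwin : ∀ ℓ : ℕ, t₀ + ℓ ≤ K →
      ((S₀.filter (fun x => t₀ ≤ x ∧ x < t₀ + ℓ)).card : ℝ) = g (t₀ + ℓ) - g t₀ + c * ℓ := by
    intro ℓ hℓ
    have hcs := count_split S₀ (t := t₀) (u := t₀ + ℓ) (by omega)
    have h2 : ((S₀.filter (fun x => x < t₀)).card : ℝ)
        + ((S₀.filter (fun x => t₀ ≤ x ∧ x < t₀ + ℓ)).card : ℝ)
        = ((S₀.filter (fun x => x < t₀ + ℓ)).card : ℝ) := by exact_mod_cast hcs
    simp only [hg]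
    push_cast
    linarith
  have hlen : i ≤ K - t₀ := by
    have hw := hwin (K - t₀) (by omega)
    rw [show t₀ + (K - t₀) = K from by omega] at hw
    have hcardle : ((S₀.filter (fun x => t₀ ≤ x ∧ x < K)).card : ℝ) ≤ ((K - t₀ : ℕ) : ℝ) := by
      have hsub : S₀.filter (fun x => t₀ ≤ x ∧ x < K) ⊆ Finset.Ico t₀ K := by
        intro x hx
        simp only [Finset.mem_filter] at hx
        simp only [Finset.mem_Ico]
        omega
      have hcc := Finset.card_le_card hsub
      rw [Nat.card_Ico] at hcc
      exact_mod_cast hcc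
    have hcast : ((K - t₀ : ℕ) : ℝ) = (K : ℝ) - t₀ := by
      push_cast [Nat.cast_sub ht₀K]; ring
    have hge : (i : ℝ) ≤ ((K - t₀ : ℕ) : ℝ) := by
      have hc' : 0 ≤ c * ((K - t₀ : ℕ) : ℝ) := mul_nonneg hc0 (by positivity)
      linarith [hgK, hgt₀, hw, hcardle]
    exact_mod_cast hge
  set S : Finset ℕ := (S₀.filter (fun x => t₀ ≤ x)).image (· - t₀) with hS
  refine ⟨S, isIndepSet_finset_shift T A S₀ t₀ hS₀ind, ?_⟩
  intro ℓ hℓ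
  have him : S.filter (fun x => x < ℓ)
      = (S₀.filter (fun x => t₀ ≤ x ∧ x < t₀ + ℓ)).image (· - t₀) := by
    ext y
    simp only [hS, Finset.mem_filter, Finset.mem_image]
    constructor
    · rintro ⟨⟨x, ⟨hxS, hxt⟩, rfl⟩, hyℓ⟩
      exact ⟨x, ⟨hxS, hxt, by omega⟩, rfl⟩
    · rintro ⟨x, ⟨hxS, hxt, hxb⟩, rfl⟩
      exact ⟨⟨x, ⟨hxS, hxt⟩, rfl⟩, by omega⟩
  have hinj : Set.InjOn (· - t₀) ↑(S₀.filter (fun x => t₀ ≤ x ∧ x < t₀ + ℓ)) := by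
    intro x hx y hy hxy
    simp only [Finset.coe_filter, Set.mem_setOf_eq] at hx hy
    have hxy' : x - t₀ = y - t₀ := hxy
    omega
  have hcard : (S.filter (fun x => x < ℓ)).card
      = (S₀.filter (fun x => t₀ ≤ x ∧ x < t₀ + ℓ)).card := by
    rw [him, Finset.card_image_of_injOn hinj]
  have hmem : t₀ + ℓ ∈ Finset.range (K + 1) := by
    simp only [Finset.mem_range]
    omega
  have hmin := ht₀min (t₀ + ℓ) hmem
  have hw := hwin ℓ (by omega)
  rw [hcard, hw]
  linarith

end KeyLemma

end AuxLemmas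

open Topology

/-- finitary characterization of having an independence set of positive
density (Lemma `L-density`). -/
theorem stmt2 {X : Type*} [TopologicalSpace X] [CompactSpace X] [T2Space X]
    (T : X → X) (hT : Continuous T) (hTsurj : Function.Surjective T)
    {k : ℕ} (A : Fin k → Set X) :
    HasIndepSetPosDensity T A ↔
      ∃ d : ℝ, 0 < d ∧ ∀ M : ℝ, 0 < M →
        ∃ a b : ℕ, M ≤ ((b - a : ℕ) : ℝ) ∧
          ∃ J : Finset ℕ, ↑J ⊆ Set.Ico a b ∧ IsIndepSet T A ↑J ∧
            d * ((b - a : ℕ) : ℝ) ≤ (J.card : ℝ) := by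
  simp only [HasIndepSetPosDensity, HasPosDensity]
  classical
  constructor
  · rintro ⟨J, hJind, d, hd0, hdlim⟩
    have hdnn : 0 ≤ d := ge_of_tendsto' hdlim (fun n => by positivity)
    have hdpos : 0 < d := lt_of_le_of_ne hdnn (Ne.symm hd0)
    refine ⟨d / 2, by linarith, ?_⟩
    intro M hM
    have hev := hdlim.eventually_const_lt (show d / 2 < d by linarith)
    obtain ⟨n, hn1, hn2⟩ := (hev.and (eventually_ge_atTop ⌈M⌉₊)).exists
    have hfin : (J ∩ Set.Iic n : Set ℕ).Finite := (Set.finite_Iic n).inter_of_right J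
    refine ⟨0, n + 1, ?_, hfin.toFinset, ?_, ?_, ?_⟩
    · have h1 : M ≤ (⌈M⌉₊ : ℝ) := Nat.le_ceil M
      have h2 : ((⌈M⌉₊ : ℕ) : ℝ) ≤ (n : ℝ) := Nat.cast_le.mpr hn2
      have h3 : ((n + 1 - 0 : ℕ) : ℝ) = (n : ℝ) + 1 := by push_cast; ring
      rw [h3]
      linarith
    · intro x hx
      have hx' : x ∈ J ∩ Set.Iic n := (Set.Finite.mem_toFinset hfin).mp hx
      exact Set.mem_Ico.mpr ⟨Nat.zero_le x, Nat.lt_succ_of_le hx'.2⟩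
    · exact isIndepSet_subset T A hJind
        (fun x hx => ((Set.Finite.mem_toFinset hfin).mp hx).1)
    · have hc : (Nat.card (J ∩ Set.Iic n : Set ℕ) : ℝ) = (hfin.toFinset.card : ℝ) := by
        rw [Nat.card_coe_set_eq, Set.ncard_eq_toFinset_card _ hfin]
      have hpos : (0 : ℝ) < (n : ℝ) + 1 := by positivity
      rw [lt_div_iff₀ hpos] at hn1
      have h3 : ((n + 1 - 0 : ℕ) : ℝ) = (n : ℝ) + 1 := by push_cast; ring
      rw [h3, ← hc]
      linarith
  · rintro ⟨d, hd0, hRHS⟩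
    have husub : Subadditive (fun m : ℕ => (maxIndep T A m : ℝ)) := by
      intro m n
      have h := maxIndep_subadd T A m n
      show ((maxIndep T A (m + n) : ℕ) : ℝ) ≤ ((maxIndep T A m : ℕ) : ℝ) + ((maxIndep T A n : ℕ) : ℝ)
      exact_mod_cast h
    have hbdd : BddBelow (Set.range fun n : ℕ => (maxIndep T A n : ℝ) / n) := by
      refine ⟨0, ?_⟩
      rintro x ⟨n, rfl⟩
      positivity
    have htend := husub.tendsto_lim hbdd
    set L := husub.lim with hLdef
    have hfreq : ∀ N : ℕ, ∃ m : ℕ, N ≤ m ∧ 1 ≤ m ∧ d * m ≤ (maxIndep T A m : ℝ) := by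
      intro N
      have hMpos : (0 : ℝ) < ((max N 1 : ℕ) : ℝ) := by
        have : 0 < max N 1 := lt_of_lt_of_le Nat.zero_lt_one (le_max_right N 1)
        exact_mod_cast this
      obtain ⟨a, b, hab, J, hJsub, hJind, hJcard⟩ := hRHS ((max N 1 : ℕ) : ℝ) hMpos
      refine ⟨b - a, ?_, ?_, ?_⟩
      · have := Nat.cast_le.mp hab
        omega
      · have := Nat.cast_le.mp hab
        omega
      · have haJ : ∀ x ∈ J, a ≤ x := fun x hx => (Set.mem_Ico.mp (hJsub hx)).1
        have hbJ : ∀ x ∈ J, x < b := fun x hx => (Set.mem_Ico.mp (hJsub hx)).2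
        have hfil : J.filter (fun x => a ≤ x) = J := Finset.filter_true_of_mem haJ
        have hind' : IsIndepSet T A ↑(J.image (· - a)) := by
          have := isIndepSet_finset_shift T A J a hJind
          rwa [hfil] at this
        have hinj : Set.InjOn (· - a) ↑J := by
          intro x hx y hy hxy
          have hxy' : x - a = y - a := hxy
          have h1 := haJ x (Finset.mem_coe.mp hx)
          have h2 := haJ y (Finset.mem_coe.mp hy)
          omega
        have hcard' : (J.image (· - a)).card = J.card := Finset.card_image_of_injOn hinj
        have hb' : ∀ x ∈ J.image (· - a), x < b - a := by
          intro x hx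
          obtain ⟨y, hy, rfl⟩ := Finset.mem_image.mp hx
          have h1 := haJ y hy
          have h2 := hbJ y hy
          show y - a < b - a
          omega
        have hle := le_maxIndep T A _ hind' hb'
        rw [hcard'] at hle
        calc d * ((b - a : ℕ) : ℝ) ≤ (J.card : ℝ) := hJcard
          _ ≤ (maxIndep T A (b - a) : ℝ) := by exact_mod_cast hle
    have hdL : d ≤ L := by
      by_contra hcon
      push_neg at hcon
      have hev : ∀ᶠ m in atTop, (maxIndep T A m : ℝ) / m < d := htend.eventually_lt_const hcon
      obtain ⟨Nev, hNev⟩ := eventually_atTop.mp hev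
      obtain ⟨m, hm1, hm2, hm3⟩ := hfreq Nev
      have hlt := hNev m hm1
      have hmpos : (0 : ℝ) < (m : ℝ) := by exact_mod_cast hm2
      rw [div_lt_iff₀ hmpos] at hlt
      nlinarith
    have hLpos : 0 < L := lt_of_lt_of_le hd0 hdL
    have hLle : ∀ m : ℕ, m ≠ 0 → L * m ≤ (maxIndep T A m : ℝ) := by
      intro m hm
      have h1 := husub.lim_le_div hbdd hm
      have hmpos : (0 : ℝ) < (m : ℝ) := by
        exact_mod_cast Nat.pos_of_ne_zero hm
      calc L * m ≤ ((maxIndep T A m : ℝ) / m) * m :=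
            mul_le_mul_of_nonneg_right h1 hmpos.le
        _ = (maxIndep T A m : ℝ) := by field_simp
    have hSex : ∀ i : ℕ, ∃ S : Finset ℕ, IsIndepSet T A ↑S ∧
        ∀ ℓ : ℕ, ℓ ≤ i → (L - L / ((i : ℝ) + 1)) * ℓ ≤ ((S.filter (fun x => x < ℓ)).card : ℝ) := by
      intro i
      have hpos : 0 < L / ((i : ℝ) + 1) := by positivity
      have hle : L / ((i : ℝ) + 1) ≤ L := by
        rw [div_le_iff₀ (by positivity)]
        nlinarith [Nat.cast_nonneg (α := ℝ) i]
      exact exists_good_suffix T A L (L - L / ((i : ℝ) + 1)) (by linarith) (by linarith) hLle i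
    choose S hSind hScnt using hSex
    obtain ⟨𝒰, h𝒰⟩ := Ultrafilter.exists_le (atTop : Filter ℕ)
    set ω : Set ℕ := {n | ∀ᶠ i in (𝒰 : Filter ℕ), n ∈ S i} with hω
    set F : ℕ → Finset ℕ := fun ℓ => (Finset.range ℓ).filter (fun n => n ∈ ω) with hF
    have hFev : ∀ ℓ : ℕ, ∀ᶠ i in (𝒰 : Filter ℕ), (S i).filter (fun x => x < ℓ) = F ℓ := by
      intro ℓ
      have hall : ∀ᶠ i in (𝒰 : Filter ℕ), ∀ n ∈ Finset.range ℓ, (n ∈ S i ↔ n ∈ ω) := by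
        rw [Filter.eventually_all_finset]
        intro n _
        by_cases hn : n ∈ ω
        · have hn2 : ∀ᶠ i in (𝒰 : Filter ℕ), n ∈ S i := hn
          exact hn2.mono fun i hi => iff_of_true hi hn
        · have hn2 : ¬ ∀ᶠ i in (𝒰 : Filter ℕ), n ∈ S i := hn
          have hn3 : ∀ᶠ i in (𝒰 : Filter ℕ), n ∉ S i := Ultrafilter.eventually_not.mpr hn2
          exact hn3.mono fun i hi => iff_of_false hi hn
      refine hall.mono fun i hi => ?_
      ext x
      simp only [hF, Finset.mem_filter, Finset.mem_range]
      constructor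
      · rintro ⟨hxS, hxl⟩
        exact ⟨hxl, (hi x (Finset.mem_range.mpr hxl)).mp hxS⟩
      · rintro ⟨hxl, hxω⟩
        exact ⟨(hi x (Finset.mem_range.mpr hxl)).mpr hxω, hxl⟩
    have hωind : IsIndepSet T A ω := by
      intro I hne hI σ
      obtain ⟨i, hi⟩ := (hFev (I.max' hne + 1)).exists
      refine hSind i I hne ?_ σ
      intro x hx
      have hxI : x ∈ I := Finset.mem_coe.mp hx
      have hxℓ : x < I.max' hne + 1 := Nat.lt_succ_of_le (I.le_max' x hxI)
      have hxF : x ∈ F (I.max' hne + 1) :=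
        Finset.mem_filter.mpr ⟨Finset.mem_range.mpr hxℓ, hI hx⟩
      rw [← hi] at hxF
      exact Finset.mem_coe.mpr (Finset.mem_filter.mp hxF).1
    have hcard : ∀ n : ℕ, (Nat.card (ω ∩ Set.Iic n : Set ℕ) : ℝ) = ((F (n + 1)).card : ℝ) := by
      intro n
      have hset : (ω ∩ Set.Iic n : Set ℕ) = ↑(F (n + 1)) := by
        ext x
        simp only [hF, Finset.coe_filter, Finset.mem_range, Set.mem_inter_iff,
          Set.mem_setOf_eq, Set.mem_Iic]
        constructor
        · rintro ⟨h1, h2⟩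
          exact ⟨by omega, h1⟩
        · rintro ⟨h1, h2⟩
          exact ⟨h2, by omega⟩
      rw [hset]
      simp [Nat.card_coe_set_eq, Set.ncard_coe_finset]
    have hlow : ∀ ℓ : ℕ, L * ℓ ≤ ((F ℓ).card : ℝ) := by
      intro ℓ
      have hkey : ∀ j : ℕ, (L - L / ((j : ℝ) + 1)) * ℓ ≤ ((F ℓ).card : ℝ) := by
        intro j
        have hev2 : ∀ᶠ i in (𝒰 : Filter ℕ), max ℓ j ≤ i :=
          (eventually_ge_atTop (max ℓ j)).filter_mono h𝒰
        obtain ⟨i, hfeq, hige⟩ := ((hFev ℓ).and hev2).exists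
        have h1 := hScnt i ℓ (le_trans (le_max_left ℓ j) hige)
        rw [hfeq] at h1
        have hji : (j : ℝ) + 1 ≤ (i : ℝ) + 1 := by
          have : j ≤ i := le_trans (le_max_right ℓ j) hige
          have h2 := (Nat.cast_le (α := ℝ)).mpr this
          linarith
        have hdiv : L / ((i : ℝ) + 1) ≤ L / ((j : ℝ) + 1) :=
          div_le_div_of_nonneg_left hLpos.le (by positivity) hji
        have hm2 : (L - L / ((j : ℝ) + 1)) * ℓ ≤ (L - L / ((i : ℝ) + 1)) * ℓ :=
          mul_le_mul_of_nonneg_right (by linarith) (Nat.cast_nonneg ℓ)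
        linarith
      have hctend : Tendsto (fun j : ℕ => (L - L / ((j : ℝ) + 1)) * ℓ) atTop (𝓝 (L * ℓ)) := by
        have h0 : Tendsto (fun j : ℕ => L / ((j : ℝ) + 1)) atTop (𝓝 0) := by
          have := tendsto_one_div_add_atTop_nhds_zero_nat.const_mul L
          simpa [div_eq_mul_inv] using this
        have h1 : Tendsto (fun j : ℕ => L - L / ((j : ℝ) + 1)) atTop (𝓝 L) := by
          have h2 := (tendsto_const_nhds (x := L) (f := (atTop : Filter ℕ))).sub h0
          simpa using h2
        have h3 := h1.mul_const ((ℓ : ℝ))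
        exact h3
      exact le_of_tendsto hctend (Filter.Eventually.of_forall hkey)
    have hup : ∀ ℓ : ℕ, ((F ℓ).card : ℝ) ≤ (maxIndep T A ℓ : ℝ) := by
      intro ℓ
      obtain ⟨i, hfeq⟩ := (hFev ℓ).exists
      rw [← hfeq]
      have hind : IsIndepSet T A ↑((S i).filter (fun x => x < ℓ)) :=
        isIndepSet_subset T A (hSind i) (Finset.coe_subset.mpr (Finset.filter_subset _ _))
      have := le_maxIndep T A _ hind (fun x hx => (Finset.mem_filter.mp hx).2)
      exact_mod_cast this
    refine ⟨ω, hωind, L, ne_of_gt hLpos, ?_⟩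
    have hudiv : Tendsto (fun n : ℕ => (maxIndep T A (n + 1) : ℝ) / ((n : ℝ) + 1)) atTop (𝓝 L) := by
      have hcomp := htend.comp (tendsto_add_atTop_nat 1)
      refine hcomp.congr fun n => ?_
      simp only [Function.comp]
      push_cast
      ring
    refine tendsto_of_tendsto_of_tendsto_of_le_of_le (tendsto_const_nhds) hudiv ?_ ?_
    · intro n
      dsimp only
      rw [hcard n, le_div_iff₀ (by positivity : (0 : ℝ) < (n : ℝ) + 1)]
      have := hlow (n + 1)
      push_cast at this ⊢
      linarith
    · intro n
      dsimp only
      rw [hcard n]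
      have h1 := hup (n + 1)
      gcongr
end

section
/- Let A be a closed subset of X. Then A has an independence set of positive density if and only if there exists a T-invariant regular Borel probability measure μ on X with μ(A) > 0. -/
open Filter Set

open MeasureTheory Topology TopologicalSpace BoundedContinuousFunction NNReal
open scoped ENNReal

noncomputable section StmtAux

variable {Ω : Type*}

/-- Birkhoff sum. -/
def bS (T : Ω → Ω) (g : Ω → ℝ) (n : ℕ) (x : Ω) : ℝ := ∑ i ∈ Finset.range n, g (T^[i] x)

lemma bS_zero (T : Ω → Ω) (g : Ω → ℝ) (x : Ω) : bS T g 0 x = 0 := by simp [bS]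

lemma bS_succ (T : Ω → Ω) (g : Ω → ℝ) (n : ℕ) (x : Ω) :
    bS T g (n + 1) x = g x + bS T g n (T x) := by
  rw [bS, Finset.sum_range_succ']
  simp only [Function.iterate_succ_apply, Function.iterate_zero_apply]
  rw [add_comm, bS]

lemma bS_measurable [MeasurableSpace Ω] {T : Ω → Ω} {g : Ω → ℝ} (hT : Measurable T)
    (hg : Measurable g) (n : ℕ) : Measurable (bS T g n) :=
  Finset.measurable_sum _ fun i _ => hg.comp (hT.iterate i)

lemma bS_abs_le {T : Ω → Ω} {g : Ω → ℝ} {c : ℝ} (hc : ∀ x, |g x| ≤ c) (n : ℕ) (x : Ω) :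
    |bS T g n x| ≤ n * c := by
  calc |bS T g n x| ≤ ∑ i ∈ Finset.range n, |g (T^[i] x)| := Finset.abs_sum_le_sum_abs _ _
    _ ≤ ∑ _i ∈ Finset.range n, c := Finset.sum_le_sum fun i _ => hc _
    _ = n * c := by simp [mul_comm]

lemma bS_nonneg {T : Ω → Ω} {g : Ω → ℝ} (h0 : ∀ x, 0 ≤ g x) (n : ℕ) (x : Ω) :
    0 ≤ bS T g n x :=
  Finset.sum_nonneg fun i _ => h0 _

lemma bS_le_of_le_one {T : Ω → Ω} {g : Ω → ℝ} (h1 : ∀ x, g x ≤ 1) (n : ℕ) (x : Ω) :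
    bS T g n x ≤ n := by
  calc bS T g n x ≤ ∑ _i ∈ Finset.range n, (1:ℝ) := Finset.sum_le_sum fun i _ => h1 _
    _ = n := by simp

lemma bS_sub_const (T : Ω → Ω) (g : Ω → ℝ) (β : ℝ) (n : ℕ) (x : Ω) :
    bS T (fun y => g y - β) n x = bS T g n x - n * β := by
  simp [bS, Finset.sum_sub_distrib, mul_comm]

lemma bS_const_sub (T : Ω → Ω) (g : Ω → ℝ) (α : ℝ) (n : ℕ) (x : Ω) :
    bS T (fun y => α - g y) n x = n * α - bS T g n x := by
  simp [bS, Finset.sum_sub_distrib, mul_comm]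

/-- Running maximum `max_{0 ≤ n ≤ N} S_n`. -/
def bM (T : Ω → Ω) (g : Ω → ℝ) : ℕ → Ω → ℝ
  | 0, _ => 0
  | (N+1), x => max (bM T g N x) (bS T g (N+1) x)

lemma bM_nonneg (T : Ω → Ω) (g : Ω → ℝ) (N : ℕ) (x : Ω) : 0 ≤ bM T g N x := by
  induction N with
  | zero => exact le_refl 0
  | succ N ih => exact le_trans ih (le_max_left _ _)

lemma bM_mono (T : Ω → Ω) (g : Ω → ℝ) (N : ℕ) (x : Ω) : bM T g N x ≤ bM T g (N+1) x :=
  le_max_left _ _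

lemma bS_le_bM (T : Ω → Ω) (g : Ω → ℝ) {n N : ℕ} (h : n ≤ N) (x : Ω) :
    bS T g n x ≤ bM T g N x := by
  induction N with
  | zero => interval_cases n; simp [bS_zero, bM]
  | succ N ih =>
    rcases Nat.lt_or_ge n (N+1) with h' | h'
    · exact le_trans (ih (Nat.lt_succ_iff.mp h')) (bM_mono T g N x)
    · have : n = N + 1 := le_antisymm h h'
      subst this
      exact le_max_right _ _

lemma bM_measurable [MeasurableSpace Ω] {T : Ω → Ω} {g : Ω → ℝ} (hT : Measurable T)
    (hg : Measurable g) (N : ℕ) : Measurable (bM T g N) := by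
  induction N with
  | zero => exact measurable_const
  | succ N ih => exact ih.max (bS_measurable hT hg (N+1))

lemma bM_abs_le {T : Ω → Ω} {g : Ω → ℝ} {c : ℝ} (hc : ∀ x, |g x| ≤ c) (N : ℕ) (x : Ω) :
    |bM T g N x| ≤ N * c := by
  have hc0 : 0 ≤ c := by
    have := hc x; have := abs_nonneg (g x); linarith
  rw [abs_of_nonneg (bM_nonneg T g N x)]
  induction N with
  | zero => simp [bM]
  | succ N ih =>
    rw [bM]
    refine max_le (le_trans ih ?_) ?_
    · push_cast
      nlinarith
    · have := (abs_le.mp (bS_abs_le (T := T) hc (N+1) x)).2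
      push_cast at this ⊢
      linarith

lemma bM_key (T : Ω → Ω) (g : Ω → ℝ) (N : ℕ) (x : Ω) :
    bM T g (N+1) x ≤ max (g x + bM T g N (T x)) 0 := by
  induction N generalizing x with
  | zero =>
    have h1 : bS T g 1 x = g x + bM T g 0 (T x) := by
      rw [bS_succ, bS_zero]; rfl
    rw [bM, bM, h1]
    exact max_le (le_max_right _ _) (le_max_left _ _)
  | succ N ih =>
    show max (bM T g (N+1) x) (bS T g (N+2) x) ≤ _
    refine max_le (le_trans (ih x) ?_) ?_
    · exact max_le_max (add_le_add le_rfl (bM_mono T g N (T x))) le_rfl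
    · have : bS T g (N+2) x = g x + bS T g (N+1) (T x) := bS_succ T g (N+1) x
      rw [this]
      exact le_trans (add_le_add le_rfl (bS_le_bM T g le_rfl (T x))) (le_max_left _ _)

lemma bM_nonpos_of {T : Ω → Ω} {g : Ω → ℝ} {x : Ω} (h : ∀ n, bS T g n x ≤ 0) (N : ℕ) :
    bM T g N x ≤ 0 := by
  induction N with
  | zero => exact le_refl 0
  | succ N ih => exact max_le ih (h (N+1))

lemma integrable_of_bound {Ω : Type*} [MeasurableSpace Ω] {μ : Measure Ω} [IsFiniteMeasure μ]
    {h : Ω → ℝ} {c : ℝ} (hm : Measurable h) (hb : ∀ x, |h x| ≤ c) : Integrable h μ :=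
  (integrable_const c).mono' hm.aestronglyMeasurable
    (ae_of_all _ (by simpa [Real.norm_eq_abs] using hb))

/-- Hopf's maximal ergodic lemma (Garsia's proof). -/
lemma hopf_maximal {Ω : Type*} [MeasurableSpace Ω] {μ : Measure Ω} [IsFiniteMeasure μ]
    {T : Ω → Ω} (hmp : MeasurePreserving T μ μ) {g : Ω → ℝ} (hg : Measurable g)
    {c : ℝ} (hgc : ∀ x, |g x| ≤ c) (N : ℕ) :
    0 ≤ ∫ x in {x | 0 < bM T g (N+1) x}, g x ∂μ := by
  have hTm : Measurable T := hmp.measurable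
  set P : Set Ω := {x | 0 < bM T g (N+1) x} with hP
  have hPm : MeasurableSet P := measurableSet_lt measurable_const (bM_measurable hTm hg (N+1))
  set φ : Ω → ℝ := fun x => bM T g (N+1) x - bM T g N (T x) with hφ
  have hφm : Measurable φ := (bM_measurable hTm hg (N+1)).sub ((bM_measurable hTm hg N).comp hTm)
  have hφb : ∀ x, |φ x| ≤ (N+1) * c + N * c := by
    intro x
    have h1 := bM_abs_le (T := T) hgc (N+1) x
    have h2 := bM_abs_le (T := T) hgc N (T x)
    calc |φ x| ≤ |bM T g (N+1) x| + |bM T g N (T x)| := abs_sub _ _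
      _ ≤ (N+1) * c + N * c := by push_cast at h1 h2 ⊢; linarith
  have hφint : Integrable φ μ := integrable_of_bound hφm hφb
  have hgint : Integrable g μ := integrable_of_bound hg hgc
  have hint1 : Integrable (bM T g (N+1)) μ :=
    integrable_of_bound (bM_measurable hTm hg (N+1)) (bM_abs_le hgc (N+1))
  have hint3 : Integrable (bM T g N) μ :=
    integrable_of_bound (bM_measurable hTm hg N) (bM_abs_le (T := T) hgc N)
  have hint2 : Integrable (fun x => bM T g N (T x)) μ :=
    integrable_of_bound ((bM_measurable hTm hg N).comp hTm)
      (fun x => bM_abs_le (T := T) hgc N (T x))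
  -- φ ≤ g on P
  have hφP : ∀ x ∈ P, φ x ≤ g x := by
    intro x hx
    have hkey := bM_key T g N x
    have hpos : (0:ℝ) < bM T g (N+1) x := hx
    rcases le_max_iff.mp hkey with h | h
    · have h2 : 0 ≤ bM T g N (T x) + 0 := by
        simpa using bM_nonneg T g N (T x)
      simp only [hφ]
      linarith
    · linarith
  -- φ ≤ 0 off P
  have hφPc : ∀ x ∈ Pᶜ, φ x ≤ 0 := by
    intro x hx
    have h1 : bM T g (N+1) x ≤ 0 := not_lt.mp hx
    have h2 : 0 ≤ bM T g N (T x) := bM_nonneg T g N (T x)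
    simp only [hφ]; linarith
  -- ∫ φ ≥ 0
  have hstep2 : 0 ≤ ∫ x, φ x ∂μ := by
    have heq : ∫ x, bM T g N (T x) ∂μ = ∫ x, bM T g N x ∂μ := by
      have h := integral_map (f := bM T g N) hTm.aemeasurable
        (by rw [hmp.map_eq]; exact (bM_measurable hTm hg N).aestronglyMeasurable)
      rw [hmp.map_eq] at h
      exact h.symm
    rw [hφ, integral_sub hint1 hint2, heq, sub_nonneg]
    exact integral_mono hint3 hint1 (fun x => (bM_mono T g N x))
  have hres : ∫ x, φ x ∂μ ≤ ∫ x in P, φ x ∂μ := by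
    have hsplit := integral_add_compl hPm hφint
    have hPc : ∫ x in Pᶜ, φ x ∂μ ≤ 0 := setIntegral_nonpos hPm.compl hφPc
    linarith
  have hmono : ∫ x in P, φ x ∂μ ≤ ∫ x in P, g x ∂μ :=
    setIntegral_mono_on hφint.integrableOn hgint.integrableOn hPm hφP
  linarith

/-- Limit version of Hopf's maximal lemma. -/
lemma hopf_maximal_iUnion {Ω : Type*} [MeasurableSpace Ω] {μ : Measure Ω} [IsFiniteMeasure μ]
    {T : Ω → Ω} (hmp : MeasurePreserving T μ μ) {g : Ω → ℝ} (hg : Measurable g)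
    {c : ℝ} (hgc : ∀ x, |g x| ≤ c) :
    0 ≤ ∫ x in {x | ∃ n : ℕ, 0 < bS T g (n+1) x}, g x ∂μ := by
  have hTm : Measurable T := hmp.measurable
  set P : ℕ → Set Ω := fun N => {x | 0 < bM T g (N+1) x} with hP
  have hPm : ∀ N, MeasurableSet (P N) := fun N =>
    measurableSet_lt measurable_const (bM_measurable hTm hg (N+1))
  have hPmono : Monotone P := by
    intro N M hNM x hx
    have : bM T g (N+1) x ≤ bM T g (M+1) x := by
      clear hx
      induction M with
      | zero => have : N = 0 := Nat.le_zero.mp hNM; subst this; exact le_rfl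
      | succ M ih =>
        rcases Nat.lt_or_ge N (M+1) with h' | h'
        · exact le_trans (ih (Nat.lt_succ_iff.mp h')) (bM_mono T g (M+1) x)
        · have : N = M + 1 := le_antisymm hNM h'
          subst this; exact le_rfl
    exact lt_of_lt_of_le hx this
  have hQ : (⋃ N, P N) = {x | ∃ n : ℕ, 0 < bS T g (n+1) x} := by
    ext x
    simp only [mem_iUnion, mem_setOf_eq]
    constructor
    · rintro ⟨N, hN⟩
      by_contra hcon
      push_neg at hcon
      have hall : ∀ n, bS T g n x ≤ 0 := by
        intro n
        cases n with
        | zero => simp [bS_zero]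
        | succ n => exact hcon n
      exact absurd (bM_nonpos_of hall (N+1)) (not_le.mpr hN)
    · rintro ⟨n, hn⟩
      exact ⟨n, lt_of_lt_of_le hn (bS_le_bM T g le_rfl x)⟩
  have hgint : Integrable g μ := integrable_of_bound hg hgc
  have htend := tendsto_setIntegral_of_monotone hPm hPmono hgint.integrableOn
  rw [hQ] at htend
  exact ge_of_tendsto htend (Eventually.of_forall fun N => hopf_maximal hmp hg hgc N)

/-- limsup comparison for sequences in `[0,1]` whose difference tends to `0`. -/
lemma limsup_le_of_tendsto_sub {u v : ℕ → ℝ}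
    (hu0 : ∀ n, 0 ≤ u n) (hv1 : ∀ n, v n ≤ 1)
    (h : Tendsto (fun n => u n - v n) atTop (𝓝 0)) :
    limsup u atTop ≤ limsup v atTop := by
  have hvb : IsBoundedUnder (· ≤ ·) atTop v := isBoundedUnder_of ⟨1, hv1⟩
  have hucb : IsCoboundedUnder (· ≤ ·) atTop u :=
    (isBoundedUnder_of ⟨0, hu0⟩ : IsBoundedUnder (· ≥ ·) atTop u).isCoboundedUnder_le
  refine le_of_forall_pos_le_add fun ε hε => ?_
  have hv : ∀ᶠ n in atTop, v n < limsup v atTop + ε / 2 :=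
    eventually_lt_of_limsup_lt (by linarith) hvb
  have hd : ∀ᶠ n in atTop, u n - v n < ε / 2 :=
    h.eventually_lt_const (by linarith)
  have : ∀ᶠ n in atTop, u n ≤ limsup v atTop + ε := by
    filter_upwards [hv, hd] with n h1 h2
    linarith
  exact limsup_le_of_le hucb this

lemma liminf_le_of_tendsto_sub {u v : ℕ → ℝ}
    (hu1 : ∀ n, u n ≤ 1) (hv0 : ∀ n, 0 ≤ v n)
    (h : Tendsto (fun n => u n - v n) atTop (𝓝 0)) :
    liminf v atTop ≤ liminf u atTop := by
  have hvb : IsBoundedUnder (· ≥ ·) atTop v := isBoundedUnder_of ⟨0, hv0⟩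
  have hucb : IsCoboundedUnder (· ≥ ·) atTop u :=
    (isBoundedUnder_of ⟨1, hu1⟩ : IsBoundedUnder (· ≤ ·) atTop u).isCoboundedUnder_ge
  have key : ∀ ε : ℝ, 0 < ε → liminf v atTop ≤ liminf u atTop + ε := by
    intro ε hε
    have hv : ∀ᶠ n in atTop, liminf v atTop - ε / 2 < v n :=
      eventually_lt_of_lt_liminf (by linarith) hvb
    have hd : ∀ᶠ n in atTop, -(ε/2) < u n - v n := by
      have := h.eventually_const_lt (show -(ε/2) < 0 by linarith)
      exact this
    have hev : ∀ᶠ n in atTop, liminf v atTop - ε ≤ u n := by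
      filter_upwards [hv, hd] with n h1 h2
      linarith
    have := le_liminf_of_le hucb hev
    linarith
  by_contra hcon
  push_neg at hcon
  have := key ((liminf v atTop - liminf u atTop)/2) (by linarith)
  linarith

end StmtAux

section Birkhoff

variable {Ω : Type*} [MeasurableSpace Ω] {μ : Measure Ω} [IsProbabilityMeasure μ]
  {T : Ω → Ω} {f : Ω → ℝ}

/-- Pointwise ergodic theorem, in the form we need: there is a point where the Birkhoff
averages converge to a positive limit. -/
lemma exists_tendsto_birkhoffAvg_pos (hmp : MeasurePreserving T μ μ) (hf : Measurable f)
    (h0 : ∀ x, 0 ≤ f x) (h1 : ∀ x, f x ≤ 1) (hpos : 0 < ∫ x, f x ∂μ) :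
    ∃ x : Ω, ∃ d : ℝ, 0 < d ∧
      Tendsto (fun n : ℕ => bS T f (n+1) x / (n+1)) atTop (𝓝 d) := by
  classical
  have hTm : Measurable T := hmp.measurable
  have hfabs : ∀ x, |f x| ≤ 1 := fun x => abs_le.mpr ⟨by linarith [h0 x], h1 x⟩
  set avg : ℕ → Ω → ℝ := fun n x => bS T f (n+1) x / (n+1) with havg
  have havg0 : ∀ n x, 0 ≤ avg n x := fun n x =>
    div_nonneg (bS_nonneg h0 (n+1) x) (by positivity)
  have havg1 : ∀ n x, avg n x ≤ 1 := by
    intro n x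
    rw [havg, div_le_one (by positivity)]
    have := bS_le_of_le_one (T := T) h1 (n+1) x
    push_cast at this ⊢
    linarith
  have havgm : ∀ n, Measurable (avg n) := fun n => (bS_measurable hTm hf (n+1)).div_const _
  set Fb : Ω → ℝ := fun x => limsup (fun n => avg n x) atTop with hFb
  set Fl : Ω → ℝ := fun x => liminf (fun n => avg n x) atTop with hFl
  have hFbm : Measurable Fb := Measurable.limsup havgm
  have hFlm : Measurable Fl := Measurable.liminf havgm
  have hbddle : ∀ x, IsBoundedUnder (· ≤ ·) atTop (fun n => avg n x) :=
    fun x => isBoundedUnder_of ⟨1, fun n => havg1 n x⟩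
  have hbddge : ∀ x, IsBoundedUnder (· ≥ ·) atTop (fun n => avg n x) :=
    fun x => isBoundedUnder_of ⟨0, fun n => havg0 n x⟩
  have hFb1 : ∀ x, Fb x ≤ 1 := fun x =>
    limsup_le_of_le ((hbddge x).isCoboundedUnder_le)
      (Eventually.of_forall fun n => havg1 n x)
  have hFl0 : ∀ x, 0 ≤ Fl x := fun x =>
    le_liminf_of_le ((hbddle x).isCoboundedUnder_ge)
      (Eventually.of_forall fun n => havg0 n x)
  -- invariance of Fb and Fl under T
  have hsub : ∀ x, Tendsto (fun n => avg n (T x) - avg (n+1) x) atTop (𝓝 0) := by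
    intro x
    have hbound : ∀ n : ℕ, |avg n (T x) - avg (n+1) x| ≤ 2 / ((n:ℝ)+2) := by
      intro n
      have c1 : (0:ℝ) < (n:ℝ) + 1 := by positivity
      have c2 : (0:ℝ) < (n:ℝ) + 2 := by positivity
      set s : ℝ := bS T f (n+1) (T x) with hs
      have hs0 : 0 ≤ s := bS_nonneg h0 (n+1) (T x)
      have hs1 : s ≤ (n:ℝ)+1 := by
        have := bS_le_of_le_one (T := T) h1 (n+1) (T x); push_cast at this; linarith
      have hsucc : bS T f (n+2) x = f x + s := bS_succ T f (n+1) x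
      have hval : avg n (T x) - avg (n+1) x = (s - ((n:ℝ)+1) * f x) / (((n:ℝ)+1) * ((n:ℝ)+2)) := by
        rw [havg]
        simp only [hsucc]
        push_cast
        field_simp
        ring
      have hD : (0:ℝ) < ((n:ℝ)+1) * ((n:ℝ)+2) := by positivity
      rw [hval, abs_div, abs_of_pos hD]
      have hnum : |s - ((n:ℝ)+1) * f x| ≤ (n:ℝ)+1 := by
        rw [abs_le]
        constructor
        · have : ((n:ℝ)+1) * f x ≤ ((n:ℝ)+1) * 1 := by
            apply mul_le_mul_of_nonneg_left (h1 x) (by positivity)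
          nlinarith
        · nlinarith [mul_nonneg (le_of_lt c1) (h0 x)]
      have hle1 : |s - ((n:ℝ)+1) * f x| / (((n:ℝ)+1) * ((n:ℝ)+2)) ≤
          ((n:ℝ)+1) / (((n:ℝ)+1) * ((n:ℝ)+2)) := by gcongr
      have heq1 : ((n:ℝ)+1) / (((n:ℝ)+1) * ((n:ℝ)+2)) = 1 / ((n:ℝ)+2) := by
        field_simp
      have hle2 : (1:ℝ) / ((n:ℝ)+2) ≤ 2 / ((n:ℝ)+2) := by gcongr <;> norm_num
      rw [heq1] at hle1
      linarith
    have hto : Tendsto (fun n : ℕ => 2 / ((n:ℝ)+2)) atTop (𝓝 0) := by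
      have h2 := (_root_.tendsto_const_div_atTop_nhds_zero_nat (2:ℝ)).comp (tendsto_add_atTop_nat 2)
      have heq : ((fun n : ℕ => 2 / (n:ℝ)) ∘ fun n => n + 2) = fun n : ℕ => 2 / ((n:ℝ)+2) := by
        funext n
        simp only [Function.comp_apply]
        push_cast
        ring
      rw [heq] at h2
      exact h2
    exact squeeze_zero_norm hbound hto
  have hFbT : ∀ x, Fb (T x) = Fb x := by
    intro x
    have h1' : limsup (fun n => avg n (T x)) atTop = limsup (fun n => avg (n+1) x) atTop := by
      apply le_antisymm
      · exact limsup_le_of_tendsto_sub (fun n => havg0 n (T x)) (fun n => havg1 (n+1) x) (hsub x)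
      · refine limsup_le_of_tendsto_sub (fun n => havg0 (n+1) x) (fun n => havg1 n (T x)) ?_
        have := (hsub x).neg
        simpa [neg_sub] using this
    have h2' : limsup (fun n => avg (n+1) x) atTop = limsup (fun n => avg n x) atTop :=
      limsup_nat_add (fun n => avg n x) 1
    exact h1'.trans h2'
  have hFlT : ∀ x, Fl (T x) = Fl x := by
    intro x
    have h1' : liminf (fun n => avg n (T x)) atTop = liminf (fun n => avg (n+1) x) atTop := by
      apply le_antisymm
      · refine liminf_le_of_tendsto_sub (fun n => havg1 (n+1) x) (fun n => havg0 n (T x)) ?_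
        have := (hsub x).neg
        simpa [neg_sub] using this
      · exact liminf_le_of_tendsto_sub (fun n => havg1 n (T x)) (fun n => havg0 (n+1) x) (hsub x)
    have h2' : liminf (fun n => avg (n+1) x) atTop = liminf (fun n => avg n x) atTop :=
      liminf_nat_add (fun n => avg n x) 1
    exact h1'.trans h2'
  -- the exceptional sets are null
  have hEnull : ∀ α β : ℝ, α < β → μ {x | Fl x < α ∧ β < Fb x} = 0 := by
    intro α β hαβ
    set E : Set Ω := {x | Fl x < α ∧ β < Fb x} with hE
    have hEm : MeasurableSet E :=
      (measurableSet_lt hFlm measurable_const).inter (measurableSet_lt measurable_const hFbm)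
    have hEinv : T ⁻¹' E = E := by
      ext x
      simp only [mem_preimage, hE, mem_setOf_eq, hFbT x, hFlT x]
    have hmpE : MeasurePreserving T (μ.restrict E) (μ.restrict E) := by
      refine ⟨hTm, ?_⟩
      ext s hs
      rw [Measure.map_apply hTm hs, Measure.restrict_apply (hTm hs),
        Measure.restrict_apply hs]
      conv_lhs => rw [← hEinv]
      rw [← preimage_inter, hmp.measure_preimage (hs.inter hEm).nullMeasurableSet]
    haveI : IsFiniteMeasure (μ.restrict E) := inferInstance
    -- first application: g = f - β
    have hβ : β * (μ E).toReal ≤ ∫ x in E, f x ∂μ := by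
      set g : Ω → ℝ := fun y => f y - β with hg
      have hgm : Measurable g := hf.sub measurable_const
      have hgb : ∀ y, |g y| ≤ 1 + |β| := by
        intro y
        have := hfabs y
        calc |g y| ≤ |f y| + |β| := abs_sub _ _
          _ ≤ 1 + |β| := by linarith
      have hhopf := hopf_maximal_iUnion hmpE hgm hgb
      set Q : Set Ω := {x | ∃ n : ℕ, 0 < bS T g (n+1) x} with hQ
      have hQm : MeasurableSet Q := by
        have : Q = ⋃ n : ℕ, {x | 0 < bS T g (n+1) x} := by
          ext y; simp [hQ]
        rw [this]
        exact MeasurableSet.iUnion fun n =>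
          measurableSet_lt measurable_const (bS_measurable hTm hgm (n+1))
      have hEQ : E ⊆ Q := by
        intro y hy
        have hfreq := frequently_lt_of_lt_limsup ((hbddge y).isCoboundedUnder_le) hy.2
        obtain ⟨n, hn⟩ := hfreq.exists
        refine ⟨n, ?_⟩
        have c1 : (0:ℝ) < (n:ℝ)+1 := by positivity
        have hn' : β * ((n:ℝ)+1) < bS T f (n+1) y := (lt_div_iff₀ c1).mp hn
        rw [hg, bS_sub_const]
        push_cast
        linarith
      have hrw : ∫ x in Q, g x ∂(μ.restrict E) = ∫ x in E, g x ∂μ := by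
        rw [Measure.restrict_restrict hQm, Set.inter_eq_self_of_subset_right hEQ]
      rw [hrw] at hhopf
      have hfint : Integrable f μ := integrable_of_bound hf hfabs
      have hsplit : ∫ x in E, g x ∂μ = ∫ x in E, f x ∂μ - (μ E).toReal * β := by
        rw [hg]
        rw [integral_sub hfint.integrableOn (integrable_const β).integrableOn,
          setIntegral_const β, smul_eq_mul]
        rfl
      rw [hsplit] at hhopf
      linarith
    -- second application: g = α - f
    have hα : ∫ x in E, f x ∂μ ≤ α * (μ E).toReal := by
      set g : Ω → ℝ := fun y => α - f y with hg
      have hgm : Measurable g := measurable_const.sub hf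
      have hgb : ∀ y, |g y| ≤ |α| + 1 := by
        intro y
        have := hfabs y
        calc |g y| ≤ |α| + |f y| := abs_sub _ _
          _ ≤ |α| + 1 := by linarith
      have hhopf := hopf_maximal_iUnion hmpE hgm hgb
      set Q : Set Ω := {x | ∃ n : ℕ, 0 < bS T g (n+1) x} with hQ
      have hQm : MeasurableSet Q := by
        have : Q = ⋃ n : ℕ, {x | 0 < bS T g (n+1) x} := by
          ext y; simp [hQ]
        rw [this]
        exact MeasurableSet.iUnion fun n =>
          measurableSet_lt measurable_const (bS_measurable hTm hgm (n+1))
      have hEQ : E ⊆ Q := by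
        intro y hy
        have hfreq := frequently_lt_of_liminf_lt ((hbddle y).isCoboundedUnder_ge) hy.1
        obtain ⟨n, hn⟩ := hfreq.exists
        refine ⟨n, ?_⟩
        have c1 : (0:ℝ) < (n:ℝ)+1 := by positivity
        have hn' : bS T f (n+1) y < α * ((n:ℝ)+1) := (div_lt_iff₀ c1).mp hn
        rw [hg, bS_const_sub]
        push_cast
        linarith
      have hrw : ∫ x in Q, g x ∂(μ.restrict E) = ∫ x in E, g x ∂μ := by
        rw [Measure.restrict_restrict hQm, Set.inter_eq_self_of_subset_right hEQ]
      rw [hrw] at hhopf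
      have hfint : Integrable f μ := integrable_of_bound hf hfabs
      have hsplit : ∫ x in E, g x ∂μ = (μ E).toReal * α - ∫ x in E, f x ∂μ := by
        rw [hg]
        rw [integral_sub (integrable_const α).integrableOn hfint.integrableOn,
          setIntegral_const α, smul_eq_mul]
        rfl
      rw [hsplit] at hhopf
      linarith
    have hm : (μ E).toReal = 0 := by
      have h1 : ENNReal.toReal (μ E) ≥ 0 := ENNReal.toReal_nonneg
      nlinarith
    by_contra hne
    have := ENNReal.toReal_pos hne (measure_ne_top μ E)
    linarith
  -- countable union of exceptional sets
  set N₀ : Set Ω := ⋃ q : ℚ × ℚ,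
      (if q.1 < q.2 then {x | Fl x < (q.1:ℝ) ∧ (q.2:ℝ) < Fb x} else ∅) with hN₀
  have hN₀null : μ N₀ = 0 := by
    refine measure_iUnion_null fun q => ?_
    by_cases h : q.1 < q.2
    · simp only [if_pos h]
      exact hEnull _ _ (by exact_mod_cast h)
    · simp [if_neg h]
  have hnotin : ∀ x ∉ N₀, Fl x = Fb x := by
    intro x hx
    by_contra hne
    have hlt : Fl x < Fb x :=
      lt_of_le_of_ne (liminf_le_limsup (hbddle x) (hbddge x)) hne
    obtain ⟨q1, hq1a, hq1b⟩ := exists_rat_btwn hlt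
    obtain ⟨q2, hq2a, hq2b⟩ := exists_rat_btwn hq1b
    apply hx
    refine mem_iUnion.mpr ⟨(q1, q2), ?_⟩
    rw [if_pos (show q1 < q2 by exact_mod_cast hq2a)]
    exact ⟨hq1a, hq2b⟩
  have hae : ∀ᵐ x ∂μ, Tendsto (fun n => avg n x) atTop (𝓝 (Fb x)) := by
    have h1 : ∀ᵐ x ∂μ, x ∉ N₀ := by
      rw [ae_iff]
      simpa [not_not] using hN₀null
    filter_upwards [h1] with x hx
    exact tendsto_of_liminf_eq_limsup (hnotin x hx) rfl (hbddle x) (hbddge x)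
  -- the integral of Fb equals the integral of f
  have hcomp : ∀ i : ℕ, ∫ x, f (T^[i] x) ∂μ = ∫ x, f x ∂μ := by
    intro i
    have h := integral_map (f := f) (hTm.iterate i).aemeasurable
      (by rw [(hmp.iterate i).map_eq]; exact hf.aestronglyMeasurable)
    rw [(hmp.iterate i).map_eq] at h
    exact h.symm
  have hint_i : ∀ i : ℕ, Integrable (fun x => f (T^[i] x)) μ := fun i =>
    integrable_of_bound (hf.comp (hTm.iterate i)) (fun x => hfabs _)
  have hint_avg : ∀ n, ∫ x, avg n x ∂μ = ∫ x, f x ∂μ := by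
    intro n
    calc ∫ x, avg n x ∂μ = (∫ x, bS T f (n+1) x ∂μ) / ((n:ℝ)+1) :=
          integral_div _ _
      _ = (∑ i ∈ Finset.range (n+1), ∫ x, f (T^[i] x) ∂μ) / ((n:ℝ)+1) := by
          rw [show (fun x => bS T f (n+1) x) =
            fun x => ∑ i ∈ Finset.range (n+1), f (T^[i] x) from rfl,
            integral_finset_sum _ (fun i _ => hint_i i)]
      _ = (((n:ℝ)+1) * ∫ x, f x ∂μ) / ((n:ℝ)+1) := by
          rw [Finset.sum_congr rfl fun i _ => hcomp i, Finset.sum_const, Finset.card_range,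
            nsmul_eq_mul]
          push_cast
          ring_nf
      _ = ∫ x, f x ∂μ := by
          field_simp
  have hFbint : ∫ x, Fb x ∂μ = ∫ x, f x ∂μ := by
    have hdct := tendsto_integral_of_dominated_convergence (F := avg) (f := Fb)
      (fun _ => (1:ℝ))
      (fun n => (havgm n).aestronglyMeasurable) (integrable_const 1)
      (fun n => ae_of_all _ fun x => by
        rw [Real.norm_eq_abs, abs_of_nonneg (havg0 n x)]
        exact havg1 n x)
      hae
    have hconst : Tendsto (fun n => ∫ x, avg n x ∂μ) atTop (𝓝 (∫ x, f x ∂μ)) := by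
      have : (fun n => ∫ x, avg n x ∂μ) = fun _ => ∫ x, f x ∂μ := funext hint_avg
      rw [this]
      exact tendsto_const_nhds
    exact tendsto_nhds_unique hdct hconst
  -- conclusion
  by_contra hcon
  push_neg at hcon
  have hle : ∀ᵐ x ∂μ, Fb x ≤ 0 := by
    filter_upwards [hae] with x hx
    by_contra hpos'
    push_neg at hpos'
    exact hcon x (Fb x) hpos' hx
  have hneg := integral_nonpos_of_ae hle
  rw [hFbint] at hneg
  linarith

end Birkhoff



section RieszB

variable {X : Type*} [TopologicalSpace X] (Λ : (X →ᵇ ℝ≥0) →ₗ[ℝ≥0] ℝ≥0)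

/-- Riesz content for bounded continuous functions. -/
noncomputable def rieszContentAuxB : Compacts X → ℝ≥0 := fun K =>
  sInf (Λ '' { f : X →ᵇ ℝ≥0 | ∀ x ∈ K, (1 : ℝ≥0) ≤ f x })

theorem rieszContentAuxB_image_nonempty (K : Compacts X) :
    (Λ '' { f : X →ᵇ ℝ≥0 | ∀ x ∈ K, (1 : ℝ≥0) ≤ f x }).Nonempty :=
  ⟨Λ 1, 1, fun _ _ => le_rfl, rfl⟩

theorem rieszContentAuxB_mono {K₁ K₂ : Compacts X} (h : K₁ ≤ K₂) :
    rieszContentAuxB Λ K₁ ≤ rieszContentAuxB Λ K₂ :=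
  csInf_le_csInf (OrderBot.bddBelow _) (rieszContentAuxB_image_nonempty Λ K₂)
    (image_mono fun f hf x hx => hf x (h hx))

theorem rieszContentAuxB_le {K : Compacts X} {f : X →ᵇ ℝ≥0} (h : ∀ x ∈ K, (1 : ℝ≥0) ≤ f x) :
    rieszContentAuxB Λ K ≤ Λ f :=
  csInf_le (OrderBot.bddBelow _) ⟨f, h, rfl⟩

theorem rieszContentAuxB_sup_le (K1 K2 : Compacts X) :
    rieszContentAuxB Λ (K1 ⊔ K2) ≤ rieszContentAuxB Λ K1 + rieszContentAuxB Λ K2 := by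
  apply _root_.le_of_forall_pos_le_add
  intro ε εpos
  obtain ⟨_, ⟨f1, hf1, rfl⟩, h1⟩ := exists_lt_of_csInf_lt (rieszContentAuxB_image_nonempty Λ K1)
    (lt_add_of_pos_right (rieszContentAuxB Λ K1) (half_pos εpos))
  obtain ⟨_, ⟨f2, hf2, rfl⟩, h2⟩ := exists_lt_of_csInf_lt (rieszContentAuxB_image_nonempty Λ K2)
    (lt_add_of_pos_right (rieszContentAuxB Λ K2) (half_pos εpos))
  have hu : ∀ x ∈ K1 ⊔ K2, (1 : ℝ≥0) ≤ (f1 + f2) x := by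
    rintro x (hx | hx)
    · exact le_add_right (hf1 x hx)
    · exact le_add_left (hf2 x hx)
  calc rieszContentAuxB Λ (K1 ⊔ K2) ≤ Λ (f1 + f2) := rieszContentAuxB_le Λ hu
    _ = Λ f1 + Λ f2 := map_add Λ f1 f2
    _ ≤ rieszContentAuxB Λ K1 + ε / 2 + (rieszContentAuxB Λ K2 + ε / 2) := add_le_add h1.le h2.le
    _ = rieszContentAuxB Λ K1 + rieszContentAuxB Λ K2 + ε := by
      rw [add_add_add_comm, add_halves]

end RieszB

noncomputable section PartA

variable {X : Type*} [TopologicalSpace X] [CompactSpace X] [T2Space X]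

/-- Krylov–Bogolyubov-type construction: from a point whose orbit visits `A` along a set of
positive density, produce an invariant regular probability measure giving `A` positive mass. -/
theorem exists_invariant_measure_of_orbit [MeasurableSpace X] [BorelSpace X]
    (T : X → X) (hT : Continuous T) (hTsurj : Function.Surjective T)
    (A : Set X) (hA : IsClosed A) (x : X) (J : Set ℕ)
    (hJx : ∀ s ∈ J, T^[s] x ∈ A) (d : ℝ) (hd : 0 < d)
    (hdlim : Tendsto (fun n : ℕ => (Nat.card (J ∩ Set.Iic n : Set ℕ) : ℝ) / (n + 1))
      atTop (𝓝 d)) :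
    ∃ μ : Measure X, IsProbabilityMeasure μ ∧ μ.Regular ∧
      (∀ B : Set X, MeasurableSet B → μ (T ⁻¹' B) = μ B) ∧ 0 < μ A := by
  classical
  set 𝒰 : Ultrafilter ℕ := Ultrafilter.of atTop with h𝒰
  have h𝒰le : (𝒰 : Filter ℕ) ≤ atTop := Ultrafilter.of_le _
  set avg : (X →ᵇ ℝ≥0) → ℕ → ℝ :=
    fun f n => (∑ i ∈ Finset.range (n+1), ((f (T^[i] x) : ℝ))) / (n+1) with havgdef
  have havg0 : ∀ f n, 0 ≤ avg f n := by
    intro f n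
    apply div_nonneg _ (by positivity)
    exact Finset.sum_nonneg fun i _ => (f _).2
  have hbound : ∀ f : X →ᵇ ℝ≥0, ∃ C : ℝ, 0 ≤ C ∧ ∀ y, (f y : ℝ) ≤ C := by
    intro f
    obtain ⟨z, _, hz⟩ := isCompact_univ.exists_isMaxOn ⟨x, mem_univ x⟩
      (Continuous.continuousOn (f := fun y => (f y : ℝ)) (NNReal.continuous_coe.comp f.continuous))
    exact ⟨f z, (f z).2, fun y => hz (mem_univ y)⟩
  have havgle : ∀ (f : X →ᵇ ℝ≥0) (C : ℝ), (∀ y, (f y : ℝ) ≤ C) → ∀ n, avg f n ≤ C := by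
    intro f C hC n
    simp only [havgdef]
    rw [div_le_iff₀ (by positivity)]
    calc (∑ i ∈ Finset.range (n+1), ((f (T^[i] x) : ℝ)))
        ≤ ∑ _i ∈ Finset.range (n+1), C := Finset.sum_le_sum fun i _ => hC _
      _ = (n+1) * C := by simp [mul_comm]
      _ = C * ((n:ℝ)+1) := by push_cast; ring
  have hlim : ∀ f : X →ᵇ ℝ≥0, ∃ r : ℝ, 0 ≤ r ∧ Tendsto (avg f) 𝒰 (𝓝 r) := by
    intro f
    obtain ⟨C, hC0, hC⟩ := hbound f
    have hmem : ∀ n, avg f n ∈ Icc (0:ℝ) C := fun n => ⟨havg0 f n, havgle f C hC n⟩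
    have hle : (𝒰.map (avg f) : Filter ℝ) ≤ 𝓟 (Icc 0 C) :=
      le_principal_iff.mpr (mem_map.mpr (univ_mem' hmem))
    obtain ⟨r, hrmem, hrle⟩ :=
      (isCompact_Icc (a := (0:ℝ)) (b := C)).ultrafilter_le_nhds (𝒰.map (avg f)) hle
    exact ⟨r, hrmem.1, hrle⟩
  choose ΛR hΛ0 hΛten using hlim
  haveI : (𝒰 : Filter ℕ).NeBot := 𝒰.neBot
  have huniq : ∀ (f : X →ᵇ ℝ≥0) (r : ℝ), Tendsto (avg f) 𝒰 (𝓝 r) → ΛR f = r :=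
    fun f r h => tendsto_nhds_unique (hΛten f) h
  have hmono : ∀ f g : X →ᵇ ℝ≥0, (∀ y, f y ≤ g y) → ΛR f ≤ ΛR g := by
    intro f g h
    refine le_of_tendsto_of_tendsto' (hΛten f) (hΛten g) fun n => ?_
    simp only [havgdef]
    gcongr with i _
    exact h _
  have hone : ΛR 1 = 1 := by
    apply huniq
    have h1 : ∀ n, avg 1 n = 1 := by
      intro n
      simp only [havgdef]
      rw [div_eq_one_iff_eq (by positivity)]
      simp
    have h2 : avg 1 = fun _ : ℕ => (1:ℝ) := funext h1
    rw [h2]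
    exact tendsto_const_nhds
  set Tc : C(X, X) := ⟨T, hT⟩ with hTc
  have hcompT : ∀ f : X →ᵇ ℝ≥0, ΛR (f.compContinuous Tc) = ΛR f := by
    intro f
    obtain ⟨C, hC0, hC⟩ := hbound f
    apply huniq
    have hdiff : Tendsto (fun n => avg (f.compContinuous Tc) n - avg f n) atTop (𝓝 0) := by
      have hbnd : ∀ n : ℕ, |avg (f.compContinuous Tc) n - avg f n| ≤ 2 * C / ((n:ℝ)+1) := by
        intro n
        have hterm : ∀ i : ℕ, ((f.compContinuous Tc) (T^[i] x) : ℝ) = (f (T^[i+1] x) : ℝ) := by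
          intro i
          rw [Function.iterate_succ_apply']
          rfl
        have hsum : (∑ i ∈ Finset.range (n+1), ((f.compContinuous Tc) (T^[i] x) : ℝ))
            = (∑ i ∈ Finset.range (n+1), ((f (T^[i] x)) : ℝ))
              + (f (T^[n+1] x) : ℝ) - (f x : ℝ) := by
          rw [Finset.sum_congr rfl fun i _ => hterm i]
          have h2 : (∑ i ∈ Finset.range (n+2), ((f (T^[i] x)) : ℝ))
              = (∑ i ∈ Finset.range (n+1), ((f (T^[i+1] x)) : ℝ)) + (f x : ℝ) := by
            rw [Finset.sum_range_succ']
            simp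
          have h3 : (∑ i ∈ Finset.range (n+2), ((f (T^[i] x)) : ℝ))
              = (∑ i ∈ Finset.range (n+1), ((f (T^[i] x)) : ℝ)) + (f (T^[n+1] x) : ℝ) :=
            Finset.sum_range_succ _ _
          linarith
        have hval : avg (f.compContinuous Tc) n - avg f n
            = ((f (T^[n+1] x) : ℝ) - (f x : ℝ)) / ((n:ℝ)+1) := by
          simp only [havgdef]
          rw [hsum]
          push_cast
          ring
        rw [hval, abs_div, abs_of_pos (show (0:ℝ) < (n:ℝ)+1 by positivity)]
        gcongr
        have h4 := hC (T^[n+1] x)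
        have h5 := hC x
        have h6 : (0:ℝ) ≤ (f x : ℝ) := (f x).2
        have h7 : (0:ℝ) ≤ (f (T^[n+1] x) : ℝ) := (f (T^[n+1] x)).2
        rw [abs_le]
        constructor <;> linarith
      have hto : Tendsto (fun n : ℕ => 2 * C / ((n:ℝ)+1)) atTop (𝓝 0) := by
        have h2 := (_root_.tendsto_const_div_atTop_nhds_zero_nat (2*C)).comp (tendsto_add_atTop_nat 1)
        have heq : ((fun n : ℕ => 2*C / (n:ℝ)) ∘ fun n => n + 1)
            = fun n : ℕ => 2*C / ((n:ℝ)+1) := by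
          funext n
          simp only [Function.comp_apply]
          push_cast
          ring
        rw [heq] at h2
        exact h2
      exact squeeze_zero_norm hbnd hto
    have heq : avg (f.compContinuous Tc) = fun n => avg f n
        + (avg (f.compContinuous Tc) n - avg f n) := by
      funext n; ring
    rw [heq]
    have := (hΛten f).add (hdiff.mono_left h𝒰le)
    simpa using this
  have hAbd : ∀ f : X →ᵇ ℝ≥0, (∀ y ∈ A, 1 ≤ f y) → d ≤ ΛR f := by
    intro f hf1
    refine le_of_tendsto_of_tendsto' (hdlim.mono_left h𝒰le) (hΛten f) fun n => ?_
    have hcard : (J ∩ Set.Iic n : Set ℕ) = ↑((Finset.range (n+1)).filter (· ∈ J)) := by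
      ext i
      simp [Nat.lt_succ_iff, and_comm]
    have hcard2 : (Nat.card (J ∩ Set.Iic n : Set ℕ) : ℝ)
        = ((Finset.range (n+1)).filter (· ∈ J)).card := by
      rw [Nat.card_coe_set_eq, hcard, Set.ncard_coe_finset]
    simp only [havgdef]
    rw [hcard2]
    gcongr
    calc (((Finset.range (n+1)).filter (· ∈ J)).card : ℝ)
        = ∑ _i ∈ (Finset.range (n+1)).filter (· ∈ J), (1:ℝ) := by simp
      _ ≤ ∑ i ∈ (Finset.range (n+1)).filter (· ∈ J), ((f (T^[i] x)) : ℝ) := by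
          refine Finset.sum_le_sum fun i hi => ?_
          have hiJ : i ∈ J := (Finset.mem_filter.mp hi).2
          exact_mod_cast hf1 _ (hJx i hiJ)
      _ ≤ ∑ i ∈ Finset.range (n+1), ((f (T^[i] x)) : ℝ) := by
          refine Finset.sum_le_sum_of_subset_of_nonneg (Finset.filter_subset _ _)
            fun i _ _ => (f _).2
  -- Package as a linear functional on nonnegative bounded continuous functions
  set Λ : (X →ᵇ ℝ≥0) →ₗ[ℝ≥0] ℝ≥0 :=
    { toFun := fun f => ⟨ΛR f, hΛ0 f⟩
      map_add' := by
        intro f g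
        ext
        show ΛR (f + g) = ΛR f + ΛR g
        apply huniq
        have heq : avg (f + g) = fun n => avg f n + avg g n := by
          funext n
          simp only [havgdef]
          simp only [BoundedContinuousFunction.coe_add, Pi.add_apply, NNReal.coe_add]
          rw [Finset.sum_add_distrib, add_div]
        rw [heq]
        exact (hΛten f).add (hΛten g)
      map_smul' := by
        intro c f
        ext
        show ΛR (c • f) = (c : ℝ) * ΛR f
        apply huniq
        have heq : avg (c • f) = fun n => (c:ℝ) * avg f n := by
          funext n
          simp only [havgdef]
          simp only [BoundedContinuousFunction.coe_smul, Pi.smul_apply, smul_eq_mul,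
            NNReal.coe_mul]
          rw [← Finset.mul_sum, mul_div_assoc]
        rw [heq]
        exact (hΛten f).const_mul _ } with hΛdef
  have hΛcoe : ∀ f : X →ᵇ ℝ≥0, (Λ f : ℝ) = ΛR f := fun f => rfl
  have hmonoN : ∀ f g : X →ᵇ ℝ≥0, (∀ y, f y ≤ g y) → Λ f ≤ Λ g := by
    intro f g h
    rw [← NNReal.coe_le_coe, hΛcoe, hΛcoe]
    exact hmono f g h
  have hcompTN : ∀ f : X →ᵇ ℝ≥0, Λ (f.compContinuous Tc) = Λ f := by
    intro f
    ext
    exact hcompT f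
  -- the content
  have hdisjoint : ∀ K₁ K₂ : Compacts X, Disjoint (K₁ : Set X) K₂ → IsClosed (K₁ : Set X) →
      IsClosed (K₂ : Set X) → rieszContentAuxB Λ (K₁ ⊔ K₂)
        = rieszContentAuxB Λ K₁ + rieszContentAuxB Λ K₂ := by
    intro K₁ K₂ hdisj hc₁ hc₂
    refine le_antisymm (rieszContentAuxB_sup_le Λ K₁ K₂) ?_
    refine le_csInf (rieszContentAuxB_image_nonempty Λ _) ?_
    rintro b ⟨f, hf, rfl⟩
    obtain ⟨u, hu0, hu1, hu01⟩ := exists_continuous_zero_one_of_isClosed hc₂ hc₁ hdisj.symm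
    set p₁ : X →ᵇ ℝ≥0 := mkOfCompact ⟨fun y => f y * Real.toNNReal (u y),
      f.continuous.mul (continuous_real_toNNReal.comp u.continuous)⟩ with hp₁
    set p₂ : X →ᵇ ℝ≥0 := mkOfCompact ⟨fun y => f y * Real.toNNReal (1 - u y),
      f.continuous.mul (continuous_real_toNNReal.comp (continuous_const.sub u.continuous))⟩
      with hp₂
    have hsump : p₁ + p₂ = f := by
      ext y
      have hval : f y * Real.toNNReal (u y) + f y * Real.toNNReal (1 - u y) = f y := by
        rw [← mul_add, ← Real.toNNReal_add (hu01 y).1 (by linarith [(hu01 y).2])]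
        simp
      have h2 : (p₁ + p₂) y = f y := by
        rw [BoundedContinuousFunction.add_apply]
        exact hval
      exact_mod_cast h2
    have h1 : ∀ y ∈ K₁, 1 ≤ p₁ y := by
      intro y hy
      show 1 ≤ f y * Real.toNNReal (u y)
      rw [hu1 hy]
      simp only [Pi.one_apply, Real.toNNReal_one, mul_one]
      exact hf y (Or.inl hy)
    have h2 : ∀ y ∈ K₂, 1 ≤ p₂ y := by
      intro y hy
      show 1 ≤ f y * Real.toNNReal (1 - u y)
      rw [hu0 hy]
      simp only [Pi.zero_apply, sub_zero, Real.toNNReal_one, mul_one]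
      exact hf y (Or.inr hy)
    calc rieszContentAuxB Λ K₁ + rieszContentAuxB Λ K₂ ≤ Λ p₁ + Λ p₂ :=
          add_le_add (rieszContentAuxB_le Λ h1) (rieszContentAuxB_le Λ h2)
      _ = Λ (p₁ + p₂) := (map_add Λ p₁ p₂).symm
      _ = Λ f := by rw [hsump]
  set ct : Content X :=
    { toFun := fun K => rieszContentAuxB Λ K
      mono' := fun K₁ K₂ h => rieszContentAuxB_mono Λ h
      sup_disjoint' := hdisjoint
      sup_le' := fun K₁ K₂ => rieszContentAuxB_sup_le Λ K₁ K₂ } with hct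
  -- image and preimage estimates
  have hlemA : ∀ K : Compacts X, rieszContentAuxB Λ K ≤ rieszContentAuxB Λ (K.map T hT) := by
    intro K
    refine le_csInf (rieszContentAuxB_image_nonempty Λ _) ?_
    rintro b ⟨f, hf, rfl⟩
    have h1 : ∀ y ∈ K, 1 ≤ (f.compContinuous Tc) y := by
      intro y hy
      exact hf (T y) (mem_image_of_mem T hy)
    calc rieszContentAuxB Λ K ≤ Λ (f.compContinuous Tc) := rieszContentAuxB_le Λ h1
      _ = Λ f := hcompTN f
  have hlemB : ∀ K : Compacts X, rieszContentAuxB Λ K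
      ≤ rieszContentAuxB Λ ⟨T ⁻¹' K, (K.isCompact.isClosed.preimage hT).isCompact⟩ := by
    intro K
    refine le_csInf (rieszContentAuxB_image_nonempty Λ _) ?_
    rintro b ⟨f, hf, rfl⟩
    rw [← NNReal.coe_le_coe, hΛcoe]
    suffices hlem : ∀ ε : ℝ, 0 < ε → ε < 1 →
        (1 - ε) * (rieszContentAuxB Λ K : ℝ) ≤ ΛR f by
      by_contra hlt
      push_neg at hlt
      set a : ℝ := (rieszContentAuxB Λ K : ℝ) with ha
      set b : ℝ := ΛR f with hb
      have hb0 : 0 ≤ b := hΛ0 f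
      have ha0 : 0 < a := lt_of_le_of_lt hb0 hlt
      have hε1 : (a - b) / (2 * a) < 1 := by
        rw [div_lt_one (by positivity)]
        linarith
      have hε0 : 0 < (a - b) / (2 * a) := div_pos (by linarith) (by positivity)
      have := hlem _ hε0 hε1
      have heq : (1 - (a - b)/(2*a)) * a = (a + b) / 2 := by
        field_simp
        ring
      rw [heq] at this
      linarith
    intro ε hε0 hε1
    set εn : ℝ≥0 := ⟨ε, hε0.le⟩ with hεn
    have hεn1 : εn ≤ 1 := by
      rw [← NNReal.coe_le_coe]
      exact_mod_cast hε1.le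
    set V : Set X := {y | 1 - ε < ((f y : ℝ))} with hV
    have hVopen : IsOpen V := isOpen_lt continuous_const (NNReal.continuous_coe.comp f.continuous)
    have hTV : T ⁻¹' (K : Set X) ⊆ V := by
      intro y hy
      have h1 : (1:ℝ≥0) ≤ f y := hf y hy
      have h2 : (1:ℝ) ≤ (f y : ℝ) := by exact_mod_cast h1
      show 1 - ε < ((f y) : ℝ)
      linarith
    set C : Set X := T '' Vᶜ with hC
    have hCcomp : IsCompact C := (hVopen.isClosed_compl.isCompact).image hT
    have hdisjKC : Disjoint (K : Set X) C := by
      rw [Set.disjoint_left]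
      rintro y hyK ⟨z, hz, rfl⟩
      exact hz (hTV hyK)
    obtain ⟨u, hu0, hu1, hu01⟩ :=
      exists_continuous_zero_one_of_isClosed hCcomp.isClosed K.isCompact.isClosed hdisjKC.symm
    set g : X →ᵇ ℝ≥0 := mkOfCompact ⟨fun y => Real.toNNReal (u y),
      continuous_real_toNNReal.comp u.continuous⟩ with hg
    have hgK : ∀ y ∈ K, 1 ≤ g y := by
      intro y hy
      show (1:ℝ≥0) ≤ Real.toNNReal (u y)
      rw [hu1 hy]
      simp
    have hg1 : ∀ y, g y ≤ 1 := by
      intro y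
      show Real.toNNReal (u y) ≤ 1
      rw [show (1:ℝ≥0) = Real.toNNReal 1 by simp]
      exact Real.toNNReal_mono (hu01 y).2
    have hpoint : ∀ z, ((1 - εn) • (g.compContinuous Tc)) z ≤ f z := by
      intro z
      by_cases hz : z ∈ V
      · have hle : ((1 - εn) • (g.compContinuous Tc)) z ≤ 1 - εn := by
          show (1 - εn) • (g (T z)) ≤ 1 - εn
          rw [smul_eq_mul]
          calc (1 - εn) * g (T z) ≤ (1 - εn) * 1 := mul_le_mul_right (hg1 (T z)) _
            _ = 1 - εn := mul_one _
        refine le_trans hle ?_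
        rw [← NNReal.coe_le_coe, NNReal.coe_sub hεn1]
        have : (1:ℝ) - ε < (f z : ℝ) := hz
        exact_mod_cast this.le
      · have : T z ∈ C := mem_image_of_mem T hz
        have hgz : g (T z) = 0 := by
          show Real.toNNReal (u (T z)) = 0
          rw [hu0 this]
          simp
        show (1 - εn) • (g (T z)) ≤ f z
        rw [hgz]
        simp
    have hchain : (1 - εn) * rieszContentAuxB Λ K ≤ Λ f := by
      calc (1 - εn) * rieszContentAuxB Λ K ≤ (1 - εn) * Λ g :=
            mul_le_mul_right (rieszContentAuxB_le Λ hgK) _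
        _ = (1 - εn) * Λ (g.compContinuous Tc) := by rw [hcompTN g]
        _ = Λ ((1 - εn) • (g.compContinuous Tc)) := (map_smul Λ (1 - εn) _).symm
        _ ≤ Λ f := hmonoN _ _ hpoint
    have hcoe := NNReal.coe_le_coe.mpr hchain
    rw [NNReal.coe_mul, NNReal.coe_sub hεn1, hΛcoe] at hcoe
    exact_mod_cast hcoe
  -- the measure
  set μ : Measure X := ct.measure with hμ
  have hreg : μ.Regular := ct.regular
  have hμopen : ∀ (U : Set X) (hU : IsOpen U), μ U = ct.innerContent ⟨U, hU⟩ := by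
    intro U hU
    rw [hμ, Content.measure_apply ct hU.measurableSet, ct.outerMeasure_of_isOpen U hU]
  have hctuniv : rieszContentAuxB Λ ⟨univ, isCompact_univ⟩ = 1 := by
    apply le_antisymm
    · have h1 : ∀ y ∈ (⟨univ, isCompact_univ⟩ : Compacts X), (1:ℝ≥0) ≤ (1 : X →ᵇ ℝ≥0) y :=
        fun y _ => le_refl _
      have := rieszContentAuxB_le Λ h1
      have hone' : Λ (1 : X →ᵇ ℝ≥0) = 1 := by
        ext
        exact hone
      rwa [hone'] at this
    · refine le_csInf (rieszContentAuxB_image_nonempty Λ _) ?_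
      rintro b ⟨f, hf, rfl⟩
      have h1 : ∀ y, (1 : X →ᵇ ℝ≥0) y ≤ f y := fun y => hf y (mem_univ y)
      have := hmonoN _ _ h1
      have hone' : Λ (1 : X →ᵇ ℝ≥0) = 1 := by
        ext
        exact hone
      rwa [hone'] at this
  have htotal : μ univ = 1 := by
    rw [hμopen univ isOpen_univ,
      ct.innerContent_of_isCompact isCompact_univ isOpen_univ]
    show ((ct.toFun ⟨univ, isCompact_univ⟩ : ℝ≥0) : ℝ≥0∞) = 1
    have h5 : ct.toFun ⟨univ, isCompact_univ⟩ = 1 := hctuniv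
    rw [h5]
    simp
  have hprob : IsProbabilityMeasure μ := ⟨htotal⟩
  have hposA : 0 < μ A := by
    have hAc : IsCompact A := hA.isCompact
    have h1 : d.toNNReal ≤ rieszContentAuxB Λ ⟨A, hAc⟩ := by
      refine le_csInf (rieszContentAuxB_image_nonempty Λ _) ?_
      rintro b ⟨f, hf, rfl⟩
      rw [← NNReal.coe_le_coe, hΛcoe, Real.coe_toNNReal d hd.le]
      exact hAbd f hf
    have h2 : (↑(ct.toFun ⟨A, hAc⟩) : ℝ≥0∞) ≤ ct.outerMeasure A :=
      ct.le_outerMeasure_compacts _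
    have h3 : μ A = ct.outerMeasure A := Content.measure_apply ct hA.measurableSet
    have h4 : (↑(d.toNNReal) : ℝ≥0∞) ≤ μ A := by
      rw [h3]
      exact le_trans (ENNReal.coe_le_coe.mpr h1) h2
    refine lt_of_lt_of_le ?_ h4
    exact_mod_cast Real.toNNReal_pos.mpr hd
  have hinner : ∀ (U : Set X) (hU : IsOpen U), μ (T ⁻¹' U) = μ U := by
    intro U hU
    rw [hμopen _ (hU.preimage hT), hμopen U hU]
    apply le_antisymm
    · rw [Content.innerContent]
      refine iSup₂_le fun K hK => ?_
      refine le_trans ?_ (ct.le_innerContent (K.map T hT) ⟨U, hU⟩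
        (by show T '' (K : Set X) ⊆ U; exact image_subset_iff.mpr hK))
      exact ENNReal.coe_le_coe.mpr (hlemA K)
    · rw [Content.innerContent]
      refine iSup₂_le fun K hK => ?_
      refine le_trans ?_ (ct.le_innerContent
        ⟨T ⁻¹' (K : Set X), (K.isCompact.isClosed.preimage hT).isCompact⟩
        ⟨T ⁻¹' U, hU.preimage hT⟩
        (by show T ⁻¹' (K : Set X) ⊆ T ⁻¹' U; exact preimage_mono hK))
      exact ENNReal.coe_le_coe.mpr (hlemB K)
  have hmap : Measure.map T μ = μ := by
    haveI := hprob
    haveI : IsProbabilityMeasure (Measure.map T μ) :=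
      Measure.isProbabilityMeasure_map hT.measurable.aemeasurable
    refine ext_of_generate_finite {s : Set X | IsOpen s} ?_ isPiSystem_isOpen ?_ ?_
    · exact BorelSpace.measurable_eq (α := X)
    · intro s hs
      rw [Measure.map_apply hT.measurable hs.measurableSet]
      exact hinner s hs
    · simp [measure_univ]
  refine ⟨μ, hprob, hreg, ?_, hposA⟩
  intro B hB
  rw [← Measure.map_apply hT.measurable hB, hmap]

end PartA

/-- Lemma `L-closed positive density`. -/
theorem stmt6 {X : Type*} [TopologicalSpace X] [CompactSpace X] [T2Space X]
    [MeasurableSpace X] [BorelSpace X]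
    (T : X → X) (hT : Continuous T) (hTsurj : Function.Surjective T)
    (A : Set X) (hA : IsClosed A) :
    HasIndepSetPosDensity T (fun _ : Fin 1 => A) ↔
      ∃ μ : MeasureTheory.Measure X, MeasureTheory.IsProbabilityMeasure μ ∧ μ.Regular ∧
        (∀ B : Set X, MeasurableSet B → μ (T ⁻¹' B) = μ B) ∧ 0 < μ A := by
  classical
  constructor
  · rintro ⟨J, hind, d, hd0, hdlim⟩
    have hd : 0 < d := by
      have hge : 0 ≤ d := by
        refine ge_of_tendsto hdlim (Eventually.of_forall fun n => ?_)
        positivity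
      exact lt_of_le_of_ne hge (Ne.symm hd0)
    have hJne : J.Nonempty := by
      by_contra hcon
      rw [Set.not_nonempty_iff_eq_empty] at hcon
      subst hcon
      have hzero : (fun n : ℕ => (Nat.card ((∅ : Set ℕ) ∩ Set.Iic n : Set ℕ) : ℝ) / (n + 1))
          = fun _ : ℕ => (0:ℝ) := by
        funext n
        simp
      rw [hzero] at hdlim
      exact hd0 (tendsto_nhds_unique hdlim tendsto_const_nhds)
    obtain ⟨s₀, hs₀⟩ := hJne
    have hinter : (⋂ s ∈ J, T^[s] ⁻¹' A).Nonempty := by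
      by_contra hcon
      rw [Set.not_nonempty_iff_eq_empty] at hcon
      set t : J → Set X := fun s => T^[(s : ℕ)] ⁻¹' A with ht
      have htc : ∀ s : J, IsClosed (t s) := fun s => hA.preimage (hT.iterate _)
      have hempty : (univ : Set X) ∩ ⋂ s : J, t s = ∅ := by
        rw [univ_inter, ht]
        rw [show (⋂ s : J, T^[(s : ℕ)] ⁻¹' A) = ⋂ s ∈ J, T^[s] ⁻¹' A from
          iInter_coe_set J (fun s => T^[s] ⁻¹' A)]
        exact hcon
      obtain ⟨u, hu⟩ := isCompact_univ.elim_finite_subfamily_closed t htc hempty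
      set I : Finset ℕ := insert s₀ (u.image Subtype.val) with hI
      have hIJ : ↑I ⊆ J := by
        intro s hs
        rw [hI] at hs
        simp only [Finset.coe_insert, Set.mem_insert_iff, Finset.coe_image,
          Set.mem_image] at hs
        rcases hs with rfl | ⟨⟨s', hs'⟩, _, rfl⟩
        · exact hs₀
        · exact hs'
      obtain ⟨y, hy⟩ := hind I (Finset.insert_nonempty _ _) hIJ (fun _ => 0)
      have hy' : y ∈ (univ : Set X) ∩ ⋂ i ∈ u, t i := by
        refine ⟨mem_univ y, mem_iInter₂.mpr fun i hi => ?_⟩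
        have hiI : (i : ℕ) ∈ I := by
          rw [hI]
          exact Finset.mem_insert_of_mem (Finset.mem_image_of_mem _ hi)
        exact mem_iInter₂.mp hy (i : ℕ) hiI
      rw [hu] at hy'
      exact hy'
    obtain ⟨x, hx⟩ := hinter
    have hJx : ∀ s ∈ J, T^[s] x ∈ A := fun s hs => mem_iInter₂.mp hx s hs
    exact exists_invariant_measure_of_orbit T hT hTsurj A hA x J hJx d hd hdlim
  · rintro ⟨μ, hprob, hreg, hinv, hposA⟩
    haveI := hprob
    have hmp : MeasureTheory.MeasurePreserving T μ μ := by
      refine ⟨hT.measurable, ?_⟩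
      ext B hB
      rw [MeasureTheory.Measure.map_apply hT.measurable hB]
      exact hinv B hB
    set f : X → ℝ := A.indicator 1 with hfdef
    have hf : Measurable f := measurable_one.indicator hA.measurableSet
    have h0 : ∀ x, 0 ≤ f x := fun x => Set.indicator_nonneg (fun _ _ => zero_le_one) x
    have h1 : ∀ x, f x ≤ 1 := by
      intro x
      by_cases hx : x ∈ A <;> simp [hfdef, Set.indicator_apply, hx]
    have hpos : 0 < ∫ x, f x ∂μ := by
      rw [hfdef, MeasureTheory.integral_indicator_one hA.measurableSet]
      exact ENNReal.toReal_pos hposA.ne' (MeasureTheory.measure_ne_top μ A)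
    obtain ⟨x, d, hd, htend⟩ := exists_tendsto_birkhoffAvg_pos hmp hf h0 h1 hpos
    set J : Set ℕ := {n : ℕ | T^[n] x ∈ A} with hJ
    refine ⟨J, ?_, d, hd.ne', ?_⟩
    · intro I hIne hIJ σ
      exact ⟨x, mem_iInter₂.mpr fun s hs => hIJ hs⟩
    · have hcard : ∀ n : ℕ, (Nat.card (J ∩ Set.Iic n : Set ℕ) : ℝ) = bS T f (n+1) x := by
        intro n
        have he : (J ∩ Set.Iic n : Set ℕ)
            = ↑((Finset.range (n+1)).filter (fun i => T^[i] x ∈ A)) := by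
          ext i
          simp [hJ, Nat.lt_succ_iff, and_comm]
        rw [Nat.card_coe_set_eq, he, Set.ncard_coe_finset]
        have hbs : bS T f (n+1) x
            = ∑ i ∈ Finset.range (n+1), if T^[i] x ∈ A then (1:ℝ) else 0 :=
          Finset.sum_congr rfl fun i _ => by simp [hfdef, Set.indicator_apply]
        rw [hbs, Finset.sum_boole]
      have heq : (fun n : ℕ => (Nat.card (J ∩ Set.Iic n : Set ℕ) : ℝ) / (n + 1))
          = fun n : ℕ => bS T f (n+1) x / (n+1) := funext fun n => by rw [hcard n]
      rw [heq]
      exact htend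
end

section
/- Let G be a discrete group satisfying the Følner condition: for every finite set K ⊆ G and every δ > 0 the collection M(K, δ) of nonempty finite subsets F ⊆ G with |{s ∈ F : Ks ⊆ F}| ≥ (1 − δ)|F| is nonempty. Let φ be a real-valued function defined on the finite subsets of G satisfying: (1) 0 ≤ φ(A) < +∞ and φ(∅) = 0; (2) φ(A) ≤ φ(B) whenever A ⊆ B; (3) φ(As) = φ(A) for every finite A ⊆ G and s ∈ G; (4) φ(A ∪ B) ≤ φ(A) + φ(B) whenever A ∩ B = ∅. Then there exists b ∈ ℝ such that for every ε > 0 there exist a finite set K ⊆ G and a δ > 0 such that |φ(F)/|F| − b| < ε for every F ∈ M(K, δ). -/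
/-!
The sets `M(K, δ)` form a filter basis, and `b` is the `liminf` of `φ(F)/|F|` along that filter,
so the lower bound is automatic. The upper bound is the Ornstein–Weiss quasi-tiling argument.
Choose tiles `T₀, …, T_{n-1}` with `φ(T)/|T| < b + η`, each invariant under the inverses of the
earlier ones. A sufficiently invariant set `A` is then `η`-quasi-tiled: going from the most
invariant tile down, a maximal family of `η`-disjoint translates of the current tile inside the
still uncovered part covers a fixed fraction of it, because that part still has small boundary;
after `n` rounds at most `η|A|` points remain. Subadditivity and right invariance then bound
`φ(A)` by `(b + η)|A| / (1 - η)` for the tiles plus `φ{1}` per uncovered point.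
-/

open Finset Filter Pointwise Topology

namespace OrnsteinWeiss

variable {G : Type*}

noncomputable def ratio (φ : Finset G → ℝ) (F : Finset G) : ℝ := φ F / F.card

lemma le_mul_card_of_ratio_lt {φ : Finset G → ℝ} {F : Finset G} {c : ℝ} (hF : F.Nonempty)
    (h : ratio φ F < c) : φ F ≤ c * F.card :=
  ((div_lt_iff₀ (by exact_mod_cast hF.card_pos)).1 h).le

variable [Group G] [DecidableEq G]

def kInterior (K A : Finset G) : Finset G := A.filter fun s => ∀ k ∈ K, k * s ∈ A

def kBoundary (K A : Finset G) : Finset G := A \ kInterior K A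

def IsInvariant (K : Finset G) (δ : ℝ) (F : Finset G) : Prop :=
  F.Nonempty ∧ (1 - δ) * (F.card : ℝ) ≤ (kInterior K F).card

def translate (T : Finset G) (c : G) : Finset G := T.image (· * c)

def tilesUnion {ι : Type*} (T : ι → Finset G) (P : Finset (ι × G)) : Finset G :=
  P.biUnion fun p => translate (T p.1) p.2

lemma card_translate (T : Finset G) (c : G) : (translate T c).card = T.card :=
  card_image_of_injective _ (mul_left_injective c)

lemma mem_translate {T : Finset G} {c x : G} : x ∈ translate T c ↔ ∃ t ∈ T, t * c = x :=
  mem_image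

lemma translate_subset_iff {T A : Finset G} {c : G} :
    translate T c ⊆ A ↔ ∀ t ∈ T, t * c ∈ A :=
  image_subset_iff

lemma card_translate_union (T U : Finset G) (c : G) :
    ((translate T c ∪ U).card : ℝ) = T.card - (translate T c ∩ U).card + U.card := by
  have h : ((translate T c ∪ U).card : ℝ) + (translate T c ∩ U).card = T.card + U.card := by
    exact_mod_cast card_translate T c ▸ card_union_add_card_inter (translate T c) U
  linarith

lemma card_filter_mem_translate_le (T Z : Finset G) (u : G) :
    (Z.filter fun c => u ∈ translate T c).card ≤ T.card := by
  refine (card_le_card fun c hc => ?_).trans (card_image_le (f := (·⁻¹ * u)))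
  obtain ⟨t, ht, rfl⟩ := mem_translate.1 (mem_filter.1 hc).2
  exact mem_image.2 ⟨t, ht, by group⟩

lemma mem_kInterior {K A : Finset G} {s : G} :
    s ∈ kInterior K A ↔ s ∈ A ∧ ∀ k ∈ K, k * s ∈ A :=
  mem_filter

lemma kInterior_subset (K A : Finset G) : kInterior K A ⊆ A := filter_subset _ _

lemma kInterior_anti {K K' : Finset G} (h : K ⊆ K') (A : Finset G) :
    kInterior K' A ⊆ kInterior K A := fun _ hs =>
  mem_kInterior.2 ⟨(mem_kInterior.1 hs).1, fun k hk => (mem_kInterior.1 hs).2 k (h hk)⟩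

lemma card_kBoundary (K A : Finset G) :
    ((kBoundary K A).card : ℝ) = A.card - (kInterior K A).card := by
  rw [kBoundary, card_sdiff_of_subset (kInterior_subset K A),
    Nat.cast_sub (card_le_card (kInterior_subset K A))]

lemma card_mul_sdiff_le (K F : Finset G) :
    ((K * F) \ F).card ≤ K.card * (kBoundary K F).card := by
  refine (card_le_card fun x hx => ?_).trans card_mul_le
  obtain ⟨hxKF, hxF⟩ := mem_sdiff.1 hx
  obtain ⟨k, hk, s, hs, rfl⟩ := mem_mul.1 hxKF
  exact mul_mem_mul hk (mem_sdiff.2 ⟨hs, fun hsK => hxF ((mem_kInterior.1 hsK).2 k hk)⟩)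

lemma kBoundary_sdiff_tilesUnion_subset {ι : Type*} (K A : Finset G) (T : ι → Finset G)
    (P : Finset (ι × G)) :
    kBoundary K (A \ tilesUnion T P) ⊆
      kBoundary K A ∪ P.biUnion fun p => translate ((K⁻¹ * T p.1) \ T p.1) p.2 := by
  intro x hx
  obtain ⟨hxAU, hx_int⟩ := mem_sdiff.1 hx
  obtain ⟨hxA, hxU⟩ := mem_sdiff.1 hxAU
  obtain ⟨k, hk, hkx⟩ : ∃ k ∈ K, k * x ∉ A \ tilesUnion T P := by
    by_contra! h
    exact hx_int (mem_kInterior.2 ⟨hxAU, h⟩)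
  by_cases hkxA : k * x ∈ A
  · obtain ⟨p, hp, hkxp⟩ := mem_biUnion.1 (by_contra fun h => hkx (mem_sdiff.2 ⟨hkxA, h⟩))
    obtain ⟨t, ht, htx⟩ := mem_translate.1 hkxp
    have hx_eq : k⁻¹ * t * p.2 = x := by rw [mul_assoc, htx]; group
    refine mem_union_right _ (mem_biUnion.2 ⟨p, hp, mem_translate.2 ⟨k⁻¹ * t, ?_, hx_eq⟩⟩)
    refine mem_sdiff.2 ⟨mul_mem_mul (inv_mem_inv hk) ht, fun hkt => hxU ?_⟩
    exact mem_biUnion.2 ⟨p, hp, mem_translate.2 ⟨_, hkt, hx_eq⟩⟩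
  · exact mem_union_left _ (mem_sdiff.2 ⟨hxA, fun h => hkxA ((mem_kInterior.1 h).2 k hk)⟩)

lemma card_kBoundary_sdiff_tilesUnion_le {ι : Type*} (K A : Finset G) (T : ι → Finset G)
    (P : Finset (ι × G)) :
    (kBoundary K (A \ tilesUnion T P)).card ≤
      (kBoundary K A).card + ∑ p ∈ P, ((K⁻¹ * T p.1) \ T p.1).card := by
  refine (card_le_card (kBoundary_sdiff_tilesUnion_subset K A T P)).trans
    ((card_union_le _ _).trans (add_le_add_right (card_biUnion_le.trans ?_) _))
  exact (sum_congr rfl fun p _ => card_translate _ _).le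

namespace IsInvariant

variable {K : Finset G} {δ : ℝ} {F : Finset G}

lemma mono {K' : Finset G} {δ' : ℝ} (h : IsInvariant K' δ F) (hK : K ⊆ K') (hδ : δ ≤ δ') :
    IsInvariant K δ' F := by
  refine ⟨h.1, le_trans ?_ (h.2.trans (by exact_mod_cast card_le_card (kInterior_anti hK F)))⟩
  gcongr

lemma card_kBoundary_le (h : IsInvariant K δ F) : ((kBoundary K F).card : ℝ) ≤ δ * F.card := by
  rw [card_kBoundary]
  linarith [h.2]

lemma card_mul_sdiff_le (h : IsInvariant K δ F) :
    (((K * F) \ F).card : ℝ) ≤ K.card * (δ * F.card) :=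
  calc (((K * F) \ F).card : ℝ) ≤ K.card * (kBoundary K F).card := by
        exact_mod_cast OrnsteinWeiss.card_mul_sdiff_le K F
    _ ≤ K.card * (δ * F.card) := by gcongr; exact h.card_kBoundary_le

end IsInvariant

lemma exists_maximal_packing {T : Finset G} (hT : T.Nonempty) (B : Finset G) {ε : ℝ}
    (hε : ε ≤ 1) :
    ∃ C : Finset G, (∀ c ∈ C, translate T c ⊆ B) ∧
      (1 - ε) * (T.card * C.card) ≤ (C.biUnion (translate T)).card ∧
      ∀ c, translate T c ⊆ B → ε * T.card ≤ (translate T c ∩ C.biUnion (translate T)).card := by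
  obtain ⟨t₀, ht₀⟩ := hT
  set pool := (B.image (t₀⁻¹ * ·)).filter fun c => translate T c ⊆ B
  set admissible := pool.powerset.filter fun C : Finset G =>
    (1 - ε) * (T.card * C.card) ≤ (C.biUnion (translate T)).card
  obtain ⟨C, hC, hmax⟩ := admissible.exists_max_image (fun C => (C.biUnion (translate T)).card)
    ⟨∅, by simp [admissible]⟩
  obtain ⟨hC_pool, hC_card⟩ := mem_filter.1 hC
  refine ⟨C, fun c hc => (mem_filter.1 (mem_powerset.1 hC_pool hc)).2, hC_card, fun c hc => ?_⟩
  by_contra! hlt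
  set U := C.biUnion (translate T)
  have hc_pool : c ∈ pool :=
    mem_filter.2 ⟨mem_image.2 ⟨t₀ * c, translate_subset_iff.1 hc t₀ ht₀, by group⟩, hc⟩
  have hU' : ((insert c C).biUnion (translate T)).card = (translate T c ∪ U).card := by
    rw [biUnion_insert]
  -- adding the translate `T c`, which meets `U` in fewer than `ε|T|` points, keeps `ε`-disjointness
  have h_adm : insert c C ∈ admissible := by
    refine mem_filter.2 ⟨mem_powerset.2 (insert_subset hc_pool (mem_powerset.1 hC_pool)), ?_⟩
    have h_ins : ((insert c C).card : ℝ) ≤ C.card + 1 := by exact_mod_cast card_insert_le c C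
    have := mul_le_mul_of_nonneg_left h_ins
      (mul_nonneg (sub_nonneg.2 hε) (Nat.cast_nonneg T.card : (0 : ℝ) ≤ T.card))
    rw [hU', card_translate_union]
    nlinarith
  have hle : ((translate T c ∪ U).card : ℝ) ≤ U.card := by exact_mod_cast hU' ▸ hmax _ h_adm
  rw [card_translate_union] at hle
  nlinarith

/-- Double count the incidences `u ∈ T c` with `c ∈ kInterior T B` and `u` in the union. -/
lemma exists_packing {T : Finset G} (hT : T.Nonempty) (B : Finset G) {ε : ℝ} (hε : ε ≤ 1) :
    ∃ C : Finset G, (∀ c ∈ C, translate T c ⊆ B) ∧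
      (1 - ε) * (T.card * C.card) ≤ (C.biUnion (translate T)).card ∧
      ε * (kInterior T B).card ≤ (C.biUnion (translate T)).card := by
  obtain ⟨C, hC_sub, hC_card, hC_max⟩ := exists_maximal_packing hT B hε
  refine ⟨C, hC_sub, hC_card, ?_⟩
  have hT_pos : (0 : ℝ) < T.card := by exact_mod_cast hT.card_pos
  have key := card_nsmul_le_card_nsmul (R := ℝ) (s := kInterior T B)
    (t := C.biUnion (translate T)) (fun c u => u ∈ translate T c) (m := ε * T.card)
    (n := T.card) (fun c hc => ?_)
    (fun u _ => by exact_mod_cast card_filter_mem_translate_le T _ u)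
  · rw [nsmul_eq_mul, nsmul_eq_mul] at key
    nlinarith
  · rw [bipartiteAbove, filter_mem_eq_inter, inter_comm]
    exact hC_max c (translate_subset_iff.2 (mem_kInterior.1 hc).2)

section Packing

variable {ι : Type*} {T : ι → Finset G} {ε : ℝ} {A : Finset G} {P : Finset (ι × G)}

/-- A pair `(i, c) ∈ P` stands for the right translate `T i c`. -/
def IsPacking (T : ι → Finset G) (ε : ℝ) (A : Finset G) (P : Finset (ι × G)) : Prop :=
  (∀ p ∈ P, translate (T p.1) p.2 ⊆ A) ∧
    (1 - ε) * ∑ p ∈ P, ((T p.1).card : ℝ) ≤ (tilesUnion T P).card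

lemma IsPacking.tilesUnion_subset (hP : IsPacking T ε A P) : tilesUnion T P ⊆ A :=
  biUnion_subset.2 hP.1

lemma IsPacking.sum_card_le (hP : IsPacking T ε A P) :
    (1 - ε) * ∑ p ∈ P, ((T p.1).card : ℝ) ≤ A.card :=
  hP.2.trans (by exact_mod_cast card_le_card hP.tilesUnion_subset)

lemma IsPacking.union [DecidableEq ι] {Q : Finset (ι × G)} (hP : IsPacking T ε A P)
    (hQ : IsPacking T ε (A \ tilesUnion T P) Q) (hPQ : Disjoint P Q) :
    IsPacking T ε A (P ∪ Q) := by
  have hdisj : Disjoint (tilesUnion T P) (tilesUnion T Q) :=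
    disjoint_of_subset_right hQ.tilesUnion_subset disjoint_sdiff
  refine ⟨fun p hp => ?_, ?_⟩
  · rcases mem_union.1 hp with hp | hp
    exacts [hP.1 p hp, (hQ.1 p hp).trans sdiff_subset]
  · rw [sum_union hPQ, show tilesUnion T (P ∪ Q) = tilesUnion T P ∪ tilesUnion T Q from
      union_biUnion, card_union_of_disjoint hdisj]
    push_cast
    linarith [hP.2, hQ.2]

lemma exists_isPacking_of_tile [DecidableEq ι] {k : ι} (hT : (T k).Nonempty) (B : Finset G)
    (hε : ε ≤ 1) :
    ∃ Q : Finset (ι × G), (∀ q ∈ Q, q.1 = k) ∧ IsPacking T ε B Q ∧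
      ε * (kInterior (T k) B).card ≤ (tilesUnion T Q).card := by
  obtain ⟨C, hC_sub, hC_card, hC_int⟩ := exists_packing hT B hε
  have hU : tilesUnion T (C.image (k, ·)) = C.biUnion (translate (T k)) := image_biUnion
  have hsum : ∑ p ∈ C.image (k, ·), ((T p.1).card : ℝ) = (T k).card * C.card := by
    rw [sum_image fun _ _ _ _ h => (Prod.mk.inj h).2]
    exact (sum_const ((T k).card : ℝ)).trans (by rw [nsmul_eq_mul, mul_comm])
  refine ⟨C.image (k, ·), fun q hq => ?_, ⟨fun q hq => ?_, ?_⟩, hU ▸ hC_int⟩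
  · obtain ⟨c, _, rfl⟩ := mem_image.1 hq
    rfl
  · obtain ⟨c, hc, rfl⟩ := mem_image.1 hq
    exact hC_sub c hc
  · rw [hsum, hU]
    exact hC_card

lemma card_kBoundary_sdiff_tilesUnion_le_mul {S : Finset G} {δ : ℝ}
    (hA : ((kBoundary S A).card : ℝ) ≤ δ * A.card)
    (hPS : ∀ p ∈ P, (((S⁻¹ * T p.1) \ T p.1).card : ℝ) ≤ δ * (T p.1).card) :
    ((kBoundary S (A \ tilesUnion T P)).card : ℝ) ≤
      δ * (A.card + ∑ p ∈ P, ((T p.1).card : ℝ)) := by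
  have h := card_kBoundary_sdiff_tilesUnion_le S A T P
  have hsum := sum_le_sum hPS
  rw [← mul_sum] at hsum
  calc ((kBoundary S (A \ tilesUnion T P)).card : ℝ)
      ≤ (kBoundary S A).card + ∑ p ∈ P, (((S⁻¹ * T p.1) \ T p.1).card : ℝ) := by
        exact_mod_cast h
    _ ≤ _ := by linarith

/-- While the uncovered part `B` of `A` is larger than `ε|A|`, its `T k`-boundary is at most
`3δ|A| ≤ ε|B|/2`, so a maximal packing by translates of `T k` covers an `ε/2`-fraction of `B`. -/
lemma exists_isPacking_remainder_shrink [DecidableEq ι] {δ : ℝ} {k : ι} (hTk : (T k).Nonempty)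
    (hε : 0 < ε) (hε' : ε ≤ 1 / 2) (hδε : δ ≤ ε ^ 2 / 6) (hP : IsPacking T ε A P)
    (hA : ((kBoundary (T k) A).card : ℝ) ≤ δ * A.card)
    (hPk : ∀ p ∈ P, ((((T k)⁻¹ * T p.1) \ T p.1).card : ℝ) ≤ δ * (T p.1).card)
    (hlarge : ε * A.card < (A \ tilesUnion T P).card) :
    ∃ Q : Finset (ι × G), (∀ q ∈ Q, q.1 = k) ∧ IsPacking T ε (A \ tilesUnion T P) Q ∧
      (((A \ tilesUnion T P) \ tilesUnion T Q).card : ℝ) ≤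
        (1 - ε / 2) * (A \ tilesUnion T P).card := by
  set B := A \ tilesUnion T P
  obtain ⟨Q, hQk, hQ, hQ_int⟩ := exists_isPacking_of_tile (T := T) (ε := ε) hTk B (by linarith)
  refine ⟨Q, hQk, hQ, ?_⟩
  set S := ∑ p ∈ P, ((T p.1).card : ℝ)
  have hS : S ≤ 2 * A.card := by
    have hS0 : 0 ≤ S := sum_nonneg fun p _ => Nat.cast_nonneg _
    nlinarith [hP.sum_card_le]
  have hbdry : δ * (A.card + S) ≤ ε / 2 * B.card :=
    calc δ * (A.card + S) ≤ ε ^ 2 / 6 * (3 * A.card) :=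
          mul_le_mul hδε (by linarith) (by positivity) (by positivity)
      _ = ε / 2 * (ε * A.card) := by ring
      _ ≤ ε / 2 * B.card := by gcongr
  have hint : (1 - ε / 2) * B.card ≤ (kInterior (T k) B).card := by
    linarith [card_kBoundary (T k) B, card_kBoundary_sdiff_tilesUnion_le_mul hA hPk]
  rw [card_sdiff_of_subset hQ.tilesUnion_subset, Nat.cast_sub (card_le_card hQ.tilesUnion_subset)]
  nlinarith

end Packing

section QuasiTiling

variable {T : ℕ → Finset G} {n : ℕ} {ε δ : ℝ} {A : Finset G}

/-- The tiles are used from the most invariant one `T (n - 1)` down to `T 0`, so that the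
translates already placed have small boundary with respect to the tile in use. -/
lemma exists_isPacking_remainder_le_pow (hT : ∀ i < n, (T i).Nonempty) (hε : 0 < ε)
    (hε' : ε ≤ 1 / 2) (hδε : δ ≤ ε ^ 2 / 6)
    (hTinv : ∀ i j, i < j → j < n → ((((T i)⁻¹ * T j) \ T j).card : ℝ) ≤ δ * (T j).card)
    (hA : ∀ i < n, ((kBoundary (T i) A).card : ℝ) ≤ δ * A.card) :
    ∀ d ≤ n, ∃ P : Finset (ℕ × G), IsPacking T ε A P ∧ (∀ p ∈ P, n - d ≤ p.1 ∧ p.1 < n) ∧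
      (((A \ tilesUnion T P).card : ℝ) ≤ ε * A.card ∨
        ((A \ tilesUnion T P).card : ℝ) ≤ (1 - ε / 2) ^ d * A.card) := by
  intro d
  induction d with
  | zero =>
    intro _
    exact ⟨∅, ⟨by simp, by simp [tilesUnion]⟩, by simp, Or.inr (by simp [tilesUnion])⟩
  | succ d ih =>
    intro hd
    obtain ⟨P, hP, hP_idx, hP_rem⟩ := ih (by omega)
    by_cases hsmall : ((A \ tilesUnion T P).card : ℝ) ≤ ε * A.card
    · exact ⟨P, hP, fun p hp => ⟨by have := hP_idx p hp; omega, (hP_idx p hp).2⟩, Or.inl hsmall⟩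
    have hk : n - (d + 1) < n := by omega
    obtain ⟨Q, hQk, hQ, hQ_rem⟩ := exists_isPacking_remainder_shrink (hT _ hk) hε hε' hδε hP
      (hA _ hk) (fun p hp => hTinv _ _ (by have := hP_idx p hp; omega) (hP_idx p hp).2)
      (not_le.1 hsmall)
    have hPQ : Disjoint P Q := disjoint_left.2 fun p hp hpQ => by
      have := hP_idx p hp
      have := hQk p hpQ
      omega
    refine ⟨P ∪ Q, hP.union hQ hPQ, fun p hp => ?_, Or.inr ?_⟩
    · rcases mem_union.1 hp with hp | hp
      · have := hP_idx p hp
        omega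
      · rw [hQk p hp]
        omega
    · have hrem : A \ tilesUnion T (P ∪ Q) = (A \ tilesUnion T P) \ tilesUnion T Q := by
        rw [tilesUnion, union_biUnion, sdiff_sdiff_left]
        rfl
      rw [hrem, pow_succ, mul_comm _ (1 - ε / 2), mul_assoc]
      exact hQ_rem.trans (mul_le_mul_of_nonneg_left (hP_rem.resolve_left hsmall) (by linarith))

theorem exists_quasiTiling (hT : ∀ i < n, (T i).Nonempty) (hε : 0 < ε) (hε' : ε ≤ 1 / 2)
    (hδε : δ ≤ ε ^ 2 / 6)
    (hTinv : ∀ i j, i < j → j < n → ((((T i)⁻¹ * T j) \ T j).card : ℝ) ≤ δ * (T j).card)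
    (hA : ∀ i < n, ((kBoundary (T i) A).card : ℝ) ≤ δ * A.card) (hn : (1 - ε / 2) ^ n ≤ ε) :
    ∃ P : Finset (ℕ × G), IsPacking T ε A P ∧ (∀ p ∈ P, p.1 < n) ∧
      ((A \ tilesUnion T P).card : ℝ) ≤ ε * A.card := by
  obtain ⟨P, hP, hP_idx, hP_rem⟩ :=
    exists_isPacking_remainder_le_pow hT hε hε' hδε hTinv hA n le_rfl
  refine ⟨P, hP, fun p hp => (hP_idx p hp).2, hP_rem.elim id fun h => h.trans ?_⟩
  exact mul_le_mul_of_nonneg_right hn (Nat.cast_nonneg _)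

end QuasiTiling

lemma exists_tiles {p : Finset G → Prop}
    (h : ∀ K δ, 0 < δ → ∃ F, IsInvariant K δ F ∧ p F) {δ : ℝ} (hδ : 0 < δ) (n : ℕ) :
    ∃ T : ℕ → Finset G, ∀ j < n, (T j).Nonempty ∧ p (T j) ∧
      ∀ i < j, ((((T i)⁻¹ * T j) \ T j).card : ℝ) ≤ δ * (T j).card := by
  induction n with
  | zero => exact ⟨fun _ => ∅, fun j hj => absurd hj (Nat.not_lt_zero j)⟩
  | succ n ih =>
    obtain ⟨T, hT⟩ := ih
    set K := (range n).biUnion fun i => (T i)⁻¹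
    have hK : (0 : ℝ) < K.card + 1 := by positivity
    obtain ⟨F, hF, hpF⟩ := h K (δ / (K.card + 1)) (by positivity)
    have hF_new : ∀ i < n, ((((T i)⁻¹ * F) \ F).card : ℝ) ≤ δ * F.card := fun i hi =>
      calc ((((T i)⁻¹ * F) \ F).card : ℝ) ≤ ((K * F) \ F).card := by
            gcongr
            exact subset_biUnion_of_mem (fun i => (T i)⁻¹) (mem_range.2 hi)
        _ ≤ K.card * (δ / (K.card + 1) * F.card) := hF.card_mul_sdiff_le
        _ ≤ δ * F.card := by
            rw [← mul_assoc, ← mul_div_assoc, mul_comm (K.card : ℝ) δ, mul_div_assoc]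
            gcongr
            exact mul_le_of_le_one_right hδ.le ((div_le_one hK).2 (by linarith))
    refine ⟨Function.update T n F, fun j hj => ?_⟩
    rcases Nat.lt_succ_iff_lt_or_eq.1 hj with hj | rfl
    · rw [Function.update_of_ne hj.ne]
      refine ⟨(hT j hj).1, (hT j hj).2.1, fun i hi => ?_⟩
      rw [Function.update_of_ne (hi.trans hj).ne]
      exact (hT j hj).2.2 i hi
    · rw [Function.update_self]
      exact ⟨hF.1, hpF, fun i hi => by rw [Function.update_of_ne hi.ne]; exact hF_new i hi⟩

structure IsInvariantSubadditive (φ : Finset G → ℝ) : Prop where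
  map_empty : φ ∅ = 0
  mono : ∀ A B : Finset G, A ⊆ B → φ A ≤ φ B
  map_image_mul_right : ∀ (A : Finset G) (s : G), φ (A.image fun t => t * s) = φ A
  map_union_le_of_disjoint : ∀ A B : Finset G, Disjoint A B → φ (A ∪ B) ≤ φ A + φ B

namespace IsInvariantSubadditive

variable {φ : Finset G → ℝ} (hφ : IsInvariantSubadditive φ)
include hφ

lemma nonneg (A : Finset G) : 0 ≤ φ A :=
  hφ.map_empty ▸ hφ.mono ∅ A (empty_subset A)

lemma map_translate (A : Finset G) (s : G) : φ (translate A s) = φ A :=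
  hφ.map_image_mul_right A s

lemma map_union_le (A B : Finset G) : φ (A ∪ B) ≤ φ A + φ B := by
  rw [← union_sdiff_self_eq_union]
  exact (hφ.map_union_le_of_disjoint A (B \ A) disjoint_sdiff).trans
    (add_le_add le_rfl (hφ.mono _ _ sdiff_subset))

lemma map_biUnion_le {ι : Type*} [DecidableEq ι] (s : Finset ι) (f : ι → Finset G) :
    φ (s.biUnion f) ≤ ∑ i ∈ s, φ (f i) := by
  induction s using Finset.induction with
  | empty => simp [hφ.map_empty]
  | insert i s hi ih =>
    rw [biUnion_insert, sum_insert hi]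
    exact (hφ.map_union_le _ _).trans (add_le_add le_rfl ih)

lemma le_card_mul (F : Finset G) : φ F ≤ F.card * φ {1} :=
  calc φ F = φ (F.biUnion fun x => translate {1} x) := by
        congr 1
        ext x
        simp [translate]
    _ ≤ ∑ x ∈ F, φ (translate {1} x) := hφ.map_biUnion_le F _
    _ = F.card * φ {1} := by
        rw [sum_congr rfl fun x _ => hφ.map_translate {1} x, sum_const, nsmul_eq_mul]

lemma ratio_nonneg (F : Finset G) : 0 ≤ ratio φ F :=
  div_nonneg (hφ.nonneg F) (Nat.cast_nonneg _)

lemma ratio_le (F : Finset G) : ratio φ F ≤ φ {1} :=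
  div_le_of_le_mul₀ (Nat.cast_nonneg _) (hφ.nonneg {1}) (by linarith [hφ.le_card_mul F])

lemma le_of_isPacking {ι : Type*} [DecidableEq ι] {T : ι → Finset G} {ε : ℝ} {A : Finset G}
    {P : Finset (ι × G)} (hP : IsPacking T ε A P) :
    φ A ≤ φ (A \ tilesUnion T P) + ∑ p ∈ P, φ (T p.1) :=
  calc φ A = φ ((A \ tilesUnion T P) ∪ tilesUnion T P) := by
        rw [sdiff_union_of_subset hP.tilesUnion_subset]
    _ ≤ φ (A \ tilesUnion T P) + φ (tilesUnion T P) := hφ.map_union_le _ _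
    _ ≤ φ (A \ tilesUnion T P) + ∑ p ∈ P, φ (T p.1) := by
        gcongr
        exact (hφ.map_biUnion_le P _).trans_eq (sum_congr rfl fun p _ => hφ.map_translate _ _)

lemma le_mul_card_of_quasiTiling {ι : Type*} [DecidableEq ι] {T : ι → Finset G} {c η : ℝ}
    {A : Finset G} {P : Finset (ι × G)} (hc : 0 ≤ c) (hη : 0 ≤ η) (hη' : η ≤ 1 / 2)
    (hP : IsPacking T η A P) (hT : ∀ p ∈ P, φ (T p.1) ≤ c * (T p.1).card)
    (hrem : ((A \ tilesUnion T P).card : ℝ) ≤ η * A.card) :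
    φ A ≤ (c + η * (φ {1} + 2 * c)) * A.card := by
  set S := ∑ p ∈ P, ((T p.1).card : ℝ)
  -- `S ≤ |A| / (1 - η) ≤ (1 + 2η)|A|`
  have hS : S ≤ (1 + 2 * η) * A.card := by
    have hS0 : 0 ≤ S := sum_nonneg fun p _ => Nat.cast_nonneg _
    nlinarith [hP.sum_card_le, mul_nonneg hS0 (mul_nonneg hη (by linarith : 0 ≤ 1 - 2 * η))]
  have h_tiles : ∑ p ∈ P, φ (T p.1) ≤ c * S := by
    rw [mul_sum]
    exact sum_le_sum hT
  have h_rem : φ (A \ tilesUnion T P) ≤ φ {1} * (η * A.card) := by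
    nlinarith [hφ.le_card_mul (A \ tilesUnion T P), hφ.nonneg {1}]
  nlinarith [hφ.le_of_isPacking hP]

theorem exists_forall_ratio_lt {c : ℝ}
    (hc : ∀ K δ, 0 < δ → ∃ F, IsInvariant K δ F ∧ ratio φ F < c) {ε : ℝ} (hε : 0 < ε) :
    ∃ K δ, 0 < δ ∧ ∀ A, IsInvariant K δ A → ratio φ A < c + ε := by
  have hc0 : 0 < c := by
    obtain ⟨F, -, hF⟩ := hc ∅ 1 one_pos
    exact (hφ.ratio_nonneg F).trans_lt hF
  set m := φ {1}
  have hm : 0 ≤ m := hφ.nonneg {1}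
  set η := min (1 / 2) (ε / (m + 2 * c + 1))
  have hη : 0 < η := lt_min one_half_pos (by positivity)
  have hη_err : η * (m + 2 * c) < ε :=
    calc η * (m + 2 * c) ≤ ε / (m + 2 * c + 1) * (m + 2 * c) := by
          gcongr
          exact min_le_right _ _
      _ < ε := by
          rw [div_mul_eq_mul_div, div_lt_iff₀ (by positivity)]
          nlinarith
  obtain ⟨n, hn⟩ := exists_pow_lt_of_lt_one hη (show 1 - η / 2 < 1 by linarith)
  obtain ⟨T, hT⟩ := exists_tiles hc (show 0 < η ^ 2 / 6 by positivity) n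
  refine ⟨(range n).biUnion T, η ^ 2 / 6, by positivity, fun A hA => ?_⟩
  obtain ⟨P, hP, hP_idx, hP_rem⟩ := exists_quasiTiling (fun i hi => (hT i hi).1) hη
    (min_le_left _ _) le_rfl (fun i j hij hj => (hT j hj).2.2 i hij)
    (fun i hi => (hA.mono (subset_biUnion_of_mem T (mem_range.2 hi)) le_rfl).card_kBoundary_le)
    hn.le
  have hφA := hφ.le_mul_card_of_quasiTiling hc0.le hη.le (min_le_left _ _) hP
    (fun p hp => le_mul_card_of_ratio_lt (hT _ (hP_idx p hp)).1 (hT _ (hP_idx p hp)).2.1) hP_rem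
  rw [ratio, div_lt_iff₀ (by exact_mod_cast hA.1.card_pos)]
  nlinarith [show (0 : ℝ) < A.card by exact_mod_cast hA.1.card_pos]

end IsInvariantSubadditive

def folnerFilter (G : Type*) [Group G] [DecidableEq G] : Filter (Finset G) :=
  ⨅ (p : Finset G × ℝ) (_ : 0 < p.2), 𝓟 {F | IsInvariant p.1 p.2 F}

lemma hasBasis_folnerFilter :
    (folnerFilter G).HasBasis (fun p : Finset G × ℝ => 0 < p.2)
      fun p => {F | IsInvariant p.1 p.2 F} := by
  refine hasBasis_biInf_principal' (fun p hp q hq => ?_) ⟨(∅, 1), one_pos⟩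
  refine ⟨(p.1 ∪ q.1, min p.2 q.2), lt_min hp hq, fun F hF => ?_, fun F hF => ?_⟩
  · exact hF.mono subset_union_left (min_le_left _ _)
  · exact hF.mono subset_union_right (min_le_right _ _)

theorem IsInvariantSubadditive.exists_tendsto_ratio [(folnerFilter G).NeBot]
    {φ : Finset G → ℝ} (hφ : IsInvariantSubadditive φ) :
    ∃ b, Tendsto (ratio φ) (folnerFilter G) (𝓝 b) := by
  set b := liminf (ratio φ) (folnerFilter G)
  refine ⟨b, tendsto_order.2 ⟨fun a ha =>
    eventually_lt_of_lt_liminf ha (isBoundedUnder_of ⟨0, hφ.ratio_nonneg⟩), fun a ha => ?_⟩⟩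
  have hfreq := frequently_lt_of_liminf_lt (isCoboundedUnder_ge_of_le _ hφ.ratio_le)
    (show b < (b + a) / 2 by linarith)
  rw [hasBasis_folnerFilter.frequently_iff] at hfreq
  obtain ⟨K, δ, hδ, hK⟩ := hφ.exists_forall_ratio_lt (fun K δ hδ => hfreq (K, δ) hδ)
    (show 0 < (a - b) / 2 by linarith)
  refine hasBasis_folnerFilter.eventually_iff.2 ⟨(K, δ), hδ, fun F hF => ?_⟩
  linarith [hK F hF]

end OrnsteinWeiss

theorem stmt7_general {G : Type*} [Group G] [DecidableEq G]
    (hFolner : ∀ (K : Finset G) (δ : ℝ), 0 < δ → ∃ F : Finset G, F.Nonempty ∧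
      (1 - δ) * (F.card : ℝ) ≤ ((F.filter fun s => ∀ k ∈ K, k * s ∈ F).card : ℝ))
    (φ : Finset G → ℝ)
    (hempty : φ ∅ = 0)
    (hmono : ∀ A B : Finset G, A ⊆ B → φ A ≤ φ B)
    (htrans : ∀ (A : Finset G) (s : G), φ (A.image fun t => t * s) = φ A)
    (hsub : ∀ A B : Finset G, Disjoint A B → φ (A ∪ B) ≤ φ A + φ B) :
    ∃ b : ℝ, ∀ ε : ℝ, 0 < ε → ∃ (K : Finset G) (δ : ℝ), 0 < δ ∧
      ∀ F : Finset G, F.Nonempty →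
        (1 - δ) * (F.card : ℝ) ≤ ((F.filter fun s => ∀ k ∈ K, k * s ∈ F).card : ℝ) →
        |φ F / (F.card : ℝ) - b| < ε := by
  open OrnsteinWeiss in
  have : (folnerFilter G).NeBot :=
    hasBasis_folnerFilter.neBot_iff.2 fun {p} hp => hFolner p.1 p.2 hp
  obtain ⟨b, hb⟩ := IsInvariantSubadditive.exists_tendsto_ratio ⟨hempty, hmono, htrans, hsub⟩
  refine ⟨b, fun ε hε => ?_⟩
  obtain ⟨⟨K, δ⟩, hδ, hKδ⟩ :=
    (hasBasis_folnerFilter.tendsto_iff Metric.nhds_basis_ball).1 hb ε hε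
  exact ⟨K, δ, hδ, fun F hF hFK => hKδ F ⟨hF, hFK⟩⟩

/-- the Ornstein–Weiss–Lindenstrauss–Weiss subadditivity theorem
(Proposition `P-subadditive`).  A nonempty finite set `F ⊆ G` is `(K, δ)`-invariant when
`|{s ∈ F : Ks ⊆ F}| ≥ (1 − δ)|F|`; the Følner condition asserts that such sets exist for
all finite `K` and `δ > 0`. -/
theorem stmt7 {G : Type*} [Group G] [DecidableEq G]
    (hFolner : ∀ (K : Finset G) (δ : ℝ), 0 < δ → ∃ F : Finset G, F.Nonempty ∧
      (1 - δ) * (F.card : ℝ) ≤ ((F.filter fun s => ∀ k ∈ K, k * s ∈ F).card : ℝ))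
    (φ : Finset G → ℝ)
    (h0 : ∀ A : Finset G, 0 ≤ φ A) (hempty : φ ∅ = 0)
    (hmono : ∀ A B : Finset G, A ⊆ B → φ A ≤ φ B)
    (htrans : ∀ (A : Finset G) (s : G), φ (A.image fun t => t * s) = φ A)
    (hsub : ∀ A B : Finset G, Disjoint A B → φ (A ∪ B) ≤ φ A + φ B) :
    ∃ b : ℝ, ∀ ε : ℝ, 0 < ε → ∃ (K : Finset G) (δ : ℝ), 0 < δ ∧
      ∀ F : Finset G, F.Nonempty →
        (1 - δ) * (F.card : ℝ) ≤ ((F.filter fun s => ∀ k ∈ K, k * s ∈ F).card : ℝ) →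
        |φ F / (F.card : ℝ) - b| < ε :=
  stmt7_general hFolner φ hempty hmono htrans hsub
end

section
/- Let P and Q be hereditary closed shift-invariant subsets of Ω_2 = {0,1}^{ℤ_{≥0}}, each of which has positive density. Then P ∩ Q is a hereditary closed shift-invariant subset of Ω_2 which has positive density. -/
open Filter

/-- The shift on `Ω₂ = {0,1}^{ℤ_{≥0}}`, modelled as `ℕ → Bool`. -/
def shiftMap : (ℕ → Bool) → ℕ → Bool := fun x n => x (n + 1)

/-- `P` is shift-invariant: its image under the shift is itself. -/
def ShiftInvariant (P : Set (ℕ → Bool)) : Prop := shiftMap '' P = P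

/-- `P` is hereditary: identifying `x : ℕ → Bool` with `{n | x n = true} ⊆ ℕ`, every
subset of every element of `P` belongs to `P`. -/
def Hereditary (P : Set (ℕ → Bool)) : Prop :=
  ∀ x ∈ P, ∀ y : ℕ → Bool, (∀ n, y n = true → x n = true) → y ∈ P

/-- `P` has positive density: it contains an element which, viewed as a subset of
`ℤ_{≥0}`, has positive density. -/
def HasPosDensityElement (P : Set (ℕ → Bool)) : Prop :=
  ∃ x ∈ P, HasPosDensity {n : ℕ | x n = true}

namespace Stmt8Aux

/-- number of `true`s among the first `m` coordinates -/
def cnt (z : ℕ → Bool) (m : ℕ) : ℕ := ((Finset.range m).filter fun i => z i = true).card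

lemma cnt_le (z : ℕ → Bool) (m : ℕ) : cnt z m ≤ m := by
  simpa [cnt] using (Finset.card_filter_le (Finset.range m) _)

lemma shiftIter_apply (z : ℕ → Bool) (k n : ℕ) : (shiftMap^[k] z) n = z (n + k) := by
  induction k generalizing z with
  | zero => simp
  | succ k ih =>
    rw [Function.iterate_succ_apply, ih]
    simp [shiftMap, Nat.add_assoc]

lemma cnt_add (z : ℕ → Bool) (M N : ℕ) :
    cnt z (M + N) = cnt z M + cnt (shiftMap^[M] z) N := by
  unfold cnt
  rw [Finset.range_add, Finset.filter_union, Finset.card_union_of_disjoint]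
  · congr 1
    rw [Finset.filter_map, Finset.card_map]
    congr 1
    apply Finset.filter_congr
    intro i _
    simp [shiftIter_apply, Nat.add_comm]
  · exact (Finset.disjoint_filter_filter
      (Finset.disjoint_range_addLeftEmbedding M (Finset.range N)))

lemma mem_of_shiftInvariant {P : Set (ℕ → Bool)} (h : ShiftInvariant P) {z : ℕ → Bool}
    (hz : z ∈ P) (k : ℕ) : shiftMap^[k] z ∈ P := by
  induction k with
  | zero => simpa
  | succ k ih =>
    rw [Function.iterate_succ_apply']
    rw [ShiftInvariant] at h
    rw [← h]
    exact ⟨_, ih, rfl⟩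

lemma cnt_continuous (m : ℕ) : Continuous fun z : ℕ → Bool => (cnt z m : ℝ) := by
  have h1 : ∀ z : ℕ → Bool, (cnt z m : ℝ) =
      ∑ i ∈ Finset.range m, (if z i = true then (1:ℝ) else 0) := by
    intro z
    rw [cnt, Finset.card_filter]
    push_cast
    rfl
  simp only [h1]
  apply continuous_finset_sum
  intro i _
  exact Continuous.comp
    (continuous_of_discreteTopology (f := fun b : Bool => if b = true then (1:ℝ) else 0))
    (continuous_apply i)

lemma natcard_eq_cnt (z : ℕ → Bool) (n : ℕ) :
    Nat.card ({i | z i = true} ∩ Set.Iic n : Set ℕ) = cnt z (n + 1) := by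
  have : ({i | z i = true} ∩ Set.Iic n : Set ℕ) =
      ↑((Finset.range (n+1)).filter fun i => z i = true) := by
    ext i
    simp [Nat.lt_succ_iff, Set.mem_Iic, and_comm]
  rw [this, Nat.card_coe_set_eq, Set.ncard_coe_finset]
  rfl

lemma shiftInvariant_inter {P Q : Set (ℕ → Bool)}
    (hPs : ShiftInvariant P) (hQs : ShiftInvariant Q)
    (hPh : Hereditary P) (hQh : Hereditary Q) : ShiftInvariant (P ∩ Q) := by
  apply Set.Subset.antisymm
  · rintro _ ⟨z, ⟨hzP, hzQ⟩, rfl⟩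
    constructor
    · rw [← hPs]; exact ⟨z, hzP, rfl⟩
    · rw [← hQs]; exact ⟨z, hzQ, rfl⟩
  · rintro w ⟨hwP, hwQ⟩
    have hP' : w ∈ shiftMap '' P := by rw [hPs]; exact hwP
    have hQ' : w ∈ shiftMap '' Q := by rw [hQs]; exact hwQ
    obtain ⟨p, hp, hpw⟩ := hP'
    obtain ⟨q, hq, hqw⟩ := hQ'
    set u : ℕ → Bool := fun n => Nat.rec false (fun m _ => w m) n with hu
    have hu0 : u 0 = false := rfl
    have huS : ∀ n, u (n + 1) = w n := fun n => rfl
    refine ⟨u, ⟨hPh p hp u ?_, hQh q hq u ?_⟩, ?_⟩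
    · intro n hn
      cases n with
      | zero => simp [hu0] at hn
      | succ m => rw [huS] at hn; rw [← hpw] at hn; exact hn
    · intro n hn
      cases n with
      | zero => simp [hu0] at hn
      | succ m => rw [huS] at hn; rw [← hqw] at hn; exact hn
    · funext n; exact huS n

lemma hereditary_inter {P Q : Set (ℕ → Bool)}
    (hPh : Hereditary P) (hQh : Hereditary Q) : Hereditary (P ∩ Q) :=
  fun x hx y hy => ⟨hPh x hx.1 y hy, hQh x hx.2 y hy⟩

lemma zero_mem {P : Set (ℕ → Bool)} (hPh : Hereditary P) {x : ℕ → Bool} (hx : x ∈ P) :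
    (fun _ => false) ∈ P := hPh x hx _ (fun n hn => by simp at hn)

/-- The key lemma: a closed shift-invariant set with words of linearly many ones
contains a point with exact positive density. -/
lemma key (X : Set (ℕ → Bool)) (hXc : IsClosed X) (hXs : ShiftInvariant X)
    (hX0 : (fun _ => false) ∈ X) {c : ℝ} (hc : 0 < c)
    (hlb : ∀ᶠ N : ℕ in atTop, ∃ z ∈ X, c * N ≤ (cnt z N : ℝ)) :
    ∃ z ∈ X, ∃ β : ℝ, 0 < β ∧
      Tendsto (fun n : ℕ => (cnt z (n + 1) : ℝ) / (n + 1)) atTop (nhds β) := by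
  classical
  -- the maximal count sequence
  set A : ℕ → Set ℕ := fun N => (fun z => cnt z N) '' X with hA
  have hAne : ∀ N, (A N).Nonempty := fun N => ⟨_, ⟨_, hX0, rfl⟩⟩
  have hAbdd : ∀ N, BddAbove (A N) := by
    rintro N
    refine ⟨N, ?_⟩
    rintro _ ⟨z, _, rfl⟩
    exact cnt_le z N
  set a : ℕ → ℕ := fun N => sSup (A N) with ha
  have haA : ∀ N, ∃ z ∈ X, cnt z N = a N := by
    intro N
    obtain ⟨z, hz, hzc⟩ := Nat.sSup_mem (hAne N) (hAbdd N)
    exact ⟨z, hz, hzc⟩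
  have hle : ∀ z ∈ X, ∀ N, cnt z N ≤ a N := fun z hz N => le_csSup (hAbdd N) ⟨z, hz, rfl⟩
  have ha0 : a 0 = 0 := by
    obtain ⟨z, _, hz⟩ := haA 0
    rw [← hz]
    exact Nat.le_zero.1 (cnt_le z 0)
  have haN : ∀ N, a N ≤ N := by
    intro N
    obtain ⟨z, _, hz⟩ := haA N
    rw [← hz]; exact cnt_le z N
  -- subadditivity and Fekete
  have hsub : Subadditive (fun N => (a N : ℝ)) := by
    intro M N
    obtain ⟨z, hz, hzc⟩ := haA (M + N)
    have h1 := cnt_add z M N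
    have h2 := hle z hz M
    have h3 := hle _ (mem_of_shiftInvariant hXs hz M) N
    rw [hzc] at h1
    push_cast
    exact_mod_cast h1.le.trans (add_le_add h2 h3)
  have hbdd : BddBelow (Set.range fun n : ℕ => (a n : ℝ) / n) := by
    refine ⟨0, ?_⟩
    rintro _ ⟨n, rfl⟩
    positivity
  set β : ℝ := hsub.lim with hβ
  have htend : Tendsto (fun n : ℕ => (a n : ℝ) / n) atTop (nhds β) := hsub.tendsto_lim hbdd
  have hcβ : c ≤ β := by
    refine ge_of_tendsto htend ?_
    filter_upwards [hlb, eventually_ge_atTop 1] with N hN hN1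
    obtain ⟨z, hz, hzc⟩ := hN
    have : c * N ≤ (a N : ℝ) := hzc.trans (by exact_mod_cast hle z hz N)
    rw [le_div_iff₀ (by positivity : (0:ℝ) < (N:ℝ))]
    linarith [this]
  have hβpos : 0 < β := lt_of_lt_of_le hc hcβ
  have hβ1 : β ≤ 1 := by
    have := hsub.lim_le_div hbdd (n := 1) one_ne_zero
    refine le_trans this ?_
    rw [Nat.cast_one, div_one]
    exact_mod_cast haN 1
  have hβN : ∀ N : ℕ, β * N ≤ (a N : ℝ) := by
    intro N
    rcases Nat.eq_zero_or_pos N with rfl | hN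
    · simp [ha0]
    · have := hsub.lim_le_div hbdd (n := N) (Nat.pos_iff_ne_zero.1 hN)
      rw [le_div_iff₀ (by exact_mod_cast hN)] at this
      linarith [this]
  -- Lemma B: words that are everywhere (β - ε)-dense
  have lemB : ∀ ε : ℝ, 0 < ε → ∀ L : ℕ, ∃ z ∈ X, ∀ m : ℕ, m ≤ L →
      (β - ε) * m ≤ (cnt z m : ℝ) := by
    intro ε hε L
    rcases lt_or_ge β ε with hεβ | hεβ
    · refine ⟨_, hX0, fun m hm => le_trans ?_ (Nat.cast_nonneg _)⟩
      have : (0:ℝ) ≤ (m:ℝ) := Nat.cast_nonneg m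
      nlinarith
    · -- ε ≤ β
      set N : ℕ := max 1 (Nat.ceil ((L : ℝ) / ε)) with hNdef
      have hN1 : 1 ≤ N := le_max_left _ _
      have hNL : (L : ℝ) ≤ ε * N := by
        have h1 : ((L : ℝ) / ε) ≤ (Nat.ceil ((L : ℝ) / ε) : ℝ) := Nat.le_ceil _
        have h2 : (Nat.ceil ((L : ℝ) / ε) : ℝ) ≤ (N : ℝ) := by
          exact_mod_cast Nat.cast_le.mpr (le_max_right _ _)
        rw [div_le_iff₀ hε] at h1
        calc (L:ℝ) ≤ (Nat.ceil ((L : ℝ) / ε) : ℝ) * ε := h1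
        _ ≤ (N:ℝ) * ε := by nlinarith
        _ = ε * N := mul_comm _ _
      obtain ⟨z, hz, hzc⟩ := haA N
      obtain ⟨i, hiR, himin⟩ := Finset.exists_min_image (Finset.range (N+1))
        (fun i => (cnt z i : ℝ) - (β - ε) * i) ⟨0, by simp⟩
      have hiN : i ≤ N := by simpa [Nat.lt_succ_iff] using hiR
      have hmin : ∀ j, j ≤ N → (cnt z i : ℝ) - (β - ε) * i ≤ (cnt z j : ℝ) - (β - ε) * j :=
        fun j hj => himin j (Finset.mem_range.2 (Nat.lt_succ_of_le hj))
      have hcnt0 : cnt z 0 = 0 := by simp [cnt]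
      have hi0 : (cnt z i : ℝ) - (β - ε) * i ≤ 0 := by
        have := hmin 0 (Nat.zero_le N)
        simpa [hcnt0] using this
      set t : ℕ := N - i with htdef
      have hti : i + t = N := Nat.add_sub_cancel' hiN
      have hsplit : cnt z N = cnt z i + cnt (shiftMap^[i] z) t := by
        rw [← hti, cnt_add]
      have hct : (cnt (shiftMap^[i] z) t : ℝ) ≤ (t : ℝ) := by exact_mod_cast cnt_le _ _
      have hcntN : β * N ≤ (cnt z N : ℝ) := by rw [hzc]; exact hβN N
      have hLt : (L : ℝ) ≤ (t : ℝ) := by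
        have hNr : (N : ℝ) = (i : ℝ) + (t : ℝ) := by exact_mod_cast hti.symm
        have hsplitr : (cnt z N : ℝ) = (cnt z i : ℝ) + (cnt (shiftMap^[i] z) t : ℝ) := by
          exact_mod_cast hsplit
        have ht0 : (0:ℝ) ≤ (t : ℝ) := Nat.cast_nonneg t
        nlinarith [mul_nonneg (sub_nonneg.2 hεβ) ht0]
      have hLt' : L ≤ t := by exact_mod_cast hLt
      refine ⟨shiftMap^[i] z, mem_of_shiftInvariant hXs hz i, ?_⟩
      intro m hm
      have him : i + m ≤ N := by omega
      have h1 : cnt z (i + m) = cnt z i + cnt (shiftMap^[i] z) m := cnt_add z i m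
      have h2 := hmin (i + m) him
      have h1r : (cnt z (i+m) : ℝ) = (cnt z i : ℝ) + (cnt (shiftMap^[i] z) m : ℝ) := by
        exact_mod_cast h1
      have hmr : ((i + m : ℕ) : ℝ) = (i : ℝ) + (m : ℝ) := by push_cast; ring
      rw [h1r, hmr] at h2
      linarith
  -- compactness: intersect the sets of words (β - εₖ)-dense up to scale k
  set Cs : ℕ → Set (ℕ → Bool) :=
    fun k => {z | z ∈ X ∧ ∀ m : ℕ, m ≤ k → (β - β / (k + 2)) * m ≤ (cnt z m : ℝ)} with hCs
  have hCne : ∀ k, (Cs k).Nonempty := by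
    intro k
    obtain ⟨z, hz, hzb⟩ := lemB (β / (k + 2)) (by positivity) k
    exact ⟨z, hz, hzb⟩
  have hCclosed : ∀ k, IsClosed (Cs k) := by
    intro k
    have : Cs k = X ∩ ⋂ (m : ℕ), ⋂ (_ : m ≤ k),
        {z : ℕ → Bool | (β - β / (k + 2)) * m ≤ (cnt z m : ℝ)} := by
      ext z
      simp only [hCs, Set.mem_inter_iff, Set.mem_setOf_eq, Set.mem_iInter]
    rw [this]
    refine hXc.inter (isClosed_iInter fun m => isClosed_iInter fun _ => ?_)
    exact isClosed_le continuous_const (cnt_continuous m)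
  have hCsub : ∀ k, Cs (k + 1) ⊆ Cs k := by
    rintro k z ⟨hzX, hzb⟩
    refine ⟨hzX, fun m hm => le_trans ?_ (hzb m (hm.trans (Nat.le_succ k)))⟩
    have hdiv : β / ((k:ℝ) + 1 + 2) ≤ β / ((k:ℝ) + 2) := by
      apply div_le_div_of_nonneg_left hβpos.le (by positivity)
      linarith
    have hm0 : (0:ℝ) ≤ (m:ℝ) := Nat.cast_nonneg m
    have : ((k+1 : ℕ) : ℝ) = (k : ℝ) + 1 := by push_cast; ring
    rw [this]
    nlinarith
  obtain ⟨w, hw⟩ := IsCompact.nonempty_iInter_of_sequence_nonempty_isCompact_isClosed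
    Cs hCsub hCne (hCclosed 0).isCompact hCclosed
  have hwmem : ∀ k, w ∈ Cs k := fun k => Set.mem_iInter.1 hw k
  have hwX : w ∈ X := (hwmem 0).1
  have hwlb : ∀ m : ℕ, β * m ≤ (cnt w m : ℝ) := by
    intro m
    have h0 : Tendsto (fun k : ℕ => β / ((k:ℝ) + 2)) atTop (nhds 0) :=
      tendsto_const_nhds.div_atTop
        (tendsto_atTop_add_const_right _ 2 tendsto_natCast_atTop_atTop)
    have h1 : Tendsto (fun k : ℕ => (β - β / ((k:ℝ) + 2)) * m) atTop (nhds (β * m)) := by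
      have := (Tendsto.sub (tendsto_const_nhds (x := β)) h0).mul_const (m : ℝ)
      simpa using this
    refine le_of_tendsto h1 ?_
    filter_upwards [eventually_ge_atTop m] with k hk
    exact (hwmem k).2 m hk
  refine ⟨w, hwX, β, hβpos, ?_⟩
  have hup : Tendsto (fun n : ℕ => (a (n + 1) : ℝ) / ((n:ℝ) + 1)) atTop (nhds β) := by
    have := htend.comp (tendsto_add_atTop_nat 1)
    refine this.congr fun n => ?_
    simp [Function.comp]
  refine tendsto_of_tendsto_of_tendsto_of_le_of_le (tendsto_const_nhds (x := β)) hup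
    (fun n => ?_) (fun n => ?_)
  · rw [le_div_iff₀ (by positivity : (0:ℝ) < (n:ℝ) + 1)]
    have := hwlb (n + 1)
    have hc1 : ((n + 1 : ℕ) : ℝ) = (n : ℝ) + 1 := by push_cast; ring
    rw [hc1] at this
    linarith
  · have hq : (cnt w (n+1) : ℝ) ≤ (a (n+1) : ℝ) := by exact_mod_cast hle w hwX (n + 1)
    gcongr


lemma exists_dense_words {P Q : Set (ℕ → Bool)}
    (hQs : ShiftInvariant Q) (hPh : Hereditary P) (hQh : Hereditary Q)
    {x y : ℕ → Bool} (hx : x ∈ P) (hy : y ∈ Q) {d e : ℝ} (hd : 0 < d) (he : 0 < e)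
    (hxd : Tendsto (fun n : ℕ => (cnt x (n + 1) : ℝ) / (n + 1)) atTop (nhds d))
    (hyd : Tendsto (fun n : ℕ => (cnt y (n + 1) : ℝ) / (n + 1)) atTop (nhds e)) :
    ∃ c : ℝ, 0 < c ∧ ∀ᶠ N : ℕ in atTop, ∃ z ∈ P ∩ Q, c * N ≤ (cnt z N : ℝ) := by
  classical
  set δ : ℝ := min d e / 4 with hδdef
  have hδpos : 0 < δ := by positivity
  have hδd : δ ≤ d / 4 := by
    have : min d e ≤ d := min_le_left _ _
    rw [hδdef]; linarith
  have hδe : δ ≤ e / 4 := by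
    have : min d e ≤ e := min_le_right _ _
    rw [hδdef]; linarith
  -- eventual lower bounds on densities
  have hxev : ∀ᶠ n : ℕ in atTop, d - δ ≤ (cnt x (n + 1) : ℝ) / (n + 1) :=
    hxd.eventually (eventually_ge_nhds (by linarith))
  have hyev : ∀ᶠ n : ℕ in atTop, e - δ ≤ (cnt y (n + 1) : ℝ) / (n + 1) :=
    hyd.eventually (eventually_ge_nhds (by linarith))
  obtain ⟨M, hM⟩ := eventually_atTop.1 (hxev.and hyev)
  have hx' : ∀ m : ℕ, M + 1 ≤ m → (d - δ) * m ≤ (cnt x m : ℝ) := by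
    intro m hm
    obtain ⟨n, rfl⟩ : ∃ n, m = n + 1 := ⟨m - 1, by omega⟩
    have := (hM n (by omega)).1
    rw [le_div_iff₀ (by positivity : (0:ℝ) < (n:ℝ) + 1)] at this
    push_cast
    linarith
  have hy' : ∀ m : ℕ, M + 1 ≤ m → (e - δ) * m ≤ (cnt y m : ℝ) := by
    intro m hm
    obtain ⟨n, rfl⟩ : ∃ n, m = n + 1 := ⟨m - 1, by omega⟩
    have := (hM n (by omega)).2
    rw [le_div_iff₀ (by positivity : (0:ℝ) < (n:ℝ) + 1)] at this
    push_cast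
    linarith
  refine ⟨(d - δ) * (e - 2*δ), by nlinarith, ?_⟩
  filter_upwards [eventually_ge_atTop (M + 1)] with N hN
  have hNpos : (0:ℝ) < N := by
    have : (1:ℝ) ≤ (N:ℝ) := by exact_mod_cast Nat.one_le_iff_ne_zero.2 (by omega)
    linarith
  -- choose the number of shifts K
  set K : ℕ := Nat.ceil ((N : ℝ) / δ) + M + 1 with hKdef
  have hKM : M + 1 ≤ K := by omega
  have hKpos : 0 < K := by omega
  have hNK : (N : ℝ) ≤ δ * K := by
    have h1 : ((N : ℝ) / δ) ≤ (Nat.ceil ((N : ℝ) / δ) : ℝ) := Nat.le_ceil _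
    have h2 : (Nat.ceil ((N : ℝ) / δ) : ℝ) ≤ (K : ℝ) := by
      have : Nat.ceil ((N : ℝ) / δ) ≤ K := by omega
      exact_mod_cast this
    rw [div_le_iff₀ hδpos] at h1
    nlinarith
  -- the words x ∧ σᵏ y
  set F : ℕ → ℕ → Bool := fun k n => x n && y (n + k) with hF
  -- counting identity
  have hcntF : ∀ k, (cnt (F k) N : ℝ) =
      ∑ n ∈ Finset.range N, (if x n = true ∧ y (n + k) = true then (1:ℝ) else 0) := by
    intro k
    rw [cnt, Finset.card_filter]
    push_cast
    apply Finset.sum_congr rfl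
    intro n _
    congr 1
    simp [hF, Bool.and_eq_true]
  have hswap : ∑ k ∈ Finset.range K, (cnt (F k) N : ℝ) =
      ∑ n ∈ Finset.range N, (if x n = true then (cnt (shiftMap^[n] y) K : ℝ) else 0) := by
    simp only [hcntF]
    rw [Finset.sum_comm]
    apply Finset.sum_congr rfl
    intro n _
    by_cases hxn : x n = true
    · simp only [hxn, true_and, if_true]
      rw [cnt, Finset.card_filter]
      push_cast
      apply Finset.sum_congr rfl
      intro k _
      congr 1
      simp [shiftIter_apply, Nat.add_comm]
    · simp [hxn]
  -- lower bound for each shifted count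
  have hshiftcnt : ∀ n < N, (e - δ) * K - N ≤ (cnt (shiftMap^[n] y) K : ℝ) := by
    intro n hn
    have h1 : cnt y (n + K) = cnt y n + cnt (shiftMap^[n] y) K := cnt_add y n K
    have h2 : (e - δ) * ((n:ℝ) + (K:ℝ)) ≤ (cnt y (n + K) : ℝ) := by
      have h := hy' (n + K) (by omega)
      rw [Nat.cast_add] at h
      exact h
    have h3 : (cnt y n : ℝ) ≤ n := by exact_mod_cast cnt_le y n
    have h1r : (cnt y (n + K) : ℝ) = (cnt y n : ℝ) + (cnt (shiftMap^[n] y) K : ℝ) := by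
      exact_mod_cast h1
    have hnN : (n : ℝ) ≤ (N : ℝ) := by exact_mod_cast hn.le
    have heδ : 0 ≤ e - δ := by linarith
    have hn0 : (0:ℝ) ≤ (n:ℝ) := Nat.cast_nonneg n
    nlinarith [mul_nonneg heδ hn0]
  -- total lower bound
  have htotal : (d - δ) * N * ((e - δ) * K - N) ≤ ∑ k ∈ Finset.range K, (cnt (F k) N : ℝ) := by
    rw [hswap]
    have hstep : ∑ n ∈ Finset.range N, (if x n = true then ((e - δ) * K - N) else 0) ≤
        ∑ n ∈ Finset.range N, (if x n = true then (cnt (shiftMap^[n] y) K : ℝ) else 0) := by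
      apply Finset.sum_le_sum
      intro n hn
      by_cases hxn : x n = true
      · simpa [hxn] using hshiftcnt n (Finset.mem_range.1 hn)
      · simp [hxn]
    refine le_trans ?_ hstep
    rw [← Finset.sum_filter, Finset.sum_const, nsmul_eq_mul]
    have hcard : (Finset.filter (fun n => x n = true) (Finset.range N)).card = cnt x N := rfl
    rw [hcard]
    have hxN : (d - δ) * N ≤ (cnt x N : ℝ) := hx' N hN
    have hpos : (0:ℝ) ≤ (e - δ) * K - N := by
      have h2δ : (0:ℝ) ≤ δ * K := by positivity
      nlinarith
    nlinarith
  -- extract a good shift k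
  have hKr : (0:ℝ) < (K:ℝ) := by exact_mod_cast hKpos
  have hexist : ∃ k ∈ Finset.range K, (d - δ) * (e - 2*δ) * N ≤ (cnt (F k) N : ℝ) := by
    apply Finset.exists_le_of_sum_le (Finset.nonempty_range_iff.2 (by omega))
    calc ∑ _k ∈ Finset.range K, (d - δ) * (e - 2*δ) * N
        = K * ((d - δ) * (e - 2*δ) * N) := by rw [Finset.sum_const, Finset.card_range, nsmul_eq_mul]
      _ ≤ (d - δ) * N * ((e - δ) * K - N) := by
          have hdN : (0:ℝ) ≤ (d - δ) * N := by nlinarith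
          have hkey : (e - 2*δ) * (K:ℝ) ≤ (e - δ) * K - N := by nlinarith
          nlinarith [mul_le_mul_of_nonneg_left hkey hdN]
      _ ≤ _ := htotal
  obtain ⟨k, _, hk⟩ := hexist
  refine ⟨F k, ⟨?_, ?_⟩, by linarith [hk]⟩
  · apply hPh x hx
    intro n hn
    simp only [hF, Bool.and_eq_true] at hn
    exact hn.1
  · apply hQh _ (mem_of_shiftInvariant hQs hy k)
    intro n hn
    simp only [hF, Bool.and_eq_true] at hn
    rw [shiftIter_apply]
    exact hn.2


end Stmt8Aux

open Stmt8Aux in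
/-- Lemma `L-intersection of positive density`. -/
theorem stmt8 (P Q : Set (ℕ → Bool))
    (hPc : IsClosed P) (hQc : IsClosed Q)
    (hPs : ShiftInvariant P) (hQs : ShiftInvariant Q)
    (hPh : Hereditary P) (hQh : Hereditary Q)
    (hPd : HasPosDensityElement P) (hQd : HasPosDensityElement Q) :
    IsClosed (P ∩ Q) ∧ ShiftInvariant (P ∩ Q) ∧ Hereditary (P ∩ Q) ∧
      HasPosDensityElement (P ∩ Q) := by
  refine ⟨hPc.inter hQc, shiftInvariant_inter hPs hQs hPh hQh, hereditary_inter hPh hQh, ?_⟩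
  obtain ⟨x, hx, d, hd0, hdt⟩ := hPd
  obtain ⟨y, hy, e, he0, het⟩ := hQd
  have hdt' : Tendsto (fun n : ℕ => (cnt x (n + 1) : ℝ) / (n + 1)) atTop (nhds d) :=
    hdt.congr fun n => by rw [natcard_eq_cnt]
  have het' : Tendsto (fun n : ℕ => (cnt y (n + 1) : ℝ) / (n + 1)) atTop (nhds e) :=
    het.congr fun n => by rw [natcard_eq_cnt]
  have hd : 0 < d := by
    rcases (lt_or_ge 0 d) with h | h
    · exact h
    · exfalso
      apply hd0
      refine le_antisymm h (ge_of_tendsto' hdt' fun n => by positivity)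
  have he : 0 < e := by
    rcases (lt_or_ge 0 e) with h | h
    · exact h
    · exfalso
      apply he0
      refine le_antisymm h (ge_of_tendsto' het' fun n => by positivity)
  obtain ⟨c, hc, hlb⟩ := exists_dense_words hQs hPh hQh hx hy hd he hdt' het'
  obtain ⟨z, hzX, β, hβ, hβt⟩ := key (P ∩ Q) (hPc.inter hQc)
    (shiftInvariant_inter hPs hQs hPh hQh)
    ⟨zero_mem hPh hx, zero_mem hQh hy⟩ hc hlb
  refine ⟨z, hzX, β, ne_of_gt hβ, ?_⟩
  exact hβt.congr fun n => by rw [natcard_eq_cnt]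
end

section
/- Let (X, T) and (Y, S) be dynamical systems, i.e. X and Y are compact Hausdorff spaces and T : X → X, S : Y → Y are surjective continuous maps. Then, identifying (X × Y)^k with X^k × Y^k, one has IE_k(X × Y, T × S) = IE_k(X, T) × IE_k(Y, S) for every k ≥ 1. -/
set_option maxHeartbeats 1000000

open Filter Set

namespace IEAux


/-! ### Counting preliminaries -/

open Finset in
open Classical in
/-- The elements of `J` below `L`, as a `Finset`. -/
noncomputable def cfin (J : Set ℕ) (L : ℕ) : Finset ℕ :=
  (Finset.range L).filter (fun t => t ∈ J)

noncomputable def cnt (J : Set ℕ) (L : ℕ) : ℕ := (cfin J L).card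

lemma mem_cfin {J : Set ℕ} {L t : ℕ} : t ∈ cfin J L ↔ t < L ∧ t ∈ J := by
  simp [cfin]

lemma natCard_eq_cnt (J : Set ℕ) (n : ℕ) :
    Nat.card (J ∩ Set.Iic n : Set ℕ) = cnt J (n + 1) := by
  have h : (J ∩ Set.Iic n : Set ℕ) = ↑(cfin J (n + 1)) := by
    ext t
    simp [mem_cfin, Nat.lt_succ_iff, and_comm]
  rw [h, Nat.card_coe_set_eq, Set.ncard_coe_finset]
  rfl

lemma cfin_mono (J : Set ℕ) {L L' : ℕ} (h : L ≤ L') : cfin J L ⊆ cfin J L' := by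
  intro t ht
  rw [mem_cfin] at *
  exact ⟨lt_of_lt_of_le ht.1 h, ht.2⟩

lemma cnt_mono (J : Set ℕ) {L L' : ℕ} (h : L ≤ L') : cnt J L ≤ cnt J L' :=
  Finset.card_le_card (cfin_mono J h)

lemma cnt_le (J : Set ℕ) (L : ℕ) : cnt J L ≤ L := by
  classical
  have := Finset.card_filter_le (Finset.range L) (fun t => t ∈ J)
  simpa [cnt, cfin] using this

lemma cnt_split (J : Set ℕ) {h L : ℕ} (hh : h ≤ L) :
    cnt J L = cnt J h + ((cfin J L).filter (fun b => h ≤ b)).card := by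
  classical
  have e1 : (cfin J L).filter (fun b => b < h) = cfin J h := by
    ext t
    simp only [Finset.mem_filter, mem_cfin]
    constructor
    · rintro ⟨⟨_, hJ⟩, h2⟩; exact ⟨h2, hJ⟩
    · rintro ⟨h1, hJ⟩; exact ⟨⟨lt_of_lt_of_le h1 hh, hJ⟩, h1⟩
  have e2 := Finset.card_filter_add_card_filter_not
    (s := cfin J L) (p := fun b => b < h)
  have e3 : (cfin J L).filter (fun b => ¬ b < h) = (cfin J L).filter (fun b => h ≤ b) := by
    apply Finset.filter_congr; intro b _; simp [not_lt]
  rw [e1, e3] at e2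
  unfold cnt
  omega

open Classical in
/-- Elements `b < L` with `b ∈ J₁` and `b - m ∈ J₂`. -/
noncomputable def bfin (J₁ J₂ : Set ℕ) (m L : ℕ) : Finset ℕ :=
  (Finset.range L).filter (fun b => b ∈ J₁ ∧ m ≤ b ∧ b - m ∈ J₂)

lemma mem_bfin {J₁ J₂ : Set ℕ} {m L b : ℕ} :
    b ∈ bfin J₁ J₂ m L ↔ b < L ∧ b ∈ J₁ ∧ m ≤ b ∧ b - m ∈ J₂ := by simp [bfin]

/-- Double counting. -/
lemma double_count (J₁ J₂ : Set ℕ) (L : ℕ) :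
    ∑ m ∈ Finset.range L, (bfin J₁ J₂ m L).card
      = ∑ b ∈ cfin J₁ L, cnt J₂ (b + 1) := by
  classical
  have hinner : ∀ b < L,
      ((Finset.range L).filter (fun m => m ≤ b ∧ b - m ∈ J₂)).card = cnt J₂ (b + 1) := by
    intro b hb
    apply Finset.card_nbij' (i := fun m => b - m) (j := fun e => b - e)
    · intro m hm
      simp only [Finset.mem_coe, Finset.mem_filter, Finset.mem_range] at hm
      rw [Finset.mem_coe, mem_cfin]
      exact ⟨by beta_reduce; omega, hm.2.2⟩
    · intro e he
      rw [Finset.mem_coe, mem_cfin] at he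
      simp only [Finset.mem_coe, Finset.mem_filter, Finset.mem_range]
      have he' : e ≤ b := by omega
      refine ⟨by omega, by omega, ?_⟩
      rw [Nat.sub_sub_self he']
      exact he.2
    · intro m hm
      simp only [Finset.mem_coe, Finset.mem_filter, Finset.mem_range] at hm
      beta_reduce
      omega
    · intro e he
      rw [Finset.mem_coe, mem_cfin] at he
      beta_reduce
      omega
  calc ∑ m ∈ Finset.range L, (bfin J₁ J₂ m L).card
      = ∑ m ∈ Finset.range L, ∑ b ∈ Finset.range L,
          (if b ∈ J₁ ∧ m ≤ b ∧ b - m ∈ J₂ then 1 else 0) := by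
        refine Finset.sum_congr rfl fun m _ => ?_
        rw [bfin, Finset.card_filter]
    _ = ∑ b ∈ Finset.range L, ∑ m ∈ Finset.range L,
          (if b ∈ J₁ ∧ m ≤ b ∧ b - m ∈ J₂ then 1 else 0) := Finset.sum_comm
    _ = ∑ b ∈ Finset.range L,
          (if b ∈ J₁ then cnt J₂ (b + 1) else 0) := by
        refine Finset.sum_congr rfl fun b hb => ?_
        rw [Finset.mem_range] at hb
        by_cases hbJ : b ∈ J₁
        · simp only [hbJ, true_and, if_true]
          rw [← hinner b hb, Finset.card_filter]
        · simp [hbJ]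
    _ = ∑ b ∈ cfin J₁ L, cnt J₂ (b + 1) := by
        rw [cfin, Finset.sum_filter]

variable {X Y : Type*} {k : ℕ}

lemma isIndepSet_anti {T : X → X} {A : Fin k → Set X} {J J' : Set ℕ} (h : J ⊆ J')
    (H : IsIndepSet T A J') : IsIndepSet T A J :=
  fun I hne hsub σ => H I hne (fun t ht => h (hsub ht)) σ

lemma isIndepSet_mono {T : X → X} {A B : Fin k → Set X} {J : Set ℕ}
    (h : ∀ i, A i ⊆ B i) (H : IsIndepSet T A J) : IsIndepSet T B J := by
  intro I hne hsub σ
  refine (H I hne hsub σ).mono ?_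
  exact Set.iInter₂_mono fun s _ => Set.preimage_mono (h (σ s))

/-- Key identity for shifted intersection. -/
lemma biInter_image_add (T : X → X) (p : ℕ) (I : Finset ℕ) (f : ℕ → Set X) :
    (⋂ s ∈ I.image (· + p), T^[s] ⁻¹' f s)
      = T^[p] ⁻¹' (⋂ s ∈ I, T^[s] ⁻¹' f (s + p)) := by
  rw [Finset.set_biInter_finset_image, Set.preimage_iInter₂]
  refine Set.iInter₂_congr fun s _ => ?_
  rw [Function.iterate_add T s p, Set.preimage_comp]

/-- Down-shift: if the translate `F + p` is (part of) an independence set, so is `F`. -/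
lemma isIndepSet_down (T : X → X) (A : Fin k → Set X) (p : ℕ) (F : Finset ℕ)
    (h : IsIndepSet T A ↑(F.image (· + p))) : IsIndepSet T A ↑F := by
  intro I hne hsub σ
  have hsub' : ↑(I.image (· + p)) ⊆ (↑(F.image (· + p)) : Set ℕ) := by
    intro t ht
    simp only [Finset.coe_image, Set.mem_image, Finset.mem_coe] at ht ⊢
    obtain ⟨u, hu, rfl⟩ := ht
    exact ⟨u, hsub hu, rfl⟩
  have h' := h (I.image (· + p)) (hne.image _) hsub' (fun t => σ (t - p))
  rw [biInter_image_add] at h'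
  obtain ⟨z, hz⟩ := h'
  refine ⟨T^[p] z, ?_⟩
  have : (⋂ s ∈ I, T^[s] ⁻¹' A ((fun t => σ (t - p)) (s + p)))
      = ⋂ s ∈ I, T^[s] ⁻¹' A (σ s) := by
    refine Set.iInter₂_congr fun s _ => ?_
    simp
  rw [this] at hz
  exact hz

/-- Up-shift: a finite subset of `J + m` is an independence set if `J` is,
provided `T` is surjective. -/
lemma isIndepSet_up (T : X → X) (hT : Function.Surjective T) (A : Fin k → Set X)
    (m : ℕ) (J : Set ℕ) (hJ : IsIndepSet T A J) (F : Finset ℕ)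
    (hF : ∀ b ∈ F, m ≤ b ∧ b - m ∈ J) : IsIndepSet T A ↑F := by
  intro I hne hsub σ
  classical
  set I' := I.image (· - m) with hI'
  have hmem : ∀ t ∈ I, m ≤ t := fun t ht => (hF t (hsub ht)).1
  have hkey : I = I'.image (· + m) := by
    ext t
    simp only [hI', Finset.mem_image]
    constructor
    · intro ht
      exact ⟨t - m, ⟨t, ht, rfl⟩, Nat.sub_add_cancel (hmem t ht)⟩
    · rintro ⟨u, ⟨v, hv, rfl⟩, rfl⟩
      rwa [Nat.sub_add_cancel (hmem v hv)]
  have hsub' : ↑I' ⊆ J := by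
    intro t ht
    simp only [hI', Finset.coe_image, Set.mem_image, Finset.mem_coe] at ht
    obtain ⟨u, hu, rfl⟩ := ht
    exact (hF u (hsub hu)).2
  have h' := hJ I' (hne.image _) hsub' (fun t => σ (t + m))
  rw [hkey, biInter_image_add]
  obtain ⟨z, hz⟩ := h'
  obtain ⟨w, hw⟩ := (hT.iterate m) z
  exact ⟨w, by rw [Set.mem_preimage, hw]; exact hz⟩

/-- Intersections for the product system split as a product. -/
lemma iInter_prod_eq (T : X → X) (S : Y → Y) (V : Fin k → Set X) (W' : Fin k → Set Y)
    (I : Finset ℕ) (σ : ℕ → Fin k) :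
    (⋂ s ∈ I, (Prod.map T S)^[s] ⁻¹' ((V (σ s)) ×ˢ (W' (σ s))))
      = (⋂ s ∈ I, T^[s] ⁻¹' V (σ s)) ×ˢ (⋂ s ∈ I, S^[s] ⁻¹' W' (σ s)) := by
  ext ⟨a, b⟩
  simp only [Set.mem_iInter, Set.mem_preimage, Prod.map_iterate, Set.mem_prod, Prod.map_apply]
  exact ⟨fun h => ⟨fun s hs => (h s hs).1, fun s hs => (h s hs).2⟩,
    fun h s hs => ⟨h.1 s hs, h.2 s hs⟩⟩

lemma isIndepSet_prod {T : X → X} {S : Y → Y} {V : Fin k → Set X} {W : Fin k → Set Y}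
    {J : Set ℕ} (hV : IsIndepSet T V J) (hW : IsIndepSet S W J) :
    IsIndepSet (Prod.map T S) (fun i => V i ×ˢ W i) J := by
  intro I hne hsub σ
  obtain ⟨a, ha⟩ := hV I hne hsub σ
  obtain ⟨b, hb⟩ := hW I hne hsub σ
  refine ⟨(a, b), ?_⟩
  show (a, b) ∈ ⋂ s ∈ I, (Prod.map T S)^[s] ⁻¹' ((V (σ s)) ×ˢ (W (σ s)))
  rw [iInter_prod_eq]
  exact ⟨ha, hb⟩

lemma isIndepSet_fst {T : X → X} {S : Y → Y} {V : Fin k → Set X} {J : Set ℕ}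
    (h : IsIndepSet (Prod.map T S) (fun i => V i ×ˢ (Set.univ : Set Y)) J) :
    IsIndepSet T V J := by
  intro I hne hsub σ
  obtain ⟨⟨a, b⟩, hab⟩ := h I hne hsub σ
  have hab' : (a, b) ∈ (⋂ s ∈ I, T^[s] ⁻¹' V (σ s)) ×ˢ
      (⋂ s ∈ I, S^[s] ⁻¹' (Set.univ : Set Y)) := by
    rw [← iInter_prod_eq T S V (fun _ => (Set.univ : Set Y)) I σ]
    exact hab
  exact ⟨a, hab'.1⟩

lemma isIndepSet_snd {T : X → X} {S : Y → Y} {W : Fin k → Set Y} {J : Set ℕ}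
    (h : IsIndepSet (Prod.map T S) (fun i => (Set.univ : Set X) ×ˢ W i) J) :
    IsIndepSet S W J := by
  intro I hne hsub σ
  obtain ⟨⟨a, b⟩, hab⟩ := h I hne hsub σ
  have hab' : (a, b) ∈ (⋂ s ∈ I, T^[s] ⁻¹' (Set.univ : Set X)) ×ˢ
      (⋂ s ∈ I, S^[s] ⁻¹' W (σ s)) := by
    rw [← iInter_prod_eq T S (fun _ => (Set.univ : Set X)) W I σ]
    exact hab
  exact ⟨b, hab'.2⟩

/-- **Lemma A**: from a finset `F ⊆ [0, L)` with at least `γ'·L + E` elements one can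
extract a down-translate `G` of a subset of `F` such that `G` lives in a window of
length `ℓ ≥ E` and every prefix of `G` is `γ'`-dense. -/
lemma lemA (F : Finset ℕ) (L : ℕ) (hFL : F ⊆ Finset.range L) (γ' E : ℝ)
    (hγ0 : 0 ≤ γ') (hγ1 : γ' ≤ 1) (hcard : γ' * L + E ≤ (F.card : ℝ)) :
    ∃ (G : Finset ℕ) (p ℓ : ℕ), G.image (· + p) ⊆ F ∧ E ≤ (ℓ : ℝ) ∧
      ∀ k ≤ ℓ, γ' * k ≤ (((G.filter (· < k)).card : ℝ)) := by
  classical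
  set c : ℕ → ℕ := fun t => (F.filter (· < t)).card with hc
  have hc0 : c 0 = 0 := by simp [hc]
  have hcL : c L = F.card := by
    have h : F.filter (fun x => x < L) = F :=
      Finset.filter_true_of_mem (fun a ha => by simpa using hFL ha)
    simp only [hc, h]
  have hsplit : ∀ p q : ℕ, p ≤ q →
      c q = c p + (F.filter (fun a => p ≤ a ∧ a < q)).card := by
    intro p q hpq
    have e1 : (F.filter (· < q)).filter (fun a => a < p) = F.filter (· < p) := by
      rw [Finset.filter_filter]
      apply Finset.filter_congr
      intro a _
      constructor
      · rintro ⟨_, h2⟩; exact h2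
      · intro h; exact ⟨lt_of_lt_of_le h hpq, h⟩
    have e2 : (F.filter (· < q)).filter (fun a => ¬ a < p)
        = F.filter (fun a => p ≤ a ∧ a < q) := by
      rw [Finset.filter_filter]
      apply Finset.filter_congr
      intro a _
      simp only [not_lt]
      tauto
    have e3 := Finset.card_filter_add_card_filter_not
      (s := F.filter (· < q)) (p := fun a => a < p)
    rw [e1, e2] at e3
    simp only [hc]
    omega
  -- choose the minimizing point
  obtain ⟨p, hpmem, hpmin⟩ := Finset.exists_min_image (Finset.range (L + 1))
    (fun t => (c t : ℝ) - γ' * t) ⟨0, by simp⟩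
  have hpL : p ≤ L := by
    rw [Finset.mem_range] at hpmem
    omega
  set ℓ : ℕ := L - p with hℓ
  set G : Finset ℕ := (F.filter (fun a => p ≤ a)).image (· - p) with hG
  have himg : G.image (· + p) = F.filter (fun a => p ≤ a) := by
    rw [hG, Finset.image_image]
    have : ∀ a ∈ F.filter (fun a => p ≤ a), ((· + p) ∘ (· - p)) a = id a := by
      intro a ha
      have := (Finset.mem_filter.mp ha).2
      simp only [Function.comp_apply, id_eq]
      omega
    rw [Finset.image_congr this, Finset.image_id]
  have hGsub : G.image (· + p) ⊆ F := by
    rw [himg]; exact Finset.filter_subset _ _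
  -- prefix counts of G
  have hGcard : ∀ k : ℕ, (G.filter (· < k)).card
      = (F.filter (fun a => p ≤ a ∧ a < p + k)).card := by
    intro k
    rw [hG, Finset.filter_image]
    have e : (F.filter (fun a => p ≤ a)).filter (fun a => a - p < k)
        = F.filter (fun a => p ≤ a ∧ a < p + k) := by
      rw [Finset.filter_filter]
      apply Finset.filter_congr
      intro a _
      constructor
      · rintro ⟨h1, h2⟩; exact ⟨h1, by omega⟩
      · rintro ⟨h1, h2⟩; exact ⟨h1, by omega⟩
    have inj : Set.InjOn (fun x => x - p)
        ↑((F.filter (fun a => p ≤ a)).filter (fun a => a - p < k)) := by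
      intro a ha b hb hab
      rw [Finset.mem_coe, Finset.mem_filter, Finset.mem_filter] at ha hb
      have h1 := ha.1.2
      have h2 := hb.1.2
      simp only at hab
      omega
    rw [Finset.card_image_of_injOn inj, e]
  refine ⟨G, p, ℓ, hGsub, ?_, ?_⟩
  · -- length bound
    have hs0 : (c p : ℝ) - γ' * p ≤ 0 := by
      have := hpmin 0 (by simp)
      simpa [hc0] using this
    have hcle : (c L : ℕ) = c p + (F.filter (fun a => p ≤ a ∧ a < L)).card := hsplit p L hpL
    have hmid_le : (F.filter (fun a => p ≤ a ∧ a < L)).card ≤ ℓ := by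
      have hsub2 : F.filter (fun a => p ≤ a ∧ a < L) ⊆ Finset.Ico p L := by
        intro a ha
        have := (Finset.mem_filter.mp ha).2
        rw [Finset.mem_Ico]
        exact this
      have := Finset.card_le_card hsub2
      rwa [Nat.card_Ico] at this
    have hcast : (ℓ : ℝ) = (L : ℝ) - p := by
      rw [hℓ]
      push_cast [Nat.cast_sub hpL]
      ring
    have h1 : γ' * L + E ≤ (c L : ℝ) := by rw [hcL]; exact hcard
    have h2 : (c L : ℝ) ≤ (c p : ℝ) + (ℓ : ℝ) := by
      rw [hcle]
      push_cast
      have : ((F.filter (fun a => p ≤ a ∧ a < L)).card : ℝ) ≤ (ℓ : ℝ) := by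
        exact_mod_cast hmid_le
      linarith
    -- c p ≤ γ' p, so γ' L + E ≤ γ' p + ℓ, hence E ≤ ℓ - γ' ℓ ≤ ℓ... need γ' ℓ ≥ 0
    have h3 : (c p : ℝ) ≤ γ' * p := by linarith
    have h4 : γ' * L + E ≤ γ' * p + (ℓ : ℝ) := by linarith
    have h5 : γ' * (L : ℝ) - γ' * p = γ' * (ℓ : ℝ) := by rw [hcast]; ring
    have h6 : 0 ≤ γ' * (ℓ : ℝ) := by positivity
    linarith
  · -- prefix density
    intro k hk
    have hpk : p + k ≤ L := by omega
    have hmin' := hpmin (p + k) (by rw [Finset.mem_range]; omega)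
    have hcpk := hsplit p (p + k) (by omega)
    rw [hGcard k]
    have : ((F.filter (fun a => p ≤ a ∧ a < p + k)).card : ℝ) = (c (p + k) : ℝ) - c p := by
      rw [hcpk]; push_cast; ring
    rw [this]
    have hexp : (γ' : ℝ) * (p + k) = γ' * p + γ' * k := by push_cast; ring
    push_cast at hmin'
    linarith

/-- **Core combinatorial lemma.** -/
lemma key (J₁ J₂ : Set ℕ) (d₁ d₂ : ℝ) (P : Finset ℕ → Prop)
    (h_her : ∀ ⦃F G : Finset ℕ⦄, F ⊆ G → P G → P F)
    (h_down : ∀ (p : ℕ) (F : Finset ℕ), P (F.image (· + p)) → P F)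
    (h_mem : ∀ (m : ℕ) (F : Finset ℕ), (∀ b ∈ F, b ∈ J₁) →
      (∀ b ∈ F, m ≤ b ∧ b - m ∈ J₂) → P F)
    (hd₁ : Tendsto (fun L : ℕ => (cnt J₁ L : ℝ) / L) atTop (nhds d₁)) (h1 : 0 < d₁)
    (hd₂ : Tendsto (fun L : ℕ => (cnt J₂ L : ℝ) / L) atTop (nhds d₂)) (h2 : 0 < d₂) :
    ∃ J : Set ℕ, (∀ F : Finset ℕ, ↑F ⊆ J → P F) ∧
      ∃ θ : ℝ, 0 < θ ∧ Tendsto (fun L : ℕ => (cnt J L : ℝ) / L) atTop (nhds θ) := by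
  classical
  have hP0 : P ∅ := h_mem 0 ∅ (by simp) (by simp)
  -- eventual bounds from the density hypotheses
  have hev : ∀ (J : Set ℕ) (d : ℝ), 0 < d →
      Tendsto (fun L : ℕ => (cnt J L : ℝ) / L) atTop (nhds d) →
      ∀ᶠ L : ℕ in atTop,
        (99/100) * d * L ≤ (cnt J L : ℝ) ∧ (cnt J L : ℝ) ≤ (101/100) * d * L := by
    intro J d hd htd
    have hball := htd (Metric.ball_mem_nhds d (by positivity : (0:ℝ) < d/100))
    filter_upwards [hball, eventually_ge_atTop 1] with L hL hL1
    rw [Set.mem_preimage, Metric.mem_ball, Real.dist_eq, abs_lt] at hL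
    have hLpos : (0:ℝ) < L := by exact_mod_cast hL1
    have heq : (cnt J L : ℝ) = ((cnt J L : ℝ) / L) * L := by field_simp
    constructor <;> nlinarith [hL.1, hL.2]
  have hev₁ := hev J₁ d₁ h1 hd₁
  have hev₂ := hev J₂ d₂ h2 hd₂
  -- the maximal size of a `P`-set in a window
  set 𝒮 : ℕ → Finset (Finset ℕ) := fun L => (Finset.range L).powerset.filter P with h𝒮
  have h𝒮ne : ∀ L, (𝒮 L).Nonempty := fun L =>
    ⟨∅, by simp [h𝒮, Finset.empty_mem_powerset, hP0]⟩
  set φ : ℕ → ℕ := fun L => (𝒮 L).sup Finset.card with hφ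
  have hφ_ge : ∀ {L : ℕ} {F : Finset ℕ}, F ⊆ Finset.range L → P F → F.card ≤ φ L := by
    intro L F hsub hPF
    exact Finset.le_sup (by simp [h𝒮, Finset.mem_filter, Finset.mem_powerset, hsub, hPF])
  have hφ_le : ∀ L, φ L ≤ L := by
    intro L
    apply Finset.sup_le
    intro F hF
    rw [h𝒮, Finset.mem_filter, Finset.mem_powerset] at hF
    calc F.card ≤ (Finset.range L).card := Finset.card_le_card hF.1
      _ = L := Finset.card_range L
  have hφ_wit : ∀ L, ∃ F : Finset ℕ, F ⊆ Finset.range L ∧ P F ∧ F.card = φ L := by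
    intro L
    obtain ⟨F, hF, hsup⟩ := Finset.exists_mem_eq_sup (𝒮 L) (h𝒮ne L) Finset.card
    rw [h𝒮, Finset.mem_filter, Finset.mem_powerset] at hF
    exact ⟨F, hF.1, hF.2, hsup.symm⟩
  -- Step 1 : a positive proportion of every long window carries a `P`-set
  have step1 : ∀ᶠ L : ℕ in atTop, (d₁ * d₂ / 16) * L ≤ (φ L : ℝ) := by
    obtain ⟨N₁, hN₁⟩ := eventually_atTop.mp hev₁
    obtain ⟨N₂, hN₂⟩ := eventually_atTop.mp hev₂
    filter_upwards [eventually_ge_atTop (2 * N₁ + 2 * N₂ + 100)] with L hLge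
    set h : ℕ := L / 2 with hh
    have hhL : h ≤ L := Nat.div_le_self L 2
    have hL1 : 1 ≤ L := by omega
    have hLpos : (0:ℝ) < L := by exact_mod_cast hL1
    have hcast1 : (h:ℝ) ≤ (L:ℝ) / 2 := by
      rw [hh]
      exact_mod_cast Nat.cast_div_le
    have hcast2 : (L:ℝ) / 2 - 1 ≤ (h:ℝ) := by
      have : L ≤ 2 * h + 1 := by omega
      have : (L:ℝ) ≤ 2 * h + 1 := by exact_mod_cast this
      linarith
    have b1 : (99/100) * d₁ * L ≤ (cnt J₁ L : ℝ) := (hN₁ L (by omega)).1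
    have b2 : (cnt J₁ h : ℝ) ≤ (101/100) * d₁ * h := (hN₁ h (by omega)).2
    have b3 : (99/100) * d₂ * (h+1 : ℕ) ≤ (cnt J₂ (h+1) : ℝ) := (hN₂ (h+1) (by omega)).1
    have b3' : (d₂ / 4) * L ≤ (cnt J₂ (h+1) : ℝ) := by
      have hc : ((h+1 : ℕ) : ℝ) = (h:ℝ) + 1 := by push_cast; ring
      rw [hc] at b3
      nlinarith
    set A : ℕ := ((cfin J₁ L).filter (fun b => h ≤ b)).card with hA
    have hsplit := cnt_split J₁ hhL
    have hAge : (d₁ / 4) * L ≤ (A : ℝ) := by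
      have : (cnt J₁ L : ℝ) = (cnt J₁ h : ℝ) + A := by
        rw [hsplit, ← hA]; push_cast; ring
      nlinarith
    have hsum : A * cnt J₂ (h+1) ≤ ∑ b ∈ cfin J₁ L, cnt J₂ (b + 1) := by
      calc A * cnt J₂ (h+1)
          = ∑ _b ∈ (cfin J₁ L).filter (fun b => h ≤ b), cnt J₂ (h+1) := by
            rw [Finset.sum_const, smul_eq_mul]
        _ ≤ ∑ b ∈ (cfin J₁ L).filter (fun b => h ≤ b), cnt J₂ (b + 1) := by
            apply Finset.sum_le_sum
            intro b hb
            have := (Finset.mem_filter.mp hb).2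
            exact cnt_mono J₂ (by omega)
        _ ≤ ∑ b ∈ cfin J₁ L, cnt J₂ (b + 1) := by
            apply Finset.sum_le_sum_of_subset
            exact Finset.filter_subset _ _
    rw [← double_count J₁ J₂ L] at hsum
    -- pigeonhole
    obtain ⟨m, hmmem, hm⟩ : ∃ m ∈ Finset.range L,
        A * cnt J₂ (h+1) ≤ L * (bfin J₁ J₂ m L).card := by
      by_contra hcon
      push_neg at hcon
      have hlt : ∑ m ∈ Finset.range L, L * (bfin J₁ J₂ m L).card
          < ∑ _m ∈ Finset.range L, A * cnt J₂ (h+1) :=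
        Finset.sum_lt_sum_of_nonempty ⟨0, Finset.mem_range.mpr (by omega)⟩
          (fun m hm => hcon m hm)
      rw [← Finset.mul_sum, Finset.sum_const, Finset.card_range, smul_eq_mul] at hlt
      have := Nat.mul_le_mul_left L hsum
      omega
    set F : Finset ℕ := bfin J₁ J₂ m L with hF
    have hFsub : F ⊆ Finset.range L := Finset.filter_subset _ _
    have hFP : P F := by
      apply h_mem m
      · intro b hb; exact (mem_bfin.mp hb).2.1
      · intro b hb; exact ⟨(mem_bfin.mp hb).2.2.1, (mem_bfin.mp hb).2.2.2⟩
    have hφge := hφ_ge hFsub hFP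
    have hcard : (d₁ * d₂ / 16) * L ≤ (F.card : ℝ) := by
      have hcast : (A : ℝ) * (cnt J₂ (h+1) : ℝ) ≤ (L : ℝ) * (F.card : ℝ) := by
        exact_mod_cast hm
      have hAnn : (0:ℝ) ≤ (A:ℝ) := Nat.cast_nonneg A
      have hprod : (d₁ / 4 * L) * (d₂ / 4 * L) ≤ (A : ℝ) * (cnt J₂ (h+1) : ℝ) :=
        mul_le_mul hAge b3' (by positivity) hAnn
      have h16 : (L:ℝ) * ((d₁ * d₂ / 16) * L) ≤ (L:ℝ) * (F.card : ℝ) := by nlinarith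
      exact le_of_mul_le_mul_left h16 hLpos
    have : (F.card : ℝ) ≤ (φ L : ℝ) := by exact_mod_cast hφge
    linarith
  -- the limsup θ
  set u : ℕ → ℝ := fun L => (φ L : ℝ) / L with hu
  have hu0 : ∀ L, 0 ≤ u L := fun L => by positivity
  have hu1 : ∀ L, u L ≤ 1 := by
    intro L
    rcases Nat.eq_zero_or_pos L with hL | hL
    · simp [hu, hL]
    · rw [hu]
      have : (0:ℝ) < L := by exact_mod_cast hL
      rw [div_le_one this]
      exact_mod_cast hφ_le L
  have hbdd : IsBoundedUnder (· ≤ ·) atTop u := isBoundedUnder_of ⟨1, fun L => hu1 L⟩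
  have hcob : IsCoboundedUnder (· ≤ ·) atTop u :=
    isCoboundedUnder_le_of_le atTop (fun L => hu0 L)
  set θ : ℝ := limsup u atTop with hθ
  have hθpos : 0 < θ := by
    have hfreq : ∃ᶠ L in atTop, d₁ * d₂ / 16 ≤ u L := by
      apply Eventually.frequently
      filter_upwards [step1, eventually_ge_atTop 1] with L hL hL1
      have hLpos : (0:ℝ) < L := by exact_mod_cast hL1
      rw [hu, le_div_iff₀ hLpos]
      linarith
    have := le_limsup_of_frequently_le hfreq hbdd
    have hpp : (0:ℝ) < d₁ * d₂ / 16 := by positivity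
    linarith
  have hθ1 : θ ≤ 1 := limsup_le_of_le hcob (Eventually.of_forall hu1)
  have L1 : ∀ ε : ℝ, 0 < ε → ∀ᶠ L in atTop, (φ L : ℝ) ≤ (θ + ε) * L := by
    intro ε hε
    have h' : ∀ᶠ L in atTop, u L < θ + ε :=
      eventually_lt_of_limsup_lt (by linarith) hbdd
    filter_upwards [h', eventually_ge_atTop 1] with L hL hL1
    have hLpos : (0:ℝ) < L := by exact_mod_cast hL1
    rw [hu] at hL
    have := (div_lt_iff₀ hLpos).mp hL
    linarith
  have L2 : ∀ ε : ℝ, 0 < ε → ∀ N : ℕ, ∃ L : ℕ, N ≤ L ∧ (θ - ε) * L ≤ (φ L : ℝ) := by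
    intro ε hε N
    have h' : ∃ᶠ L in atTop, θ - ε < u L := frequently_lt_of_lt_limsup hcob (by linarith)
    obtain ⟨L, hL1, hL2⟩ := (h'.and_eventually (eventually_ge_atTop (max N 1))).exists
    refine ⟨L, le_trans (le_max_left N 1) hL2, ?_⟩
    have hLpos : (0:ℝ) < L := by
      have : 1 ≤ L := le_trans (le_max_right N 1) hL2
      exact_mod_cast this
    rw [hu] at hL1
    have := (lt_div_iff₀ hLpos).mp hL1
    linarith
  -- the good blocks G j
  have hG : ∀ j : ℕ, ∃ G : Finset ℕ, P G ∧
      ∀ k : ℕ, k ≤ j → (θ - 2 / ((j:ℝ) + 1)) * k ≤ (((G.filter (· < k)).card : ℝ)) := by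
    intro j
    set δ : ℝ := 1 / ((j:ℝ) + 1) with hδ
    have hδpos : 0 < δ := by positivity
    have hbnd : θ - 2 / ((j:ℝ) + 1) = θ - 2 * δ := by rw [hδ]; ring
    by_cases hcase : θ - 2 * δ ≤ 0
    · refine ⟨∅, hP0, fun k _ => ?_⟩
      rw [hbnd]
      have : (θ - 2*δ) * k ≤ 0 := mul_nonpos_of_nonpos_of_nonneg hcase (Nat.cast_nonneg k)
      simpa using this
    · push_neg at hcase
      obtain ⟨L, hLN, hLφ⟩ := L2 δ hδpos ((j+1) * (j+1))
      obtain ⟨F, hFsub, hFP, hFcard⟩ := hφ_wit L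
      have hE : (θ - 2*δ) * L + δ * L ≤ (F.card : ℝ) := by
        rw [hFcard]
        have : (θ - 2*δ) * L + δ * L = (θ - δ) * L := by ring
        rw [this]
        exact hLφ
      obtain ⟨G, p, ℓ, hGsub, hlen, hpre⟩ := lemA F L hFsub (θ - 2*δ) (δ * L)
        (le_of_lt hcase) (by linarith) hE
      have hPG : P G := h_down p G (h_her hGsub hFP)
      refine ⟨G, hPG, fun k hk => ?_⟩
      rw [hbnd]
      apply hpre
      -- k ≤ ℓ
      have hLreal : ((j:ℝ) + 1) * ((j:ℝ) + 1) ≤ (L:ℝ) := by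
        have : (((j+1) * (j+1) : ℕ) : ℝ) ≤ (L:ℝ) := by exact_mod_cast hLN
        push_cast at this
        linarith
      have hδL : (j:ℝ) + 1 ≤ δ * L := by
        rw [hδ, div_mul_eq_mul_div, le_div_iff₀ (by positivity : (0:ℝ) < (j:ℝ)+1)]
        nlinarith
      have : (k:ℝ) ≤ (ℓ:ℝ) := by
        have hkj : (k:ℝ) ≤ (j:ℝ) := by exact_mod_cast hk
        linarith
      exact_mod_cast this
  choose G hGP hGpre using hG
  -- the ultrafilter limit
  set 𝒰 : Ultrafilter ℕ := Ultrafilter.of atTop with h𝒰def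
  have h𝒰 : (𝒰 : Filter ℕ) ≤ atTop := Ultrafilter.of_le atTop
  set J : Set ℕ := {t | {j | t ∈ G j} ∈ 𝒰} with hJ
  have agree : ∀ k : ℕ, {j | ∀ t, t < k → (t ∈ G j ↔ t ∈ J)} ∈ 𝒰 := by
    intro k
    induction k with
    | zero =>
      have : {j : ℕ | ∀ t, t < 0 → (t ∈ G j ↔ t ∈ J)} = Set.univ := by
        ext j; simp
      rw [this]
      exact Filter.univ_mem
    | succ k ih =>
      have hk : {j | (k ∈ G j ↔ k ∈ J)} ∈ 𝒰 := by
        by_cases hkJ : k ∈ J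
        · have hmem : {j | k ∈ G j} ∈ 𝒰 := hkJ
          apply Filter.mem_of_superset hmem
          intro j hj
          simp only [Set.mem_setOf_eq] at *
          exact ⟨fun _ => hkJ, fun _ => hj⟩
        · have hmem : {j | k ∈ G j}ᶜ ∈ 𝒰 := (Ultrafilter.compl_mem_iff_notMem).mpr hkJ
          apply Filter.mem_of_superset hmem
          intro j hj
          simp only [Set.mem_compl_iff, Set.mem_setOf_eq] at *
          exact ⟨fun h => absurd h hj, fun h => absurd h hkJ⟩
      apply Filter.mem_of_superset (Filter.inter_mem ih hk)
      rintro j ⟨hj1, hj2⟩ t ht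
      rcases Nat.lt_succ_iff_lt_or_eq.mp ht with h | rfl
      · exact hj1 t h
      · exact hj2
  have hfin : ∀ F : Finset ℕ, ↑F ⊆ J → P F := by
    intro F hF
    set k : ℕ := (F.sup id) + 1 with hk
    obtain ⟨j, hj⟩ := Filter.nonempty_of_mem (agree k)
    have hsub : F ⊆ G j := by
      intro t ht
      have htk : t < k := by
        rw [hk]
        have := Finset.le_sup (f := id) ht
        simp only [id_eq] at this
        omega
      exact (hj t htk).mpr (hF ht)
    exact h_her hsub (hGP j)
  -- lower bound for prefixes
  have hlow : ∀ k : ℕ, θ * k ≤ (cnt J k : ℝ) := by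
    intro k
    have harb : ∀ j₀ : ℕ, ∃ j : ℕ, j₀ ≤ j ∧
        (θ - 2 / ((j:ℝ) + 1)) * k ≤ (cnt J k : ℝ) := by
      intro j₀
      have hset : {j | ∀ t, t < k → (t ∈ G j ↔ t ∈ J)} ∩ {j | max j₀ k ≤ j} ∈ 𝒰 :=
        Filter.inter_mem (agree k) (h𝒰 (mem_atTop (max j₀ k)))
      obtain ⟨j, hj1, hj2⟩ := Filter.nonempty_of_mem hset
      have hkj : k ≤ j := le_trans (le_max_right j₀ k) hj2
      have heq : cfin J k = (G j).filter (· < k) := by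
        ext t
        rw [mem_cfin, Finset.mem_filter]
        constructor
        · rintro ⟨h1, h2⟩; exact ⟨(hj1 t h1).mpr h2, h1⟩
        · rintro ⟨h1, h2⟩; exact ⟨h2, (hj1 t h2).mp h1⟩
      have := hGpre j k hkj
      refine ⟨j, le_trans (le_max_left j₀ k) hj2, ?_⟩
      rw [cnt, heq]
      exact this
    by_contra hnot
    push_neg at hnot
    set ε : ℝ := θ * k - cnt J k with hε
    have hεpos : 0 < ε := by rw [hε]; linarith
    obtain ⟨j₀, hj₀⟩ := exists_nat_gt ((2 * k) / ε)
    obtain ⟨j, hjge, hjle⟩ := harb j₀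
    have hj1 : (j₀:ℝ) ≤ (j:ℝ) := by exact_mod_cast hjge
    have h2k : (0:ℝ) ≤ 2 * k := by positivity
    have hfrac : 2 / ((j:ℝ) + 1) * k < ε := by
      rw [div_mul_eq_mul_div, div_lt_iff₀ (by positivity : (0:ℝ) < (j:ℝ) + 1)]
      have : (2 * k) / ε < (j:ℝ) + 1 := by linarith
      calc 2 * (k:ℝ) = ((2 * k) / ε) * ε := by field_simp
        _ < ((j:ℝ) + 1) * ε := by
            apply mul_lt_mul_of_pos_right _ hεpos
            linarith
        _ = ε * ((j:ℝ) + 1) := by ring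
    have : (θ - 2 / ((j:ℝ) + 1)) * k = θ * k - 2 / ((j:ℝ) + 1) * k := by ring
    rw [this] at hjle
    linarith
  -- upper bound for prefixes
  have hup : ∀ ε : ℝ, 0 < ε → ∀ᶠ k : ℕ in atTop, (cnt J k : ℝ) ≤ (θ + ε) * k := by
    intro ε hε
    filter_upwards [L1 ε hε] with k hk
    have hPk : P (cfin J k) := by
      apply hfin
      intro t ht
      rw [Finset.mem_coe, mem_cfin] at ht
      exact ht.2
    have hsub : cfin J k ⊆ Finset.range k := by
      intro t ht
      rw [mem_cfin] at ht
      exact Finset.mem_range.mpr ht.1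
    have := hφ_ge hsub hPk
    have : (cnt J k : ℝ) ≤ (φ k : ℝ) := by exact_mod_cast this
    linarith
  refine ⟨J, hfin, θ, hθpos, ?_⟩
  rw [tendsto_order]
  constructor
  · intro a ha
    filter_upwards [eventually_ge_atTop 1] with L hL
    have hLpos : (0:ℝ) < L := by exact_mod_cast hL
    calc a < θ := ha
      _ ≤ (cnt J L : ℝ) / L := by rw [le_div_iff₀ hLpos]; linarith [hlow L]
  · intro a ha
    have hεpos : 0 < (a - θ) / 2 := by linarith
    filter_upwards [hup _ hεpos, eventually_ge_atTop 1] with L hL hL1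
    have hLpos : (0:ℝ) < L := by exact_mod_cast hL1
    rw [div_lt_iff₀ hLpos]
    calc (cnt J L : ℝ) ≤ (θ + (a - θ)/2) * L := hL
      _ < a * L := by
        apply mul_lt_mul_of_pos_right _ hLpos
        linarith

lemma tendsto_cnt_of_density {J : Set ℕ} {d : ℝ}
    (h : Tendsto (fun n : ℕ => (Nat.card (J ∩ Set.Iic n : Set ℕ) : ℝ) / (n + 1))
      atTop (nhds d)) :
    Tendsto (fun L : ℕ => (cnt J L : ℝ) / L) atTop (nhds d) := by
  have h' : Tendsto (fun n : ℕ => (cnt J (n + 1) : ℝ) / ((n + 1 : ℕ) : ℝ)) atTop (nhds d) := by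
    apply h.congr
    intro n
    rw [natCard_eq_cnt]
    push_cast
    ring
  exact (tendsto_add_atTop_iff_nat 1).mp h'

lemma density_of_tendsto_cnt {J : Set ℕ} {θ : ℝ}
    (h : Tendsto (fun L : ℕ => (cnt J L : ℝ) / L) atTop (nhds θ)) :
    Tendsto (fun n : ℕ => (Nat.card (J ∩ Set.Iic n : Set ℕ) : ℝ) / (n + 1))
      atTop (nhds θ) := by
  have h' : Tendsto (fun n : ℕ => (cnt J (n + 1) : ℝ) / ((n + 1 : ℕ) : ℝ)) atTop (nhds θ) :=
    (tendsto_add_atTop_iff_nat 1).mpr h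
  apply h'.congr
  intro n
  rw [natCard_eq_cnt]
  push_cast
  ring

lemma density_nonneg {J : Set ℕ} {d : ℝ}
    (h : Tendsto (fun n : ℕ => (Nat.card (J ∩ Set.Iic n : Set ℕ) : ℝ) / (n + 1))
      atTop (nhds d)) : 0 ≤ d := by
  apply ge_of_tendsto h
  apply Eventually.of_forall
  intro n
  positivity


end IEAux

open IEAux

/-- Theorem `T-product E`: IE-tuples of a product system are exactly the
pairs of IE-tuples of the factors (identifying `(X × Y)^k` with `X^k × Y^k`). -/
theorem stmt9 {X Y : Type*} [TopologicalSpace X] [CompactSpace X] [T2Space X]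
    [TopologicalSpace Y] [CompactSpace Y] [T2Space Y]
    (T : X → X) (hT : Continuous T) (hTs : Function.Surjective T)
    (S : Y → Y) (hS : Continuous S) (hSs : Function.Surjective S)
    {k : ℕ} (hk : 1 ≤ k) (x : Fin k → X) (y : Fin k → Y) :
    IsIETuple (Prod.map T S) (fun i => (x i, y i)) ↔ IsIETuple T x ∧ IsIETuple S y := by
  constructor
  · intro hprod
    constructor
    · intro U hUo hUm
      obtain ⟨J, hJind, hJd⟩ := hprod (fun i => U i ×ˢ (Set.univ : Set Y))
        (fun i => (hUo i).prod isOpen_univ) (fun i => ⟨hUm i, Set.mem_univ _⟩)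
      exact ⟨J, isIndepSet_fst hJind, hJd⟩
    · intro U hUo hUm
      obtain ⟨J, hJind, hJd⟩ := hprod (fun i => (Set.univ : Set X) ×ˢ U i)
        (fun i => isOpen_univ.prod (hUo i)) (fun i => ⟨Set.mem_univ _, hUm i⟩)
      exact ⟨J, isIndepSet_snd hJind, hJd⟩
  · rintro ⟨hx, hy⟩ U hUo hUm
    choose V W hVo hWo hxV hyW hVW using fun i =>
      isOpen_prod_iff.mp (hUo i) (x i) (y i) (hUm i)
    obtain ⟨J₁, hJ₁, hJ₁d⟩ := hx V hVo hxV
    obtain ⟨J₂, hJ₂, hJ₂d⟩ := hy W hWo hyW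
    obtain ⟨d₁, hd₁ne, hd₁⟩ := hJ₁d
    obtain ⟨d₂, hd₂ne, hd₂⟩ := hJ₂d
    have h1 : 0 < d₁ := lt_of_le_of_ne (density_nonneg hd₁) (Ne.symm hd₁ne)
    have h2 : 0 < d₂ := lt_of_le_of_ne (density_nonneg hd₂) (Ne.symm hd₂ne)
    set P : Finset ℕ → Prop := fun F => IsIndepSet T V ↑F ∧ IsIndepSet S W ↑F with hP
    have h_her : ∀ ⦃F G : Finset ℕ⦄, F ⊆ G → P G → P F := by
      intro F G hFG hPG
      have hsub : (↑F : Set ℕ) ⊆ ↑G := Finset.coe_subset.mpr hFG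
      exact ⟨isIndepSet_anti hsub hPG.1, isIndepSet_anti hsub hPG.2⟩
    have h_down : ∀ (p : ℕ) (F : Finset ℕ), P (F.image (· + p)) → P F := by
      intro p F hPF
      exact ⟨isIndepSet_down T V p F hPF.1, isIndepSet_down S W p F hPF.2⟩
    have h_mem : ∀ (m : ℕ) (F : Finset ℕ), (∀ b ∈ F, b ∈ J₁) →
        (∀ b ∈ F, m ≤ b ∧ b - m ∈ J₂) → P F := by
      intro m F hF1 hF2
      constructor
      · exact isIndepSet_anti (fun t ht => hF1 t (Finset.mem_coe.mp ht)) hJ₁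
      · exact isIndepSet_up S hSs W m J₂ hJ₂ F hF2
    obtain ⟨J, hJP, θ, hθpos, hθtd⟩ := key J₁ J₂ d₁ d₂ P h_her h_down h_mem
      (tendsto_cnt_of_density hd₁) h1 (tendsto_cnt_of_density hd₂) h2
    refine ⟨J, ?_, θ, ne_of_gt hθpos, density_of_tendsto_cnt hθtd⟩
    intro I hne hsub σ
    have hPI := hJP I hsub
    have hprod : IsIndepSet (Prod.map T S) (fun i => V i ×ˢ W i) ↑I :=
      isIndepSet_prod (isIndepSet_anti (subset_refl _) hPI.1)
        (isIndepSet_anti (subset_refl _) hPI.2)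
    have hU : IsIndepSet (Prod.map T S) U ↑I :=
      isIndepSet_mono (fun i => hVW i) hprod
    exact hU I hne (subset_refl _) σ
end
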